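/- arXiv:1912.09454 — 10 statements merged into one kernel-verified Lean document; each statement's English description precedes it below -/
import Mathlib

section
/- For every α ∈ ℝ, the superlevel sets of a function and its rearrangement have the same Lebesgue measure: μ({x ∈ [0,a] : f(x) > α}) = μ({x ∈ [0,a] : f*(x) > α}). -/
open MeasureTheory Set
open scoped ENNReal

/-- The asymmetric decreasing rearrangement of `f : [0,a] → ℝ`:
`f*(x) = ∫₀^∞ 𝟙_{[0, μ({y ∈ [0,a] : f(y) > t})]}(x) dt`. -/
noncomputable def rearr (a : ℝ) (f : ℝ → ℝ) (x : ℝ) : ℝ :=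
  ∫ t in Set.Ioi (0:ℝ),
    Set.indicator (Set.Icc (0:ℝ) ((volume {y ∈ Set.Icc (0:ℝ) a | t < f y}).toReal))
      (fun _ => (1:ℝ)) x

/-- `g` is strictly decreasing to the right at `x₀`. -/
def StrictDecRightAt (g : ℝ → ℝ) (x₀ : ℝ) : Prop :=
  ∃ ε₀ > (0:ℝ), ∀ ε : ℝ, 0 < ε → ε < ε₀ → g (x₀ + ε) < g x₀

/-- `g` is strictly decreasing from the left at `x₀`. -/
def StrictDecLeftAt (g : ℝ → ℝ) (x₀ : ℝ) : Prop :=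
  ∃ ε₀ > (0:ℝ), ∀ ε : ℝ, 0 < ε → ε < ε₀ → g x₀ < g (x₀ - ε)

theorem stmt1 (a : ℝ) (ha : 0 < a) (f : ℝ → ℝ) (hmf : Measurable f)
    (hnn : ∀ x ∈ Set.Icc (0:ℝ) a, 0 ≤ f x)
    (hbd : ∃ M : ℝ, ∀ x ∈ Set.Icc (0:ℝ) a, f x ≤ M) (α : ℝ) :
    volume {x ∈ Set.Icc (0:ℝ) a | α < f x}
      = volume {x ∈ Set.Icc (0:ℝ) a | α < rearr a f x} := by
  obtain ⟨M, hM⟩ := hbd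
  set ν : ℝ → ℝ≥0∞ := fun t => volume {y ∈ Set.Icc (0:ℝ) a | t < f y} with hνdef
  have hνle : ∀ t, ν t ≤ ENNReal.ofReal a := by
    intro t
    calc ν t ≤ volume (Set.Icc (0:ℝ) a) := measure_mono (fun y hy => hy.1)
      _ = ENNReal.ofReal a := by simp [Real.volume_Icc]
  have hνfin : ∀ t, ν t ≠ ⊤ := fun t => ((hνle t).trans_lt ENNReal.ofReal_lt_top).ne
  have hνanti : Antitone ν := fun s t hst =>
    measure_mono (fun y hy => ⟨hy.1, lt_of_le_of_lt hst hy.2⟩)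
  set m : ℝ → ℝ := fun t => (ν t).toReal with hmdef
  have hmanti : Antitone m := fun s t hst =>
    (ENNReal.toReal_le_toReal (hνfin t) (hνfin s)).mpr (hνanti hst)
  have hm0 : ∀ t, 0 ≤ m t := fun t => ENNReal.toReal_nonneg
  have hma : ∀ t, m t ≤ a := fun t => ENNReal.toReal_le_of_le_ofReal ha.le (hνle t)
  have hofm : ∀ t, ENNReal.ofReal (m t) = ν t := fun t => ENNReal.ofReal_toReal (hνfin t)
  set M0 : ℝ := max M 0 with hM0def
  have hνzero : ∀ t, M0 < t → m t = 0 := by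
    intro t ht
    have : {y ∈ Set.Icc (0:ℝ) a | t < f y} = ∅ := by
      rw [Set.eq_empty_iff_forall_notMem]
      rintro y ⟨hy, hyt⟩
      exact absurd hyt (not_lt.mpr ((hM y hy).trans (le_of_lt (lt_of_le_of_lt (le_max_left M 0) ht))))
    simp only [hmdef, hνdef, this, measure_empty, ENNReal.toReal_zero]
  -- formula for rearr at positive points
  have hrearr : ∀ x : ℝ, 0 < x →
      rearr a f x = (volume (Set.Ioi (0:ℝ) ∩ {t : ℝ | x ≤ m t})).toReal := by
    intro x hx
    have hAm : MeasurableSet {t : ℝ | x ≤ m t} := hmanti.measurable measurableSet_Ici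
    have hi : ∀ t : ℝ, (Set.Icc (0:ℝ) (m t)).indicator (fun _ => (1:ℝ)) x
        = ({t : ℝ | x ≤ m t}).indicator (fun _ => (1:ℝ)) t := by
      intro t
      by_cases h : x ≤ m t
      · simp [Set.indicator_apply, Set.mem_Icc, Set.mem_setOf_eq, hx.le, h]
      · simp [Set.indicator_apply, Set.mem_Icc, Set.mem_setOf_eq, h]
    rw [rearr]
    simp_rw [show ∀ t : ℝ, (Set.Icc (0:ℝ) ((volume {y ∈ Set.Icc (0:ℝ) a | t < f y}).toReal)).indicator (fun _ => (1:ℝ)) x = ({t : ℝ | x ≤ m t}).indicator (fun _ => (1:ℝ)) t from hi]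
    rw [MeasureTheory.setIntegral_indicator hAm, MeasureTheory.setIntegral_const,
      smul_eq_mul, mul_one, Measure.real]
  -- rearr is nonnegative
  have hrnn : ∀ x : ℝ, 0 ≤ rearr a f x := by
    intro x
    apply MeasureTheory.setIntegral_nonneg measurableSet_Ioi
    intro t _
    exact Set.indicator_nonneg (fun _ _ => zero_le_one) x
  rcases lt_or_ge α 0 with hα | hα
  · -- both sets are Icc 0 a
    have h1 : {x ∈ Set.Icc (0:ℝ) a | α < f x} = Set.Icc (0:ℝ) a := by
      ext x; constructor
      · exact fun h => h.1
      · exact fun h => ⟨h, lt_of_lt_of_le hα (hnn x h)⟩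
    have h2 : {x ∈ Set.Icc (0:ℝ) a | α < rearr a f x} = Set.Icc (0:ℝ) a := by
      ext x; constructor
      · exact fun h => h.1
      · exact fun h => ⟨h, lt_of_lt_of_le hα (hrnn x)⟩
    rw [h1, h2]
  · -- main case α ≥ 0
    set E := {x ∈ Set.Icc (0:ℝ) a | α < rearr a f x} with hEdef
    have hupper : E ⊆ Set.Icc 0 (m α) := by
      rintro x ⟨⟨hx0, hxa⟩, hxα⟩
      refine ⟨hx0, ?_⟩
      by_contra h
      push_neg at h
      have hx : 0 < x := lt_of_le_of_lt (hm0 α) h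
      have hsub : Set.Ioi (0:ℝ) ∩ {t : ℝ | x ≤ m t} ⊆ Set.Ioc 0 α := by
        rintro t ⟨ht0, htx⟩
        have htx' : x ≤ m t := htx
        refine ⟨ht0, ?_⟩
        by_contra hc
        push_neg at hc
        exact absurd htx' (not_le.mpr ((hmanti hc.le).trans_lt h))
      have := measure_mono (μ := volume) hsub
      rw [Real.volume_Ioc, sub_zero] at this
      have h2 : (volume (Set.Ioi (0:ℝ) ∩ {t : ℝ | x ≤ m t})).toReal ≤ α :=
        ENNReal.toReal_le_of_le_ofReal hα this
      rw [hrearr x hx] at hxα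
      exact absurd hxα (not_lt.mpr h2)
    have hlower : ∀ n : ℕ, Set.Ioc (0:ℝ) (m (α + 1/(n+1))) ⊆ E := by
      intro n x hx
      obtain ⟨hx0, hxle⟩ := hx
      have htn : (0:ℝ) < α + 1/(n+1) := by positivity
      refine ⟨⟨hx0.le, hxle.trans (hma _)⟩, ?_⟩
      rw [hrearr x hx0]
      have hsub : Set.Ioc (0:ℝ) (α + 1/(n+1)) ⊆ Set.Ioi (0:ℝ) ∩ {t : ℝ | x ≤ m t} := by
        rintro s ⟨hs0, hs⟩
        exact ⟨hs0, hxle.trans (hmanti hs)⟩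
      have hfin : volume (Set.Ioi (0:ℝ) ∩ {t : ℝ | x ≤ m t}) ≠ ⊤ := by
        have hsub2 : Set.Ioi (0:ℝ) ∩ {t : ℝ | x ≤ m t} ⊆ Set.Ioc 0 M0 := by
          rintro t ⟨ht0, htx⟩
          have htx' : x ≤ m t := htx
          refine ⟨ht0, ?_⟩
          by_contra hc
          push_neg at hc
          rw [hνzero t hc] at htx'
          exact absurd hx0 (not_lt.mpr htx')
        refine ((measure_mono hsub2).trans_lt ?_).ne
        rw [Real.volume_Ioc]
        exact ENNReal.ofReal_lt_top
      have := measure_mono (μ := volume) hsub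
      rw [Real.volume_Ioc, sub_zero] at this
      have h2 : α + 1/(n+1) ≤ (volume (Set.Ioi (0:ℝ) ∩ {t : ℝ | x ≤ m t})).toReal :=
        (ENNReal.ofReal_le_iff_le_toReal hfin).mp this
      nlinarith [Nat.one_div_pos_of_nat (α := ℝ) (n := n)]
    -- right continuity of ν at α
    have hA : Monotone (fun n : ℕ => {y ∈ Set.Icc (0:ℝ) a | α + 1/(n+1) < f y}) := by
      intro n k hnk y hy
      refine ⟨hy.1, lt_of_le_of_lt ?_ hy.2⟩
      have : (1:ℝ)/(k+1) ≤ 1/(n+1) := by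
        apply one_div_le_one_div_of_le
        · positivity
        · have := (Nat.cast_le (α := ℝ)).mpr hnk
          linarith
      linarith
    have hUnion : (⋃ n : ℕ, {y ∈ Set.Icc (0:ℝ) a | α + 1/(n+1) < f y})
        = {y ∈ Set.Icc (0:ℝ) a | α < f y} := by
      ext y
      simp only [Set.mem_iUnion, Set.mem_setOf_eq]
      constructor
      · rintro ⟨n, hy, hlt⟩
        refine ⟨hy, lt_of_le_of_lt ?_ hlt⟩
        have : (0:ℝ) < 1/(n+1) := by positivity
        linarith
      · rintro ⟨hy, hlt⟩
        obtain ⟨n, hn⟩ := exists_nat_one_div_lt (sub_pos.mpr hlt)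
        exact ⟨n, hy, by linarith⟩
    have hrc : (⨆ n : ℕ, ν (α + 1/(n+1))) = ν α := by
      simp only [hνdef]
      rw [← hUnion]
      exact (hA.directed_le.measure_iUnion).symm
    -- squeeze
    have hub : volume E ≤ ν α := by
      calc volume E ≤ volume (Set.Icc 0 (m α)) := measure_mono hupper
        _ = ENNReal.ofReal (m α) := by rw [Real.volume_Icc, sub_zero]
        _ = ν α := hofm α
    have hlb : ν α ≤ volume E := by
      rw [← hrc]
      apply iSup_le
      intro n
      calc ν (α + 1/(n+1)) = ENNReal.ofReal (m (α + 1/(n+1))) := (hofm _).symm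
        _ = volume (Set.Ioc (0:ℝ) (m (α + 1/(n+1)))) := by rw [Real.volume_Ioc, sub_zero]
        _ ≤ volume E := measure_mono (hlower n)
    exact le_antisymm hlb hub
end

section
/- For every α ∈ ℝ, the exact level sets of a function and its rearrangement have the same Lebesgue measure: μ({x ∈ [0,a] : f(x) = α}) = μ({x ∈ [0,a] : f*(x) = α}). -/
open MeasureTheory Set
open scoped ENNReal

namespace RearrAux

/-- The distribution function (as an extended real). -/
noncomputable def m (a : ℝ) (f : ℝ → ℝ) (t : ℝ) : ℝ≥0∞ :=
  volume {y ∈ Set.Icc (0:ℝ) a | t < f y}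

/-- The distribution function (as a real). -/
noncomputable def g (a : ℝ) (f : ℝ → ℝ) (t : ℝ) : ℝ := (m a f t).toReal

variable {a : ℝ} {f : ℝ → ℝ}

lemma m_le (t : ℝ) : m a f t ≤ ENNReal.ofReal a := by
  have h : m a f t ≤ volume (Set.Icc (0:ℝ) a) := measure_mono fun y hy => hy.1
  rwa [Real.volume_Icc, sub_zero] at h

lemma m_ne_top (t : ℝ) : m a f t ≠ ⊤ :=
  ne_top_of_le_ne_top ENNReal.ofReal_ne_top (m_le t)

lemma m_anti : Antitone (m a f) := fun s t hst =>
  measure_mono fun y hy => ⟨hy.1, lt_of_le_of_lt hst hy.2⟩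

lemma g_nonneg (t : ℝ) : 0 ≤ g a f t := by unfold g; exact ENNReal.toReal_nonneg

lemma g_anti : Antitone (g a f) := by
  intro s t hst
  unfold g
  exact ENNReal.toReal_mono (m_ne_top s) (m_anti hst)

lemma g_le (ha : 0 ≤ a) (t : ℝ) : g a f t ≤ a := by
  have := ENNReal.toReal_mono ENNReal.ofReal_ne_top (m_le (a := a) (f := f) t)
  rw [ENNReal.toReal_ofReal ha] at this
  unfold g
  exact this

lemma g_measurable : Measurable (g a f) := (g_anti).measurable

/-- Right continuity consequence: if `x < g t` then `x ≤ g s` for some `s > t`. -/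
lemma exists_right (t x : ℝ) (hx : 0 < x) (hlt : x < g a f t) :
    ∃ s, t < s ∧ x ≤ g a f s := by
  by_contra hcon
  push_neg at hcon
  have hUnion : {y ∈ Set.Icc (0:ℝ) a | t < f y}
      = ⋃ n : ℕ, {y ∈ Set.Icc (0:ℝ) a | t + 1/((n:ℝ)+1) < f y} := by
    ext y
    simp only [mem_iUnion, mem_setOf_eq]
    constructor
    · rintro ⟨hyI, hyf⟩
      obtain ⟨n, hn⟩ := exists_nat_one_div_lt (sub_pos.2 hyf)
      exact ⟨n, hyI, by linarith⟩
    · rintro ⟨n, hyI, hyf⟩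
      have : (0:ℝ) < 1/((n:ℝ)+1) := by positivity
      exact ⟨hyI, by linarith⟩
  have hmono : Monotone fun n : ℕ => {y ∈ Set.Icc (0:ℝ) a | t + 1/((n:ℝ)+1) < f y} := by
    intro n k hnk y hy
    have h1 : (1:ℝ)/((k:ℝ)+1) ≤ 1/((n:ℝ)+1) := by
      gcongr <;> exact_mod_cast hnk
    exact ⟨hy.1, by have h2 := hy.2; linarith⟩
  have hsup : m a f t = ⨆ n : ℕ, m a f (t + 1/((n:ℝ)+1)) := by
    show volume {y ∈ Set.Icc (0:ℝ) a | t < f y}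
      = ⨆ n : ℕ, volume {y ∈ Set.Icc (0:ℝ) a | t + 1/((n:ℝ)+1) < f y}
    rw [hUnion]
    exact hmono.measure_iUnion
  have hle : ∀ n : ℕ, m a f (t + 1/((n:ℝ)+1)) ≤ ENNReal.ofReal x := by
    intro n
    have hpos : (0:ℝ) < 1/((n:ℝ)+1) := by positivity
    have := hcon (t + 1/((n:ℝ)+1)) (by linarith)
    exact le_of_lt ((ENNReal.lt_ofReal_iff_toReal_lt (m_ne_top _)).2 this)
  have : m a f t ≤ ENNReal.ofReal x := by
    rw [hsup]; exact iSup_le hle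
  have hgx : g a f t ≤ x := by
    have h2 := ENNReal.toReal_mono ENNReal.ofReal_ne_top this
    rw [ENNReal.toReal_ofReal hx.le] at h2
    unfold g
    exact h2
  linarith

/-- Formula for the rearrangement at points `x > 0`. -/
lemma rearr_eq {x : ℝ} (hx : 0 < x) :
    rearr a f x = (volume {t ∈ Set.Ioi (0:ℝ) | x ≤ g a f t}).toReal := by
  have hA : MeasurableSet {t : ℝ | x ≤ g a f t} :=
    g_measurable measurableSet_Ici
  have h1 : ∀ t : ℝ,
      (Set.Icc (0:ℝ) (g a f t)).indicator
          (fun _ => (1:ℝ)) x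
        = ({t : ℝ | x ≤ g a f t}).indicator (fun _ => (1:ℝ)) t := by
    intro t
    by_cases h : x ≤ g a f t
    · rw [Set.indicator_of_mem (show x ∈ Set.Icc (0:ℝ) (g a f t) from ⟨hx.le, h⟩),
        Set.indicator_of_mem (show t ∈ {t : ℝ | x ≤ g a f t} from h)]
    · rw [Set.indicator_of_notMem
        (show x ∉ Set.Icc (0:ℝ) (g a f t) from fun hc => h hc.2),
        Set.indicator_of_notMem (show t ∉ {t : ℝ | x ≤ g a f t} from h)]
  have h0 : rearr a f x = ∫ t in Set.Ioi (0:ℝ),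
      (Set.Icc (0:ℝ) (g a f t)).indicator (fun _ => (1:ℝ)) x := rfl
  have h2 : rearr a f x = ∫ t in Set.Ioi (0:ℝ),
      ({t : ℝ | x ≤ g a f t}).indicator (fun _ => (1:ℝ)) t := by
    rw [h0]
    exact integral_congr_ae (Filter.Eventually.of_forall fun t => h1 t)
  rw [h2, integral_indicator_const (1:ℝ) hA, Measure.real, Measure.restrict_apply hA, smul_eq_mul, mul_one]
  congr 2
  ext t
  simp only [mem_inter_iff, mem_setOf_eq, Set.mem_sep_iff]
  tauto

lemma S_subset {M x : ℝ} (hM : ∀ y ∈ Set.Icc (0:ℝ) a, f y ≤ M) (hx : 0 < x) :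
    {t ∈ Set.Ioi (0:ℝ) | x ≤ g a f t} ⊆ Set.Ioo 0 M := by
  rintro u ⟨hu1, hu2⟩
  refine ⟨hu1, ?_⟩
  have hm : m a f u ≠ 0 := by
    intro h0
    have hg0 : g a f u = 0 := by unfold g; rw [h0]; rfl
    rw [hg0] at hu2; linarith
  obtain ⟨y, hyI, hyf⟩ := nonempty_of_measure_ne_zero hm
  exact lt_of_lt_of_le hyf (hM y hyI)

lemma S_ne_top {M x : ℝ} (hM : ∀ y ∈ Set.Icc (0:ℝ) a, f y ≤ M) (hx : 0 < x) :
    volume {t ∈ Set.Ioi (0:ℝ) | x ≤ g a f t} ≠ ⊤ := by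
  refine ne_top_of_le_ne_top ?_ (measure_mono (S_subset hM hx))
  rw [Real.volume_Ioo]; exact ENNReal.ofReal_ne_top

lemma rearr_gt {M t x : ℝ} (hM : ∀ y ∈ Set.Icc (0:ℝ) a, f y ≤ M)
    (ht : 0 ≤ t) (hx : 0 < x) (hlt : x < g a f t) : t < rearr a f x := by
  obtain ⟨s, hts, hs⟩ := exists_right t x hx hlt
  rw [rearr_eq hx]
  have hsub : Set.Ioc 0 s ⊆ {u ∈ Set.Ioi (0:ℝ) | x ≤ g a f u} := by
    rintro u ⟨hu1, hu2⟩
    exact ⟨hu1, hs.trans (g_anti hu2)⟩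
  have h1 : ENNReal.ofReal s ≤ volume {u ∈ Set.Ioi (0:ℝ) | x ≤ g a f u} := by
    have := measure_mono (μ := volume) hsub
    rwa [Real.volume_Ioc, sub_zero] at this
  have h2 := ENNReal.toReal_mono (S_ne_top hM hx) h1
  rw [ENNReal.toReal_ofReal (le_trans ht hts.le)] at h2
  linarith

lemma rearr_le {t x : ℝ} (ht : 0 ≤ t) (hx : 0 < x) (hgt : g a f t < x) :
    rearr a f x ≤ t := by
  rw [rearr_eq hx]
  have hsub : {u ∈ Set.Ioi (0:ℝ) | x ≤ g a f u} ⊆ Set.Ioc 0 t := by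
    rintro u ⟨hu1, hu2⟩
    refine ⟨hu1, ?_⟩
    by_contra hc
    push_neg at hc
    exact absurd (hu2.trans (g_anti hc.le)) (not_le.2 hgt)
  have h1 := ENNReal.toReal_mono (by rw [Real.volume_Ioc]; exact ENNReal.ofReal_ne_top)
    (measure_mono (μ := volume) hsub)
  rwa [Real.volume_Ioc, sub_zero, ENNReal.toReal_ofReal ht] at h1

lemma rearr_nonneg (x : ℝ) : 0 ≤ rearr a f x :=
  integral_nonneg fun t => Set.indicator_nonneg (fun _ _ => zero_le_one) _

/-- Equimeasurability of the superlevel sets, plus null-measurability. -/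
lemma levelE {M : ℝ} (ha : 0 < a) (hM : ∀ y ∈ Set.Icc (0:ℝ) a, f y ≤ M)
    {t : ℝ} (ht : 0 ≤ t) :
    volume {x ∈ Set.Icc (0:ℝ) a | t < rearr a f x} = m a f t ∧
      NullMeasurableSet {x ∈ Set.Icc (0:ℝ) a | t < rearr a f x} volume := by
  set S := {x ∈ Set.Icc (0:ℝ) a | t < rearr a f x} with hS
  have hsub1 : Set.Ioo 0 (g a f t) ⊆ S := by
    rintro x ⟨hx1, hx2⟩
    exact ⟨⟨hx1.le, hx2.le.trans (g_le ha.le t)⟩, rearr_gt hM ht hx1 hx2⟩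
  have hsub2 : S ⊆ Set.Icc 0 (g a f t) := by
    rintro x ⟨hxI, hxr⟩
    refine ⟨hxI.1, ?_⟩
    rcases eq_or_lt_of_le hxI.1 with h | h
    · rw [← h]; exact g_nonneg t
    · by_contra hc
      push_neg at hc
      exact absurd hxr (not_lt.2 (rearr_le ht h hc))
  have hnull : volume (Set.Icc (0:ℝ) (g a f t) \ Set.Ioo 0 (g a f t)) = 0 := by
    have hsub : Set.Icc (0:ℝ) (g a f t) \ Set.Ioo 0 (g a f t)
        ⊆ {0} ∪ {g a f t} := by
      rintro x ⟨⟨hx1, hx2⟩, hx3⟩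
      simp only [mem_union, mem_singleton_iff]
      by_contra hc
      push_neg at hc
      exact hx3 ⟨lt_of_le_of_ne hx1 (Ne.symm hc.1), lt_of_le_of_ne hx2 hc.2⟩
    refine measure_mono_null hsub ?_
    refine le_antisymm ?_ zero_le
    calc volume ({(0:ℝ)} ∪ {g a f t}) ≤ volume {(0:ℝ)} + volume {g a f t} :=
          measure_union_le _ _
      _ = 0 := by simp [Real.volume_singleton]
  have hae : S =ᵐ[volume] Set.Ioo 0 (g a f t) := by
    have h0 := measure_eq_zero_iff_ae_notMem.1 hnull
    filter_upwards [h0] with x hx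
    simp only [eq_iff_iff]
    constructor
    · intro hxS
      have hxIcc := hsub2 hxS
      by_contra hxIoo
      exact hx ⟨hxIcc, hxIoo⟩
    · exact fun hxIoo => hsub1 hxIoo
  constructor
  · rw [measure_congr hae, Real.volume_Ioo, sub_zero]
    unfold g
    exact ENNReal.ofReal_toReal (m_ne_top t)
  · exact measurableSet_Ioo.nullMeasurableSet.congr hae.symm

/-- Generic level-set measure formula via superlevel sets, for `α > 0`. -/
lemma eq_level {α : ℝ} (hα : 0 < α) (h : ℝ → ℝ)
    (hP : ∀ t : ℝ, 0 ≤ t → NullMeasurableSet {x ∈ Set.Icc (0:ℝ) a | t < h x} volume) :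
    volume {x ∈ Set.Icc (0:ℝ) a | h x = α}
      = (⨅ n : ℕ, volume {x ∈ Set.Icc (0:ℝ) a | α - α/((n:ℝ)+1) < h x})
        - volume {x ∈ Set.Icc (0:ℝ) a | α < h x} := by
  set P : ℝ → Set ℝ := fun t => {x ∈ Set.Icc (0:ℝ) a | t < h x} with hPdef
  have hPmono : ∀ s t : ℝ, s ≤ t → P t ⊆ P s := fun s t hst x hx =>
    ⟨hx.1, lt_of_le_of_lt hst hx.2⟩
  have htn : ∀ n : ℕ, (0:ℝ) ≤ α - α/((n:ℝ)+1) := by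
    intro n
    have : α/((n:ℝ)+1) ≤ α := by
      rw [div_le_iff₀ (by positivity)]
      nlinarith [Nat.cast_nonneg (α := ℝ) n]
    linarith
  have htlt : ∀ n : ℕ, α - α/((n:ℝ)+1) < α := by
    intro n
    have : (0:ℝ) < α/((n:ℝ)+1) := by positivity
    linarith
  have hseteq : {x ∈ Set.Icc (0:ℝ) a | h x = α}
      = (⋂ n : ℕ, P (α - α/((n:ℝ)+1))) \ P α := by
    ext x
    simp only [mem_diff, mem_iInter, hPdef, mem_setOf_eq]
    constructor
    · rintro ⟨hxI, hxα⟩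
      refine ⟨fun n => ⟨hxI, by rw [hxα]; exact htlt n⟩, fun hc => ?_⟩
      rw [hxα] at hc
      exact lt_irrefl α hc.2
    · rintro ⟨hall, hnot⟩
      have hxI := (hall 0).1
      refine ⟨hxI, le_antisymm ?_ ?_⟩
      · by_contra hc
        push_neg at hc
        exact hnot ⟨hxI, hc⟩
      · by_contra hc
        push_neg at hc
        obtain ⟨n, hn⟩ := exists_nat_one_div_lt
          (div_pos (show (0:ℝ) < α - h x by linarith) hα)
        have h1 : α/((n:ℝ)+1) < α - h x := by
          have h2 := mul_lt_mul_of_pos_left hn hα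
          calc α/((n:ℝ)+1) = α * (1/((n:ℝ)+1)) := by ring
            _ < α * ((α - h x)/α) := h2
            _ = α - h x := by field_simp
        have := (hall n).2
        linarith
  have hanti : Antitone fun n : ℕ => P (α - α/((n:ℝ)+1)) := by
    intro n k hnk
    apply hPmono
    have : α/((k:ℝ)+1) ≤ α/((n:ℝ)+1) := by
      gcongr <;> exact_mod_cast hnk
    linarith
  have hPfin : ∀ t : ℝ, volume (P t) ≠ ⊤ := by
    intro t
    refine ne_top_of_le_ne_top (b := ENNReal.ofReal (a - 0)) ENNReal.ofReal_ne_top ?_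
    rw [← Real.volume_Icc]
    exact measure_mono fun x hx => hx.1
  rw [hseteq, measure_diff (subset_iInter fun n => hPmono _ _ (htlt n).le)
    (hP α hα.le) (hPfin α),
    hanti.measure_iInter (fun n => hP _ (htn n)) ⟨0, hPfin _⟩]

end RearrAux

theorem stmt2 (a : ℝ) (ha : 0 < a) (f : ℝ → ℝ) (hmf : Measurable f)
    (hnn : ∀ x ∈ Set.Icc (0:ℝ) a, 0 ≤ f x)
    (hbd : ∃ M : ℝ, ∀ x ∈ Set.Icc (0:ℝ) a, f x ≤ M) (α : ℝ) :
    volume {x ∈ Set.Icc (0:ℝ) a | f x = α}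
      = volume {x ∈ Set.Icc (0:ℝ) a | rearr a f x = α} := by
  obtain ⟨M, hM⟩ := hbd
  have hPf : ∀ t : ℝ, NullMeasurableSet {x ∈ Set.Icc (0:ℝ) a | t < f x} volume := by
    intro t
    have : {x ∈ Set.Icc (0:ℝ) a | t < f x} = Set.Icc (0:ℝ) a ∩ f ⁻¹' (Set.Ioi t) := rfl
    rw [this]
    exact (measurableSet_Icc.inter (hmf measurableSet_Ioi)).nullMeasurableSet
  have hPfin : ∀ S : Set ℝ, S ⊆ Set.Icc (0:ℝ) a → volume S ≠ ⊤ := by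
    intro S hS
    refine ne_top_of_le_ne_top (b := ENNReal.ofReal (a - 0)) ENNReal.ofReal_ne_top ?_
    rw [← Real.volume_Icc]
    exact measure_mono hS
  rcases lt_trichotomy α 0 with hα | hα | hα
  · have h1 : {x ∈ Set.Icc (0:ℝ) a | f x = α} = ∅ := by
      ext x
      simp only [mem_setOf_eq, mem_empty_iff_false, iff_false, not_and]
      intro hxI hfx
      have := hnn x hxI
      linarith
    have h2 : {x ∈ Set.Icc (0:ℝ) a | rearr a f x = α} = ∅ := by
      ext x
      simp only [mem_setOf_eq, mem_empty_iff_false, iff_false, not_and]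
      intro hxI hfx
      have := RearrAux.rearr_nonneg (a := a) (f := f) x
      linarith
    rw [h1, h2]
  · subst hα
    have key : ∀ h : ℝ → ℝ, (∀ x ∈ Set.Icc (0:ℝ) a, 0 ≤ h x) →
        {x ∈ Set.Icc (0:ℝ) a | h x = 0}
          = Set.Icc (0:ℝ) a \ {x ∈ Set.Icc (0:ℝ) a | 0 < h x} := by
      intro h hh
      ext x
      simp only [mem_diff, mem_setOf_eq]
      constructor
      · rintro ⟨hxI, hx0⟩
        exact ⟨hxI, fun hc => by rw [hx0] at hc; exact lt_irrefl 0 hc.2⟩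
      · rintro ⟨hxI, hxn⟩
        refine ⟨hxI, le_antisymm ?_ (hh x hxI)⟩
        by_contra hc
        push_neg at hc
        exact hxn ⟨hxI, hc⟩
    obtain ⟨hvol, hnm⟩ := RearrAux.levelE (f := f) ha hM (le_refl (0:ℝ))
    rw [key f hnn, key (rearr a f) (fun x _ => RearrAux.rearr_nonneg x),
      measure_diff (fun x hx => hx.1) (hPf 0) (hPfin _ fun x hx => hx.1),
      measure_diff (fun x hx => hx.1) hnm (hPfin _ fun x hx => hx.1), hvol]
    rfl
  · have hPr : ∀ t : ℝ, 0 ≤ t →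
        NullMeasurableSet {x ∈ Set.Icc (0:ℝ) a | t < rearr a f x} volume :=
      fun t ht => (RearrAux.levelE (f := f) ha hM ht).2
    rw [RearrAux.eq_level hα f (fun t _ => hPf t),
      RearrAux.eq_level hα (rearr a f) hPr]
    have hval : ∀ t : ℝ, 0 ≤ t →
        volume {x ∈ Set.Icc (0:ℝ) a | t < rearr a f x}
          = volume {x ∈ Set.Icc (0:ℝ) a | t < f x} :=
      fun t ht => (RearrAux.levelE (f := f) ha hM ht).1
    congr 1
    · refine iInf_congr fun n => ?_
      have htn : (0:ℝ) ≤ α - α/((n:ℝ)+1) := by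
        have : α/((n:ℝ)+1) ≤ α := by
          rw [div_le_iff₀ (by positivity)]
          nlinarith [Nat.cast_nonneg (α := ℝ) n]
        linarith
      exact (hval _ htn).symm
    · exact (hval α hα.le).symm
end

section
/- (Hardy–Littlewood inequality for the asymmetric rearrangement) ∫₀^a f(x) g(x) dx ≤ ∫₀^a f*(x) g*(x) dx. -/
open MeasureTheory Set

namespace HLaux

/-- Distribution function of `f` on `[0,a]`. -/
noncomputable def mft (a : ℝ) (f : ℝ → ℝ) (t : ℝ) : ENNReal :=
  volume {y ∈ Set.Icc (0:ℝ) a | t < f y}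

lemma mft_anti (a : ℝ) (f : ℝ → ℝ) : Antitone (mft a f) := fun s t hst =>
  measure_mono (fun y hy => ⟨hy.1, lt_of_le_of_lt hst hy.2⟩)

lemma mft_le (a : ℝ) (f : ℝ → ℝ) (t : ℝ) : mft a f t ≤ ENNReal.ofReal a := by
  have h : mft a f t ≤ volume (Set.Icc (0:ℝ) a) := measure_mono (fun y hy => hy.1)
  simpa [Real.volume_Icc] using h

lemma mft_ne_top (a : ℝ) (f : ℝ → ℝ) (t : ℝ) : mft a f t ≠ ⊤ :=
  ne_top_of_le_ne_top ENNReal.ofReal_ne_top (mft_le a f t)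

lemma mft_meas (a : ℝ) (f : ℝ → ℝ) : Measurable (mft a f) := (mft_anti a f).measurable

lemma mft_sup (a : ℝ) (f : ℝ → ℝ) (t : ℝ) :
    mft a f t = ⨆ n : ℕ, mft a f (t + 1/(n+1)) := by
  have hmono : Monotone (fun n : ℕ => {y ∈ Set.Icc (0:ℝ) a | t + 1/((n:ℝ)+1) < f y}) := by
    intro m n hmn y hy
    refine ⟨hy.1, lt_of_le_of_lt (add_le_add_right ?_ t) hy.2⟩
    have h1 : ((m:ℝ)+1) ≤ ((n:ℝ)+1) := by exact_mod_cast by omega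
    exact one_div_le_one_div_of_le (by positivity) h1
  have hU : {y ∈ Set.Icc (0:ℝ) a | t < f y}
      = ⋃ n : ℕ, {y ∈ Set.Icc (0:ℝ) a | t + 1/((n:ℝ)+1) < f y} := by
    ext y
    simp only [Set.mem_setOf_eq, Set.mem_iUnion]
    constructor
    · rintro ⟨hy, hlt⟩
      obtain ⟨n, hn⟩ := exists_nat_one_div_lt (sub_pos.mpr hlt)
      exact ⟨n, hy, by linarith⟩
    · rintro ⟨n, hy, hlt⟩
      have hp : (0:ℝ) < 1/((n:ℝ)+1) := by positivity
      exact ⟨hy, by linarith⟩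
  rw [mft, hU, hmono.directed_le.measure_iUnion]
  rfl

/-- Measurable version of the rearrangement. -/
noncomputable def Fstar (a M : ℝ) (f : ℝ → ℝ) (x : ℝ) : ℝ :=
  (volume {t ∈ Set.Ioc (0:ℝ) M | x ≤ (mft a f t).toReal}).toReal

lemma Fset_ne_top (a M : ℝ) (f : ℝ → ℝ) (x : ℝ) :
    volume {t ∈ Set.Ioc (0:ℝ) M | x ≤ (mft a f t).toReal} ≠ ⊤ :=
  ne_top_of_le_ne_top (by simp [Real.volume_Ioc]) (measure_mono fun t ht => ht.1)

lemma Fstar_anti (a M : ℝ) (f : ℝ → ℝ) : Antitone (Fstar a M f) := fun x x' h =>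
  ENNReal.toReal_mono (Fset_ne_top a M f x)
    (measure_mono fun t ht => ⟨ht.1, le_trans h ht.2⟩)

lemma Fstar_meas (a M : ℝ) (f : ℝ → ℝ) : Measurable (Fstar a M f) :=
  (Fstar_anti a M f).measurable

lemma Fstar_nonneg (a M : ℝ) (f : ℝ → ℝ) (x : ℝ) : 0 ≤ Fstar a M f x :=
  ENNReal.toReal_nonneg

lemma Fstar_le (a M : ℝ) (hM : 0 ≤ M) (f : ℝ → ℝ) (x : ℝ) : Fstar a M f x ≤ M := by
  have h := ENNReal.toReal_mono (by simp [Real.volume_Ioc] : volume (Set.Ioc (0:ℝ) M) ≠ ⊤)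
    (measure_mono (fun t ht => ht.1) :
      volume {t ∈ Set.Ioc (0:ℝ) M | x ≤ (mft a f t).toReal} ≤ volume (Set.Ioc (0:ℝ) M))
  rw [Real.volume_Ioc, sub_zero, ENNReal.toReal_ofReal hM] at h
  exact h

lemma rearr_eq_Fstar (a M : ℝ) (hM : 0 ≤ M) (f : ℝ → ℝ)
    (hbd : ∀ y ∈ Set.Icc (0:ℝ) a, f y ≤ M) (x : ℝ) (hx : 0 < x) :
    rearr a f x = Fstar a M f x := by
  have hAm : MeasurableSet {t : ℝ | x ≤ (mft a f t).toReal} :=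
    measurableSet_le measurable_const ((mft_meas a f).ennreal_toReal)
  have h1 : (fun t => Set.indicator (Set.Icc (0:ℝ) ((mft a f t).toReal)) (fun _ => (1:ℝ)) x)
      = fun t => Set.indicator {t : ℝ | x ≤ (mft a f t).toReal} (fun _ => (1:ℝ)) t := by
    funext t
    by_cases h : x ≤ (mft a f t).toReal
    · simp [Set.indicator_apply, Set.mem_Icc, hx.le, h]
    · simp [Set.indicator_apply, Set.mem_Icc, h]
  have hset : {t : ℝ | x ≤ (mft a f t).toReal} ∩ Set.Ioi (0:ℝ)
      = {t ∈ Set.Ioc (0:ℝ) M | x ≤ (mft a f t).toReal} := by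
    ext t
    simp only [Set.mem_inter_iff, Set.mem_setOf_eq, Set.mem_Ioi, Set.mem_Ioc]
    constructor
    · rintro ⟨hle, ht0⟩
      refine ⟨⟨ht0, ?_⟩, hle⟩
      by_contra hcon
      push_neg at hcon
      have h0 : mft a f t = 0 := by
        have hemp : {y ∈ Set.Icc (0:ℝ) a | t < f y} = ∅ := by
          ext y
          simp only [Set.mem_setOf_eq, Set.mem_empty_iff_false, iff_false, not_and]
          intro hy
          exact not_lt.mpr (le_trans (hbd y hy) hcon.le)
        unfold mft
        rw [hemp]
        exact measure_empty
      rw [h0] at hle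
      simp only [ENNReal.toReal_zero] at hle
      linarith
    · rintro ⟨⟨ht0, _⟩, hle⟩
      exact ⟨hle, ht0⟩
  rw [rearr]
  show (∫ t in Set.Ioi (0:ℝ),
      Set.indicator (Set.Icc (0:ℝ) ((mft a f t).toReal)) (fun _ => (1:ℝ)) x) = _
  rw [show (fun t => Set.indicator (Set.Icc (0:ℝ) ((mft a f t).toReal)) (fun _ => (1:ℝ)) x)
      = fun t => Set.indicator {t : ℝ | x ≤ (mft a f t).toReal} (fun _ => (1:ℝ)) t from h1,
    integral_indicator hAm, Measure.restrict_restrict hAm, setIntegral_const, hset]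
  simp [Fstar, Measure.real_def]

lemma rearr_ae (a M : ℝ) (hM : 0 ≤ M) (f : ℝ → ℝ)
    (hbd : ∀ y ∈ Set.Icc (0:ℝ) a, f y ≤ M) :
    rearr a f =ᵐ[volume.restrict (Set.Icc (0:ℝ) a)] Fstar a M f := by
  have h2 : ∀ᵐ x ∂volume.restrict (Set.Icc (0:ℝ) a), x ≠ (0:ℝ) := by
    refine ae_restrict_of_ae ?_
    rw [ae_iff]
    have : {x : ℝ | ¬ x ≠ 0} = {0} := by ext x; simp
    rw [this]
    exact Real.volume_singleton
  filter_upwards [ae_restrict_mem measurableSet_Icc, h2] with x hx hx0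
  exact rearr_eq_Fstar a M hM f hbd x (lt_of_le_of_ne hx.1 (Ne.symm hx0))

lemma layercake2 (S : Set ℝ) (hS : MeasurableSet S)
    (h1 h2 : ℝ → ℝ) (m1 : Measurable h1) (m2 : Measurable h2)
    (nn1 : ∀ x ∈ S, 0 ≤ h1 x) (nn2 : ∀ x ∈ S, 0 ≤ h2 x) :
    ∫⁻ x in S, ENNReal.ofReal (h1 x) * ENNReal.ofReal (h2 x)
      = ∫⁻ s in Set.Ioi (0:ℝ), ∫⁻ t in Set.Ioi (0:ℝ),
          volume ({x | t < h1 x} ∩ ({x | s < h2 x} ∩ S)) := by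
  set ν := (volume.restrict S).withDensity (fun x => ENNReal.ofReal (h1 x)) with hν
  have hm1 : Measurable fun x => ENNReal.ofReal (h1 x) := m1.ennreal_ofReal
  have hm2 : Measurable fun x => ENNReal.ofReal (h2 x) := m2.ennreal_ofReal
  have step1 : ∫⁻ x in S, ENNReal.ofReal (h1 x) * ENNReal.ofReal (h2 x)
      = ∫⁻ x, ENNReal.ofReal (h2 x) ∂ν := by
    rw [hν, lintegral_withDensity_eq_lintegral_mul _ hm1 hm2]
    rfl
  have nn2' : 0 ≤ᵐ[ν] h2 := by
    have hres : 0 ≤ᵐ[volume.restrict S] h2 := by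
      filter_upwards [ae_restrict_mem hS] with x hx using nn2 x hx
    exact (withDensity_absolutelyContinuous (volume.restrict S) _).ae_le hres
  rw [step1, lintegral_eq_lintegral_meas_lt ν nn2' m2.aemeasurable]
  refine lintegral_congr fun s => ?_
  have hT : MeasurableSet {x : ℝ | s < h2 x} := measurableSet_lt measurable_const m2
  rw [hν, withDensity_apply _ hT, Measure.restrict_restrict hT]
  have nn1' : 0 ≤ᵐ[volume.restrict ({x : ℝ | s < h2 x} ∩ S)] h1 := by
    filter_upwards [ae_restrict_mem (hT.inter hS)] with x hx using nn1 x hx.2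
  rw [lintegral_eq_lintegral_meas_lt _ nn1' m1.aemeasurable]
  refine lintegral_congr fun t => ?_
  rw [Measure.restrict_apply (measurableSet_lt measurable_const m1)]

lemma upper (a t s : ℝ) (f g : ℝ → ℝ) :
    volume ({x | t < f x} ∩ ({x | s < g x} ∩ Set.Icc (0:ℝ) a))
      ≤ min (mft a f t) (mft a g s) := by
  refine le_min (measure_mono ?_) (measure_mono ?_)
  · rintro x ⟨hx1, _, hx3⟩; exact ⟨hx3, hx1⟩
  · rintro x ⟨_, hx2, hx3⟩; exact ⟨hx3, hx2⟩

lemma key (a M : ℝ) (hM : 0 ≤ M) (f : ℝ → ℝ)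
    (hbd : ∀ y ∈ Set.Icc (0:ℝ) a, f y ≤ M) (t : ℝ) (ht : 0 < t)
    (x : ℝ) (hx0 : 0 < x) (hxf : x < (mft a f t).toReal) :
    t < Fstar a M f x := by
  have hlt : ENNReal.ofReal x < mft a f t := by
    rw [← ENNReal.ofReal_toReal (mft_ne_top a f t)]
    exact (ENNReal.ofReal_lt_ofReal_iff (hx0.trans hxf)).mpr hxf
  rw [mft_sup a f t] at hlt
  obtain ⟨n, hn⟩ := lt_iSup_iff.mp hlt
  set t' := t + 1/((n:ℝ)+1) with ht'
  have htt' : t < t' := lt_add_of_pos_right t (by positivity)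
  have htM : t < M := by
    have hne : mft a f t' ≠ 0 := by
      intro h0
      rw [h0] at hn
      exact absurd hn (by simp)
    obtain ⟨y, hy, hy2⟩ := nonempty_of_measure_ne_zero hne
    exact lt_trans htt' (lt_of_lt_of_le hy2 (hbd y hy))
  have hsub : Set.Ioc (0:ℝ) (min t' M) ⊆ {u ∈ Set.Ioc (0:ℝ) M | x ≤ (mft a f u).toReal} := by
    intro u hu
    refine ⟨⟨hu.1, le_trans hu.2 (min_le_right _ _)⟩, ?_⟩
    have hle : ENNReal.ofReal x ≤ mft a f u :=
      le_trans hn.le (mft_anti a f (le_trans hu.2 (min_le_left _ _)))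
    calc x = (ENNReal.ofReal x).toReal := (ENNReal.toReal_ofReal hx0.le).symm
      _ ≤ (mft a f u).toReal := ENNReal.toReal_mono (mft_ne_top a f u) hle
  have hvol : ENNReal.ofReal (min t' M)
      ≤ volume {u ∈ Set.Ioc (0:ℝ) M | x ≤ (mft a f u).toReal} := by
    have h : volume (Set.Ioc (0:ℝ) (min t' M))
        ≤ volume {u ∈ Set.Ioc (0:ℝ) M | x ≤ (mft a f u).toReal} := measure_mono hsub
    simpa [Real.volume_Ioc] using h
  have h2 : min t' M ≤ Fstar a M f x := by
    have h := ENNReal.toReal_mono (Fset_ne_top a M f x) hvol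
    rwa [ENNReal.toReal_ofReal (le_min (le_trans ht.le htt'.le) hM)] at h
  exact lt_of_lt_of_le (lt_min htt' htM) h2

lemma lower (a M N : ℝ) (ha : 0 < a) (hM : 0 ≤ M) (hN : 0 ≤ N) (f g : ℝ → ℝ)
    (hbdf : ∀ y ∈ Set.Icc (0:ℝ) a, f y ≤ M) (hbdg : ∀ y ∈ Set.Icc (0:ℝ) a, g y ≤ N)
    (t s : ℝ) (ht : 0 < t) (hs : 0 < s) :
    min (mft a f t) (mft a g s)
      ≤ volume ({x | t < Fstar a M f x} ∩ ({x | s < Fstar a N g x} ∩ Set.Icc (0:ℝ) a)) := by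
  set r := (min (mft a f t) (mft a g s)).toReal with hr
  have hmin_ne : min (mft a f t) (mft a g s) ≠ ⊤ :=
    ne_top_of_le_ne_top (mft_ne_top a f t) (min_le_left _ _)
  have hsub : Set.Ioo (0:ℝ) r
      ⊆ {x | t < Fstar a M f x} ∩ ({x | s < Fstar a N g x} ∩ Set.Icc (0:ℝ) a) := by
    rintro x ⟨hx0, hxr⟩
    have hxf : x < (mft a f t).toReal :=
      lt_of_lt_of_le hxr (ENNReal.toReal_mono (mft_ne_top a f t) (min_le_left _ _))
    have hxg : x < (mft a g s).toReal :=
      lt_of_lt_of_le hxr (ENNReal.toReal_mono (mft_ne_top a g s) (min_le_right _ _))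
    refine ⟨key a M hM f hbdf t ht x hx0 hxf, key a N hN g hbdg s hs x hx0 hxg, hx0.le, ?_⟩
    calc x ≤ (mft a f t).toReal := hxf.le
      _ ≤ (ENNReal.ofReal a).toReal := ENNReal.toReal_mono ENNReal.ofReal_ne_top (mft_le a f t)
      _ = a := ENNReal.toReal_ofReal ha.le
  calc min (mft a f t) (mft a g s) = ENNReal.ofReal r := (ENNReal.ofReal_toReal hmin_ne).symm
    _ = volume (Set.Ioo (0:ℝ) r) := by simp [Real.volume_Ioo]
    _ ≤ _ := measure_mono hsub

end HLaux

open HLaux in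
theorem stmt5 (a : ℝ) (ha : 0 < a) (f : ℝ → ℝ) (hmf : Measurable f)
    (hnn : ∀ x ∈ Set.Icc (0:ℝ) a, 0 ≤ f x)
    (hbd : ∃ M : ℝ, ∀ x ∈ Set.Icc (0:ℝ) a, f x ≤ M)
    (g : ℝ → ℝ) (hmg : Measurable g)
    (hgnn : ∀ x ∈ Set.Icc (0:ℝ) a, 0 ≤ g x)
    (hgbd : ∃ M : ℝ, ∀ x ∈ Set.Icc (0:ℝ) a, g x ≤ M) :
    ∫ x in Set.Icc (0:ℝ) a, f x * g x
      ≤ ∫ x in Set.Icc (0:ℝ) a, rearr a f x * rearr a g x := by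
  obtain ⟨M₀, hM₀⟩ := hbd
  obtain ⟨N₀, hN₀⟩ := hgbd
  set M := max M₀ 0 with hMdef
  set N := max N₀ 0 with hNdef
  have hM : (0:ℝ) ≤ M := le_max_right _ _
  have hN : (0:ℝ) ≤ N := le_max_right _ _
  have hbdf : ∀ y ∈ Set.Icc (0:ℝ) a, f y ≤ M := fun y hy => le_trans (hM₀ y hy) (le_max_left _ _)
  have hbdg : ∀ y ∈ Set.Icc (0:ℝ) a, g y ≤ N := fun y hy => le_trans (hN₀ y hy) (le_max_left _ _)
  have hS : MeasurableSet (Set.Icc (0:ℝ) a) := measurableSet_Icc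
  set L := ∫⁻ x in Set.Icc (0:ℝ) a, ENNReal.ofReal (f x) * ENNReal.ofReal (g x) with hLdef
  set R := ∫⁻ x in Set.Icc (0:ℝ) a,
      ENNReal.ofReal (Fstar a M f x) * ENNReal.ofReal (Fstar a N g x) with hRdef
  have hRtop : R ≠ ⊤ := by
    have hb : R ≤ ∫⁻ _x in Set.Icc (0:ℝ) a, ENNReal.ofReal M * ENNReal.ofReal N := by
      refine lintegral_mono fun x => ?_
      exact mul_le_mul' (ENNReal.ofReal_le_ofReal (Fstar_le a M hM f x))
        (ENNReal.ofReal_le_ofReal (Fstar_le a N hN g x))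
    rw [setLIntegral_const] at hb
    exact ne_top_of_le_ne_top
      (ENNReal.mul_ne_top (ENNReal.mul_ne_top ENNReal.ofReal_ne_top ENNReal.ofReal_ne_top)
        (measure_Icc_lt_top).ne) hb
  have hLR : L ≤ R := by
    rw [hLdef, hRdef, layercake2 (Set.Icc (0:ℝ) a) hS f g hmf hmg hnn hgnn,
      layercake2 (Set.Icc (0:ℝ) a) hS (Fstar a M f) (Fstar a N g)
        (Fstar_meas a M f) (Fstar_meas a N g)
        (fun x _ => Fstar_nonneg a M f x) (fun x _ => Fstar_nonneg a N g x)]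
    refine lintegral_mono_ae ?_
    filter_upwards [ae_restrict_mem measurableSet_Ioi] with s hs
    refine lintegral_mono_ae ?_
    filter_upwards [ae_restrict_mem measurableSet_Ioi] with t ht
    exact le_trans (upper a t s f g) (lower a M N ha hM hN f g hbdf hbdg t s ht hs)
  have hL : ∫ x in Set.Icc (0:ℝ) a, f x * g x = L.toReal := by
    have nnprod : 0 ≤ᵐ[volume.restrict (Set.Icc (0:ℝ) a)] fun x => f x * g x := by
      filter_upwards [ae_restrict_mem hS] with x hx using mul_nonneg (hnn x hx) (hgnn x hx)
    rw [integral_eq_lintegral_of_nonneg_ae nnprod (hmf.mul hmg).aestronglyMeasurable]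
    congr 1
    refine lintegral_congr_ae ?_
    filter_upwards [ae_restrict_mem hS] with x hx
    exact ENNReal.ofReal_mul (hnn x hx)
  have hR : ∫ x in Set.Icc (0:ℝ) a, rearr a f x * rearr a g x = R.toReal := by
    have hae : (fun x => rearr a f x * rearr a g x)
        =ᵐ[volume.restrict (Set.Icc (0:ℝ) a)] fun x => Fstar a M f x * Fstar a N g x := by
      filter_upwards [rearr_ae a M hM f hbdf, rearr_ae a N hN g hbdg] with x h1x h2x
      rw [h1x, h2x]
    rw [integral_congr_ae hae]
    have nnprod : 0 ≤ᵐ[volume.restrict (Set.Icc (0:ℝ) a)]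
        fun x => Fstar a M f x * Fstar a N g x :=
      Filter.Eventually.of_forall fun x => mul_nonneg (Fstar_nonneg a M f x) (Fstar_nonneg a N g x)
    rw [integral_eq_lintegral_of_nonneg_ae nnprod
      ((Fstar_meas a M f).mul (Fstar_meas a N g)).aestronglyMeasurable]
    congr 1
    exact lintegral_congr fun x => ENNReal.ofReal_mul (Fstar_nonneg a M f x)
  rw [hL, hR]
  exact ENNReal.toReal_mono hRtop hLR
end

section
/- Equality holds in the Hardy–Littlewood inequality ∫₀^a f g dx = ∫₀^a f* g* dx if and only if for almost all pairs (s,t), μ({x : f(x) > t} ∩ {x : g(x) > s}) = min(μ({x : f(x) > t}), μ({x : g(x) > s})). -/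
open MeasureTheory Set Function
open scoped ENNReal Classical

namespace S6

noncomputable def m (a : ℝ) (f : ℝ → ℝ) (t : ℝ) : ℝ≥0∞ :=
  volume {x ∈ Set.Icc (0:ℝ) a | t < f x}

noncomputable def M (a : ℝ) (f : ℝ → ℝ) (t : ℝ) : ℝ := (m a f t).toReal

variable {a : ℝ} {f : ℝ → ℝ}

lemma setA_eq (t : ℝ) : {x ∈ Set.Icc (0:ℝ) a | t < f x} = Set.Icc 0 a ∩ f ⁻¹' Set.Ioi t := by
  ext x; simp only [Set.mem_sep_iff, Set.mem_inter_iff, Set.mem_preimage, Set.mem_Ioi]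

lemma measurableSet_setA (hmf : Measurable f) (t : ℝ) :
    MeasurableSet {x ∈ Set.Icc (0:ℝ) a | t < f x} := by
  rw [setA_eq]; exact measurableSet_Icc.inter (hmf measurableSet_Ioi)

lemma m_le (t : ℝ) : m a f t ≤ ENNReal.ofReal a := by
  have : {x ∈ Set.Icc (0:ℝ) a | t < f x} ⊆ Set.Icc 0 a := fun x hx => hx.1
  simpa [m, Real.volume_Icc] using (measure_mono this).trans_eq (by rw [Real.volume_Icc]; norm_num)

lemma m_ne_top (t : ℝ) : m a f t ≠ ⊤ :=
  ((m_le t).trans_lt ENNReal.ofReal_lt_top).ne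

lemma m_anti : Antitone (m a f) := by
  intro s t hst
  exact measure_mono (fun x hx => ⟨hx.1, lt_of_le_of_lt hst hx.2⟩)

lemma M_anti : Antitone (M a f) := by
  intro s t hst
  exact ENNReal.toReal_mono (m_ne_top s) (m_anti hst)

lemma M_nonneg (t : ℝ) : 0 ≤ M a f t := ENNReal.toReal_nonneg

lemma M_le_a (ha : 0 ≤ a) (t : ℝ) : M a f t ≤ a := by
  have := m_le (a := a) (f := f) t
  exact (ENNReal.le_ofReal_iff_toReal_le (m_ne_top t) ha).mp this

lemma ofReal_M (t : ℝ) : ENNReal.ofReal (M a f t) = m a f t :=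
  ENNReal.ofReal_toReal (m_ne_top t)

lemma m_eq_zero (C : ℝ) (hbd : ∀ x ∈ Set.Icc (0:ℝ) a, f x ≤ C) {t : ℝ} (ht : C ≤ t) :
    m a f t = 0 := by
  have : {x ∈ Set.Icc (0:ℝ) a | t < f x} = ∅ := by
    ext x; simp only [Set.mem_sep_iff, Set.mem_empty_iff_false, iff_false, not_and]
    intro hx h
    exact absurd h (not_lt.mpr ((hbd x hx).trans ht))
  rw [m, this, measure_empty]

/-- right continuity -/
lemma exists_gt_of_lt_M {t x : ℝ} (hx : x < M a f t) : ∃ s, t < s ∧ x ≤ M a f s := by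
  rcases lt_or_ge x 0 with h | h
  · exact ⟨t + 1, by linarith, h.le.trans (M_nonneg _)⟩
  by_contra hc
  push_neg at hc
  have key : ∀ s, t < s → m a f s ≤ ENNReal.ofReal x := by
    intro s hs
    exact (ENNReal.le_ofReal_iff_toReal_le (m_ne_top s) h).mpr (hc s hs).le
  have hUnion : {y ∈ Set.Icc (0:ℝ) a | t < f y}
      = ⋃ n : ℕ, {y ∈ Set.Icc (0:ℝ) a | t + 1/(n+1) < f y} := by
    ext y
    simp only [Set.mem_sep_iff, Set.mem_iUnion]
    constructor
    · rintro ⟨hy, hty⟩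
      obtain ⟨n, hn⟩ := exists_nat_one_div_lt (sub_pos.mpr hty)
      exact ⟨n, hy, by linarith⟩
    · rintro ⟨n, hy, hn⟩
      have : (0:ℝ) < 1/((n:ℝ)+1) := by positivity
      exact ⟨hy, by linarith⟩
  have hmono : Monotone fun n : ℕ => {y ∈ Set.Icc (0:ℝ) a | t + 1/((n:ℝ)+1) < f y} := by
    intro i j hij y hy
    refine ⟨hy.1, lt_of_le_of_lt ?_ hy.2⟩
    have h1 : (1:ℝ)/((j:ℝ)+1) ≤ 1/((i:ℝ)+1) := by
      apply one_div_le_one_div_of_le (by positivity)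
      have : (i:ℝ) ≤ j := Nat.cast_le.mpr hij
      linarith
    linarith
  have : m a f t = ⨆ n : ℕ, m a f (t + 1/((n:ℝ)+1)) := by
    rw [m, hUnion, hmono.measure_iUnion]
    rfl
  have hle : m a f t ≤ ENNReal.ofReal x := by
    rw [this]
    refine iSup_le fun n => key _ ?_
    have : (0:ℝ) < 1/((n:ℝ)+1) := by positivity
    linarith
  have : M a f t ≤ x := (ENNReal.le_ofReal_iff_toReal_le (m_ne_top t) h).mp hle
  linarith


lemma measurable_M : Measurable (M a f) := M_anti.measurable

lemma T_measurable (x : ℝ) : MeasurableSet {t : ℝ | x ∈ Set.Icc 0 (M a f t)} := by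
  by_cases hx : 0 ≤ x
  · have : {t : ℝ | x ∈ Set.Icc 0 (M a f t)} = M a f ⁻¹' Set.Ici x := by
      ext t; simp [Set.mem_Icc, hx]
    rw [this]; exact measurable_M measurableSet_Ici
  · have : {t : ℝ | x ∈ Set.Icc 0 (M a f t)} = ∅ := by
      ext t; simp [Set.mem_Icc, hx]
    rw [this]; exact MeasurableSet.empty

lemma rearr_eq (x : ℝ) :
    rearr a f x = (volume {t ∈ Set.Ioi (0:ℝ) | x ∈ Set.Icc 0 (M a f t)}).toReal := by
  have h1 : ∀ t : ℝ, Set.indicator (Set.Icc (0:ℝ) ((volume {y ∈ Set.Icc (0:ℝ) a | t < f y}).toReal))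
      (fun _ => (1:ℝ)) x = Set.indicator {t : ℝ | x ∈ Set.Icc 0 (M a f t)} (fun _ => (1:ℝ)) t := by
    intro t
    rw [Set.indicator_apply, Set.indicator_apply]
    rfl
  rw [rearr]
  simp_rw [h1]
  rw [setIntegral_indicator (T_measurable x), setIntegral_const]
  have : {t ∈ Set.Ioi (0:ℝ) | x ∈ Set.Icc 0 (M a f t)}
      = Set.Ioi 0 ∩ {t : ℝ | x ∈ Set.Icc 0 (M a f t)} := rfl
  rw [this]
  simp
  rfl


lemma lt_rearr_iff (C : ℝ) (hbd : ∀ y ∈ Set.Icc (0:ℝ) a, f y ≤ C)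
    {t x : ℝ} (ht : 0 ≤ t) (hx : 0 < x) :
    t < rearr a f x ↔ ∃ s, t < s ∧ x ≤ M a f s := by
  rw [rearr_eq]
  have hSdesc : {s ∈ Set.Ioi (0:ℝ) | x ∈ Set.Icc 0 (M a f s)}
      = {s : ℝ | 0 < s ∧ x ≤ M a f s} := by
    ext s; simp [Set.mem_Icc, hx.le]
  rw [hSdesc]
  have hsubC : {s : ℝ | 0 < s ∧ x ≤ M a f s} ⊆ Set.Ioc 0 C := by
    rintro s ⟨hs0, hsx⟩
    refine ⟨hs0, ?_⟩
    by_contra hsC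
    push_neg at hsC
    have h0 : m a f s = 0 := m_eq_zero C hbd hsC.le
    have : M a f s = 0 := by unfold M; rw [h0]; simp
    rw [this] at hsx; linarith
  have hfin : volume {s : ℝ | 0 < s ∧ x ≤ M a f s} ≠ ⊤ := by
    refine ((measure_mono hsubC).trans_lt ?_).ne
    rw [Real.volume_Ioc]; exact ENNReal.ofReal_lt_top
  constructor
  · intro h
    by_contra hc
    push_neg at hc
    have hsub : {s : ℝ | 0 < s ∧ x ≤ M a f s} ⊆ Set.Ioc 0 t := by
      rintro s ⟨hs0, hsx⟩
      exact ⟨hs0, by by_contra h'; push_neg at h'; exact absurd hsx (not_le.mpr (hc s h'))⟩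
    have := measure_mono (μ := volume) hsub
    rw [Real.volume_Ioc] at this
    have := ENNReal.toReal_mono (by simp) this
    rw [show t - 0 = t by ring, ENNReal.toReal_ofReal ht] at this
    linarith
  · rintro ⟨s, hts, hxs⟩
    have hsub : Set.Ioc 0 s ⊆ {s : ℝ | 0 < s ∧ x ≤ M a f s} := by
      rintro u ⟨hu0, hus⟩
      exact ⟨hu0, hxs.trans (M_anti hus)⟩
    have h1 := measure_mono (μ := volume) hsub
    rw [Real.volume_Ioc] at h1
    have h2 := ENNReal.toReal_mono hfin h1
    rw [show s - 0 = s by ring, ENNReal.toReal_ofReal (by linarith : (0:ℝ) ≤ s)] at h2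
    linarith

lemma vol_inter_rearr (ha : 0 ≤ a) (Cf : ℝ) (hbf : ∀ y ∈ Set.Icc (0:ℝ) a, f y ≤ Cf)
    (Cg : ℝ) (hbg : ∀ y ∈ Set.Icc (0:ℝ) a, g y ≤ Cg) {t s : ℝ} (ht : 0 < t) (hs : 0 < s) :
    volume ({x ∈ Set.Icc (0:ℝ) a | t < rearr a f x} ∩ {x ∈ Set.Icc (0:ℝ) a | s < rearr a g x})
      = min (m a f t) (m a g s) := by
  set c : ℝ := min (M a f t) (M a g s) with hc
  have hc0 : 0 ≤ c := le_min (M_nonneg t) (M_nonneg s)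
  have hlower : Set.Ioo 0 c ⊆
      ({x ∈ Set.Icc (0:ℝ) a | t < rearr a f x} ∩ {x ∈ Set.Icc (0:ℝ) a | s < rearr a g x}) := by
    rintro x ⟨hx0, hxc⟩
    have hxa : x ≤ a := lt_of_lt_of_le hxc ((min_le_left _ _).trans (M_le_a ha t)) |>.le
    have hxIcc : x ∈ Set.Icc (0:ℝ) a := ⟨hx0.le, hxa⟩
    constructor
    · refine ⟨hxIcc, (lt_rearr_iff Cf hbf ht.le hx0).mpr ?_⟩
      exact exists_gt_of_lt_M (lt_of_lt_of_le hxc (min_le_left _ _))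
    · refine ⟨hxIcc, (lt_rearr_iff Cg hbg hs.le hx0).mpr ?_⟩
      exact exists_gt_of_lt_M (lt_of_lt_of_le hxc (min_le_right _ _))
  have hupper : ({x ∈ Set.Icc (0:ℝ) a | t < rearr a f x} ∩ {x ∈ Set.Icc (0:ℝ) a | s < rearr a g x})
      ⊆ Set.Icc 0 c := by
    rintro x ⟨⟨hxIcc, hxf⟩, ⟨_, hxg⟩⟩
    rcases eq_or_lt_of_le hxIcc.1 with h0 | h0
    · exact ⟨hxIcc.1, by rw [← h0]; exact hc0⟩
    refine ⟨hxIcc.1, le_min ?_ ?_⟩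
    · obtain ⟨u, htu, hxu⟩ := (lt_rearr_iff Cf hbf ht.le h0).mp hxf
      exact hxu.trans (M_anti htu.le)
    · obtain ⟨u, hsu, hxu⟩ := (lt_rearr_iff Cg hbg hs.le h0).mp hxg
      exact hxu.trans (M_anti hsu.le)
  have h1 := measure_mono (μ := volume) hlower
  have h2 := measure_mono (μ := volume) hupper
  rw [Real.volume_Ioo] at h1
  rw [Real.volume_Icc] at h2
  have : volume ({x ∈ Set.Icc (0:ℝ) a | t < rearr a f x}
      ∩ {x ∈ Set.Icc (0:ℝ) a | s < rearr a g x}) = ENNReal.ofReal c := by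
    refine le_antisymm (by simpa using h2) (by simpa using h1)
  rw [this, hc]
  rw [← ofReal_M (a := a) (f := f) t, ← ofReal_M (a := a) (f := g) s]
  rcases min_cases (M a f t) (M a g s) with ⟨h, h'⟩ | ⟨h, h'⟩
  · rw [h, min_eq_left (ENNReal.ofReal_le_ofReal h')]
  · rw [h, min_eq_right (ENNReal.ofReal_le_ofReal h'.le)]

lemma rearr_nonneg (x : ℝ) : 0 ≤ rearr a f x := by
  rw [rearr_eq]; exact ENNReal.toReal_nonneg

lemma measurable_rearr : Measurable (rearr a f) := by
  have hE : MeasurableSet {q : ℝ × ℝ | q.2 ∈ Set.Ioi (0:ℝ) ∧ q.1 ∈ Set.Icc 0 (M a f q.2)} := by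
    have h1 : MeasurableSet {q : ℝ × ℝ | q.2 ∈ Set.Ioi (0:ℝ)} :=
      measurable_snd measurableSet_Ioi
    have h2 : MeasurableSet {q : ℝ × ℝ | 0 ≤ q.1} := measurable_fst measurableSet_Ici
    have h3 : MeasurableSet {q : ℝ × ℝ | q.1 ≤ M a f q.2} :=
      measurableSet_le measurable_fst (M_anti.measurable.comp measurable_snd)
    have : {q : ℝ × ℝ | q.2 ∈ Set.Ioi (0:ℝ) ∧ q.1 ∈ Set.Icc 0 (M a f q.2)}
        = {q : ℝ × ℝ | q.2 ∈ Set.Ioi (0:ℝ)} ∩ ({q : ℝ × ℝ | 0 ≤ q.1} ∩ {q : ℝ × ℝ | q.1 ≤ M a f q.2}) := by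
      ext q; simp [Set.mem_Icc, and_assoc]
    rw [this]; exact h1.inter (h2.inter h3)
  have : rearr a f = fun x =>
      (volume (Prod.mk x ⁻¹' {q : ℝ × ℝ | q.2 ∈ Set.Ioi (0:ℝ) ∧ q.1 ∈ Set.Icc 0 (M a f q.2)})).toReal := by
    funext x
    rw [rearr_eq]
    rfl
  rw [this]
  exact (measurable_measure_prodMk_left hE).ennreal_toReal


noncomputable def e (h k : ℝ → ℝ) (x : ℝ) (p : ℝ × ℝ) : ℝ≥0∞ :=
  (if 0 < p.2 ∧ p.2 < h x then 1 else 0) * (if 0 < p.1 ∧ p.1 < k x then 1 else 0)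

lemma measurable_uncurry_e {h k : ℝ → ℝ} (hh : Measurable h) (hk : Measurable k) :
    Measurable (uncurry (e h k)) := by
  apply Measurable.mul
  · refine Measurable.ite ?_ measurable_const measurable_const
    have : {z : ℝ × ℝ × ℝ | 0 < z.2.2 ∧ z.2.2 < h z.1}
        = {z : ℝ × ℝ × ℝ | 0 < z.2.2} ∩ {z : ℝ × ℝ × ℝ | z.2.2 < h z.1} := rfl
    rw [this]
    exact ((measurable_snd.comp measurable_snd) measurableSet_Ioi).inter
      (measurableSet_lt (measurable_snd.comp measurable_snd) (hh.comp measurable_fst))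
  · refine Measurable.ite ?_ measurable_const measurable_const
    have : {z : ℝ × ℝ × ℝ | 0 < z.2.1 ∧ z.2.1 < k z.1}
        = {z : ℝ × ℝ × ℝ | 0 < z.2.1} ∩ {z : ℝ × ℝ × ℝ | z.2.1 < k z.1} := rfl
    rw [this]
    exact ((measurable_fst.comp measurable_snd) measurableSet_Ioi).inter
      (measurableSet_lt (measurable_fst.comp measurable_snd) (hk.comp measurable_fst))

lemma e_integral_p (h k : ℝ → ℝ) {x : ℝ} (hx0 : 0 ≤ h x) (kx0 : 0 ≤ k x) :
    ∫⁻ p, e h k x p ∂((volume.restrict (Set.Ioi (0:ℝ))).prod (volume.restrict (Set.Ioi (0:ℝ))))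
      = ENNReal.ofReal (h x * k x) := by
  have hmeas : AEMeasurable (e h k x)
      ((volume.restrict (Set.Ioi (0:ℝ))).prod (volume.restrict (Set.Ioi (0:ℝ)))) := by
    apply Measurable.aemeasurable
    apply Measurable.mul
    · refine Measurable.ite ?_ measurable_const measurable_const
      exact (measurable_snd measurableSet_Ioi).inter
        (measurable_snd measurableSet_Iio)
    · refine Measurable.ite ?_ measurable_const measurable_const
      exact (measurable_fst measurableSet_Ioi).inter
        (measurable_fst measurableSet_Iio)
  rw [lintegral_prod _ hmeas]
  have inner : ∀ s : ℝ, ∫⁻ t in Set.Ioi (0:ℝ), e h k x (s, t)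
      = ENNReal.ofReal (h x) * (if 0 < s ∧ s < k x then 1 else 0) := by
    intro s
    have : ∀ t : ℝ, e h k x (s, t)
        = (Set.Ioo (0:ℝ) (h x)).indicator 1 t * (if 0 < s ∧ s < k x then 1 else 0) := by
      intro t
      simp only [e, Set.indicator_apply, Set.mem_Ioo]
      rfl
    simp_rw [this]
    rw [lintegral_mul_const'' _ ((measurable_one.indicator measurableSet_Ioo).aemeasurable)]
    congr 1
    rw [lintegral_indicator_one measurableSet_Ioo, Measure.restrict_apply measurableSet_Ioo,
      Set.inter_eq_left.mpr (fun t ht => ht.1), Real.volume_Ioo, sub_zero]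
  simp_rw [inner]
  rw [lintegral_const_mul'' _ (by
    refine Measurable.aemeasurable ?_
    refine Measurable.ite ?_ measurable_const measurable_const
    exact (measurable_id measurableSet_Ioi).inter (measurable_id measurableSet_Iio))]
  have : ∀ s : ℝ, (if 0 < s ∧ s < k x then (1:ℝ≥0∞) else 0) = (Set.Ioo (0:ℝ) (k x)).indicator 1 s := by
    intro s; simp only [Set.indicator_apply, Set.mem_Ioo]; rfl
  simp_rw [this]
  rw [lintegral_indicator_one measurableSet_Ioo, Measure.restrict_apply measurableSet_Ioo,
    Set.inter_eq_left.mpr (fun t ht => ht.1), Real.volume_Ioo, sub_zero]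
  rw [← ENNReal.ofReal_mul hx0]

lemma layercake {a : ℝ} (ha : 0 ≤ a) (h k : ℝ → ℝ) (hh : Measurable h) (hk : Measurable k)
    (hh0 : ∀ x ∈ Set.Icc (0:ℝ) a, 0 ≤ h x) (hk0 : ∀ x ∈ Set.Icc (0:ℝ) a, 0 ≤ k x) :
    ∫⁻ x in Set.Icc (0:ℝ) a, ENNReal.ofReal (h x * k x)
      = ∫⁻ p in Set.Ioi (0:ℝ) ×ˢ Set.Ioi (0:ℝ),
          volume ({x ∈ Set.Icc (0:ℝ) a | p.2 < h x} ∩ {x ∈ Set.Icc (0:ℝ) a | p.1 < k x}) := by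
  set ν := volume.restrict (Set.Ioi (0:ℝ)) with hν
  have step1 : ∫⁻ x in Set.Icc (0:ℝ) a, ENNReal.ofReal (h x * k x)
      = ∫⁻ x in Set.Icc (0:ℝ) a, ∫⁻ p, e h k x p ∂(ν.prod ν) := by
    refine setLIntegral_congr_fun measurableSet_Icc ?_
    intro x hx
    exact (e_integral_p h k (hh0 x hx) (hk0 x hx)).symm
  have step2 : ∫⁻ x in Set.Icc (0:ℝ) a, ∫⁻ p, e h k x p ∂(ν.prod ν)
      = ∫⁻ p, ∫⁻ x in Set.Icc (0:ℝ) a, e h k x p ∂(volume) ∂(ν.prod ν) := by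
    apply lintegral_lintegral_swap
    exact (measurable_uncurry_e hh hk).aemeasurable
  have step3 : ∫⁻ p, ∫⁻ x in Set.Icc (0:ℝ) a, e h k x p ∂(volume) ∂(ν.prod ν)
      = ∫⁻ p, volume ({x ∈ Set.Icc (0:ℝ) a | p.2 < h x} ∩ {x ∈ Set.Icc (0:ℝ) a | p.1 < k x})
          ∂(ν.prod ν) := by
    have hQ : (ν.prod ν) = (volume : Measure (ℝ × ℝ)).restrict (Set.Ioi (0:ℝ) ×ˢ Set.Ioi (0:ℝ)) := by
      rw [hν, Measure.prod_restrict, ← Measure.volume_eq_prod]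
    have hae : ∀ᵐ p ∂(ν.prod ν), p ∈ Set.Ioi (0:ℝ) ×ˢ Set.Ioi (0:ℝ) := by
      rw [hQ]
      exact self_mem_ae_restrict (measurableSet_Ioi.prod measurableSet_Ioi)
    refine lintegral_congr_ae (hae.mono ?_)
    rintro p ⟨hp1, hp2⟩
    have he : ∀ x : ℝ, e h k x p
        = ({x' : ℝ | p.2 < h x'} ∩ {x' : ℝ | p.1 < k x'}).indicator 1 x := by
      intro x
      simp only [e, Set.indicator_apply, Set.mem_inter_iff, Set.mem_setOf_eq]
      simp only [Set.mem_Ioi] at hp1 hp2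
      by_cases h1 : p.2 < h x <;> by_cases h2 : p.1 < k x <;>
        simp [h1, h2, hp1, hp2]
    simp_rw [he]
    have hSm : MeasurableSet ({x' : ℝ | p.2 < h x'} ∩ {x' : ℝ | p.1 < k x'}) :=
      (hh measurableSet_Ioi).inter (hk measurableSet_Ioi)
    rw [lintegral_indicator_one hSm, Measure.restrict_apply hSm]
    congr 1
    ext x
    simp only [Set.mem_inter_iff, Set.mem_setOf_eq, Set.mem_sep_iff]
    tauto
  rw [step1, step2, step3]
  have hQ : (ν.prod ν) = (volume : Measure (ℝ × ℝ)).restrict (Set.Ioi (0:ℝ) ×ˢ Set.Ioi (0:ℝ)) := by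
    rw [hν, Measure.prod_restrict, ← Measure.volume_eq_prod]
  rw [hQ]

lemma measurable_m : Measurable (m a f) := m_anti.measurable

end S6

open S6

theorem stmt6 (a : ℝ) (ha : 0 < a) (f : ℝ → ℝ) (hmf : Measurable f)
    (hnn : ∀ x ∈ Set.Icc (0:ℝ) a, 0 ≤ f x)
    (hbd : ∃ M : ℝ, ∀ x ∈ Set.Icc (0:ℝ) a, f x ≤ M)
    (g : ℝ → ℝ) (hmg : Measurable g)
    (hgnn : ∀ x ∈ Set.Icc (0:ℝ) a, 0 ≤ g x)
    (hgbd : ∃ M : ℝ, ∀ x ∈ Set.Icc (0:ℝ) a, g x ≤ M) :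
    (∫ x in Set.Icc (0:ℝ) a, f x * g x
        = ∫ x in Set.Icc (0:ℝ) a, rearr a f x * rearr a g x)
    ↔ (∀ᵐ p : ℝ × ℝ,
        volume ({x ∈ Set.Icc (0:ℝ) a | p.2 < f x} ∩ {x ∈ Set.Icc (0:ℝ) a | p.1 < g x})
          = min (volume {x ∈ Set.Icc (0:ℝ) a | p.2 < f x})
                (volume {x ∈ Set.Icc (0:ℝ) a | p.1 < g x})) := by
  obtain ⟨Cf, hCf⟩ := hbd
  obtain ⟨Cg, hCg⟩ := hgbd
  set Q : Set (ℝ × ℝ) := Set.Ioi (0:ℝ) ×ˢ Set.Ioi (0:ℝ) with hQdef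
  have hQm : MeasurableSet Q := measurableSet_Ioi.prod measurableSet_Ioi
  set F : ℝ × ℝ → ℝ≥0∞ := fun p =>
    volume ({x ∈ Set.Icc (0:ℝ) a | p.2 < f x} ∩ {x ∈ Set.Icc (0:ℝ) a | p.1 < g x}) with hFdef
  set G : ℝ × ℝ → ℝ≥0∞ := fun p => min (m a f p.2) (m a g p.1) with hGdef
  -- pointwise inequality
  have hFG : ∀ p, F p ≤ G p := by
    intro p
    refine le_min (measure_mono fun x hx => hx.1) (measure_mono fun x hx => hx.2)
  -- measurability of F
  have hFm : Measurable F := by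
    have hW : MeasurableSet {z : (ℝ × ℝ) × ℝ | z.2 ∈ Set.Icc (0:ℝ) a ∧ z.1.2 < f z.2
        ∧ z.1.1 < g z.2} := by
      refine MeasurableSet.inter ?_ (MeasurableSet.inter ?_ ?_)
      · exact measurable_snd measurableSet_Icc
      · exact measurableSet_lt (measurable_snd.comp measurable_fst) (hmf.comp measurable_snd)
      · exact measurableSet_lt (measurable_fst.comp measurable_fst) (hmg.comp measurable_snd)
    have : F = fun p => volume (Prod.mk p ⁻¹' {z : (ℝ × ℝ) × ℝ | z.2 ∈ Set.Icc (0:ℝ) a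
        ∧ z.1.2 < f z.2 ∧ z.1.1 < g z.2}) := by
      funext p
      rw [hFdef]
      refine congrArg volume ?_
      ext x
      simp only [Set.mem_inter_iff, Set.mem_sep_iff, Set.mem_preimage, Set.mem_setOf_eq]
      tauto
    rw [this]
    exact measurable_measure_prodMk_left hW
  have hGm : Measurable G :=
    (measurable_m.comp measurable_snd).min (measurable_m.comp measurable_fst)
  -- the two lintegrals
  set I : ℝ≥0∞ := ∫⁻ p in Q, F p with hIdef
  set J : ℝ≥0∞ := ∫⁻ p in Q, G p with hJdef
  have hIJ : I ≤ J := lintegral_mono fun p => hFG p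
  have hJtop : J ≠ ⊤ := by
    have hGle : ∀ p : ℝ × ℝ, G p ≤ (Set.Iic Cg ×ˢ Set.Iic Cf).indicator
        (fun _ => ENNReal.ofReal a) p := by
      intro p
      by_cases hp : p ∈ Set.Iic Cg ×ˢ Set.Iic Cf
      · rw [Set.indicator_of_mem hp]
        exact (min_le_left _ _).trans (m_le _)
      · rw [Set.indicator_of_notMem hp]
        rw [Set.mem_prod] at hp
        push_neg at hp
        rcases le_or_gt p.1 Cg with h1 | h1
        · have h2 : Cf < p.2 := not_le.mp (hp (Set.mem_Iic.mpr h1))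
          simp only [hGdef]
          rw [m_eq_zero Cf hCf h2.le]
          simp
        · simp only [hGdef]
          rw [m_eq_zero Cg hCg h1.le]
          simp
    rw [← lt_top_iff_ne_top]
    calc J ≤ ∫⁻ p in Q, (Set.Iic Cg ×ˢ Set.Iic Cf).indicator (fun _ => ENNReal.ofReal a) p :=
          lintegral_mono fun p => hGle p
      _ = ∫⁻ p in (Set.Iic Cg ×ˢ Set.Iic Cf) ∩ Q, ENNReal.ofReal a ∂volume := by
          rw [lintegral_indicator (measurableSet_Iic.prod measurableSet_Iic)]
          rw [Measure.restrict_restrict (measurableSet_Iic.prod measurableSet_Iic)]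
      _ = ENNReal.ofReal a * volume ((Set.Iic Cg ×ˢ Set.Iic Cf) ∩ Q) := by
          rw [setLIntegral_const]
      _ < ⊤ := by
          refine ENNReal.mul_lt_top ENNReal.ofReal_lt_top ?_
          have : (Set.Iic Cg ×ˢ Set.Iic Cf) ∩ Q = Set.Ioc 0 Cg ×ˢ Set.Ioc 0 Cf := by
            rw [hQdef, Set.prod_inter_prod]
            congr 1 <;> · ext u; simp [and_comm]
          rw [this, Measure.volume_eq_prod, Measure.prod_prod, Real.volume_Ioc, Real.volume_Ioc]
          exact ENNReal.mul_lt_top ENNReal.ofReal_lt_top ENNReal.ofReal_lt_top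
  -- left side equals (I = J)
  have hleft : (∫ x in Set.Icc (0:ℝ) a, f x * g x
      = ∫ x in Set.Icc (0:ℝ) a, rearr a f x * rearr a g x) ↔ I = J := by
    have h1 : ∫ x in Set.Icc (0:ℝ) a, f x * g x
        = (∫⁻ x in Set.Icc (0:ℝ) a, ENNReal.ofReal (f x * g x)).toReal := by
      refine integral_eq_lintegral_of_nonneg_ae ?_ ((hmf.mul hmg).aestronglyMeasurable)
      exact (ae_restrict_iff' measurableSet_Icc).mpr
        (Filter.Eventually.of_forall fun x hx => mul_nonneg (hnn x hx) (hgnn x hx))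
    have h2 : ∫ x in Set.Icc (0:ℝ) a, rearr a f x * rearr a g x
        = (∫⁻ x in Set.Icc (0:ℝ) a, ENNReal.ofReal (rearr a f x * rearr a g x)).toReal := by
      refine integral_eq_lintegral_of_nonneg_ae ?_
        ((measurable_rearr.mul measurable_rearr).aestronglyMeasurable)
      exact Filter.Eventually.of_forall fun x => mul_nonneg (rearr_nonneg x) (rearr_nonneg x)
    have h3 : ∫⁻ x in Set.Icc (0:ℝ) a, ENNReal.ofReal (f x * g x) = I := by
      rw [hIdef]
      exact layercake ha.le f g hmf hmg hnn hgnn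
    have h4 : ∫⁻ x in Set.Icc (0:ℝ) a, ENNReal.ofReal (rearr a f x * rearr a g x) = J := by
      rw [layercake ha.le (rearr a f) (rearr a g) measurable_rearr measurable_rearr
        (fun x _ => rearr_nonneg x) (fun x _ => rearr_nonneg x), hJdef]
      refine setLIntegral_congr_fun hQm ?_
      rintro p ⟨hp1, hp2⟩
      exact vol_inter_rearr ha.le Cf hCf Cg hCg hp2 hp1
    rw [h1, h2, h3, h4]
    constructor
    · intro h
      exact (ENNReal.toReal_eq_toReal_iff' (hIJ.trans_lt hJtop.lt_top).ne hJtop).mp h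
    · intro h; rw [h]
  -- I = J iff a.e. equality on Q
  have hmid : I = J ↔ ∀ᵐ p ∂(volume : Measure (ℝ × ℝ)).restrict Q, F p = G p := by
    have hIne : I ≠ ⊤ := (hIJ.trans_lt hJtop.lt_top).ne
    have hsub : ∫⁻ p in Q, (G p - F p) = J - I :=
      lintegral_sub hFm hIne (Filter.Eventually.of_forall fun p => hFG p)
    constructor
    · intro h
      have : ∫⁻ p in Q, (G p - F p) = 0 := by rw [hsub, h, tsub_self]
      have := (lintegral_eq_zero_iff (hGm.sub hFm)).mp this
      refine this.mono fun p hp => ?_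
      have : G p - F p = 0 := hp
      have hle : G p ≤ F p := tsub_eq_zero_iff_le.mp this
      exact le_antisymm (hFG p) hle
    · intro h
      have h0 : ∀ᵐ p ∂(volume : Measure (ℝ × ℝ)).restrict Q, G p - F p = 0 :=
        h.mono fun p hp => by rw [hp, tsub_self]
      have : ∫⁻ p in Q, (G p - F p) = 0 := by
        refine (lintegral_eq_zero_iff (hGm.sub hFm)).mpr ?_
        exact h0
      rw [hsub] at this
      have := tsub_eq_zero_iff_le.mp this
      exact le_antisymm hIJ this
  -- a.e. on Q iff a.e. on ℝ²
  have hright : (∀ᵐ p ∂(volume : Measure (ℝ × ℝ)).restrict Q, F p = G p)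
      ↔ ∀ᵐ p : ℝ × ℝ, F p = G p := by
    constructor
    · intro h
      rw [ae_restrict_iff' hQm] at h
      have hN1 : volume {p : ℝ × ℝ | p.1 = 0} = 0 := by
        have : {p : ℝ × ℝ | p.1 = 0} = ({0} : Set ℝ) ×ˢ (Set.univ : Set ℝ) := by
          ext p
          simp only [Set.mem_setOf_eq, Set.mem_prod, Set.mem_singleton_iff, Set.mem_univ, and_true]
        rw [this, Measure.volume_eq_prod, Measure.prod_prod]
        simp
      have hN2 : volume {p : ℝ × ℝ | p.2 = 0} = 0 := by
        have : {p : ℝ × ℝ | p.2 = 0} = (Set.univ : Set ℝ) ×ˢ ({0} : Set ℝ) := by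
          ext p
          simp only [Set.mem_setOf_eq, Set.mem_prod, Set.mem_singleton_iff, Set.mem_univ, true_and]
        rw [this, Measure.volume_eq_prod, Measure.prod_prod]
        simp
      have hN : ∀ᵐ p : ℝ × ℝ, p.1 ≠ 0 ∧ p.2 ≠ 0 := by
        have h1 : ∀ᵐ p : ℝ × ℝ, p.1 ≠ 0 := by
          rw [ae_iff]
          have : {p : ℝ × ℝ | ¬ p.1 ≠ 0} = {p : ℝ × ℝ | p.1 = 0} := by ext p; simp
          rw [this]; exact hN1
        have h2 : ∀ᵐ p : ℝ × ℝ, p.2 ≠ 0 := by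
          rw [ae_iff]
          have : {p : ℝ × ℝ | ¬ p.2 ≠ 0} = {p : ℝ × ℝ | p.2 = 0} := by ext p; simp
          rw [this]; exact hN2
        exact h1.and h2
      refine (h.and hN).mono ?_
      rintro p ⟨hQimp, hp1, hp2⟩
      by_cases hpQ : p ∈ Q
      · exact hQimp hpQ
      · -- p has a nonpositive (hence negative) coordinate
        rw [hQdef, Set.mem_prod] at hpQ
        push_neg at hpQ
        have hneg : p.1 < 0 ∨ p.2 < 0 := by
          rcases lt_or_ge 0 p.1 with h1 | h1
          · right
            have := hpQ (Set.mem_Ioi.mpr h1)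
            rcases lt_or_ge 0 p.2 with h2 | h2
            · exact absurd (Set.mem_Ioi.mpr h2) this
            · exact lt_of_le_of_ne h2 hp2
          · left; exact lt_of_le_of_ne h1 hp1
        rcases hneg with h1 | h1
        · -- B = Icc, A ∩ B = A, min = vol A
          have hB : {x ∈ Set.Icc (0:ℝ) a | p.1 < g x} = Set.Icc (0:ℝ) a := by
            ext x
            simp only [Set.mem_sep_iff, and_iff_left_iff_imp]
            intro hx
            exact lt_of_lt_of_le h1 (hgnn x hx)
          have hAB : {x ∈ Set.Icc (0:ℝ) a | p.2 < f x} ∩ {x ∈ Set.Icc (0:ℝ) a | p.1 < g x}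
              = {x ∈ Set.Icc (0:ℝ) a | p.2 < f x} := by
            rw [hB]
            exact Set.inter_eq_left.mpr fun x hx => hx.1
          show F p = G p
          rw [hFdef, hGdef]
          simp only
          rw [hAB]
          have : m a g p.1 = volume (Set.Icc (0:ℝ) a) := by rw [m, hB]
          rw [min_eq_left]
          · rfl
          · rw [this]
            exact measure_mono fun x hx => hx.1
        · have hA : {x ∈ Set.Icc (0:ℝ) a | p.2 < f x} = Set.Icc (0:ℝ) a := by
            ext x
            simp only [Set.mem_sep_iff, and_iff_left_iff_imp]
            intro hx
            exact lt_of_lt_of_le h1 (hnn x hx)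
          have hAB : {x ∈ Set.Icc (0:ℝ) a | p.2 < f x} ∩ {x ∈ Set.Icc (0:ℝ) a | p.1 < g x}
              = {x ∈ Set.Icc (0:ℝ) a | p.1 < g x} := by
            rw [hA]
            exact Set.inter_eq_right.mpr fun x hx => hx.1
          show F p = G p
          rw [hFdef, hGdef]
          simp only
          rw [hAB]
          have : m a f p.2 = volume (Set.Icc (0:ℝ) a) := by rw [m, hA]
          rw [min_eq_right]
          · rfl
          · rw [this]
            exact measure_mono fun x hx => hx.1
    · intro h
      exact ae_restrict_of_ae h
  rw [hleft, hmid, hright]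
  rfl
end

section
/- If b < a and f* is strictly decreasing to the right at x = b, then ∫₀^a f(x)·𝟙_{{f(x) ≥ f*(b)}}(x) dx = ∫₀^b f*(x) dx. -/
open MeasureTheory Set
open scoped ENNReal

namespace Stmt9Aux

variable (a : ℝ) (f : ℝ → ℝ)

/-- distribution measure -/
noncomputable def mu (t : ℝ) : ℝ≥0∞ := volume {y ∈ Set.Icc (0:ℝ) a | t < f y}

/-- real-valued distribution function -/
noncomputable def m (t : ℝ) : ℝ := (mu a f t).toReal

lemma mu_le (t : ℝ) : mu a f t ≤ ENNReal.ofReal a := by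
  have : {y ∈ Set.Icc (0:ℝ) a | t < f y} ⊆ Set.Icc (0:ℝ) a := fun y hy => hy.1
  calc mu a f t ≤ volume (Set.Icc (0:ℝ) a) := measure_mono this
    _ = ENNReal.ofReal a := by rw [Real.volume_Icc, sub_zero]

lemma mu_ne_top (t : ℝ) : mu a f t ≠ ∞ :=
  ne_top_of_le_ne_top ENNReal.ofReal_ne_top (mu_le a f t)

lemma mu_anti : Antitone (mu a f) := by
  intro s t hst
  exact measure_mono (fun y hy => ⟨hy.1, lt_of_le_of_lt hst hy.2⟩)

lemma m_anti : Antitone (m a f) := fun s t hst =>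
  ENNReal.toReal_mono (mu_ne_top a f s) (mu_anti a f hst)

lemma m_nonneg (t : ℝ) : 0 ≤ m a f t := ENNReal.toReal_nonneg

lemma m_meas : Measurable (m a f) := (m_anti a f).measurable

lemma mu_eq_ofReal (t : ℝ) : mu a f t = ENNReal.ofReal (m a f t) :=
  (ENNReal.ofReal_toReal (mu_ne_top a f t)).symm

/-- the sublevel set in `t`-space -/
def S (x : ℝ) : Set ℝ := Set.Ioi 0 ∩ {t | x ≤ m a f t}

lemma S_meas (x : ℝ) : MeasurableSet (S a f x) :=
  measurableSet_Ioi.inter ((m_meas a f) measurableSet_Ici)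

lemma rearr_eq (x : ℝ) (hx : 0 ≤ x) :
    rearr a f x = (volume (S a f x)).toReal := by
  unfold rearr
  have heq : ∀ t : ℝ,
      Set.indicator (Set.Icc (0:ℝ) ((volume {y ∈ Set.Icc (0:ℝ) a | t < f y}).toReal))
        (fun _ => (1:ℝ)) x
      = Set.indicator {t : ℝ | x ≤ m a f t} (fun _ => (1:ℝ)) t := by
    intro t
    simp only [Set.indicator_apply, Set.mem_Icc, Set.mem_setOf_eq, m, mu]
    by_cases h : x ≤ (volume {y : ℝ | (0 ≤ y ∧ y ≤ a) ∧ t < f y}).toReal <;>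
      simp [h, hx]
  simp_rw [heq]
  rw [setIntegral_indicator (show MeasurableSet {t : ℝ | x ≤ m a f t} from
    (m_meas a f) measurableSet_Ici), setIntegral_const]
  simp [S, smul_eq_mul, Measure.real]

lemma rearr_nonneg (x : ℝ) : 0 ≤ rearr a f x := by
  apply integral_nonneg
  intro t
  exact Set.indicator_nonneg (fun _ _ => zero_le_one) x

lemma S_subset (M : ℝ) (hM : ∀ x ∈ Set.Icc (0:ℝ) a, f x ≤ M) (x : ℝ) (hx : 0 < x) :
    S a f x ⊆ Set.Ioc 0 M := by
  intro t ht
  refine ⟨ht.1, ?_⟩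
  by_contra hMt
  push_neg at hMt
  have hset : {y ∈ Set.Icc (0:ℝ) a | t < f y} = ∅ := by
    refine Set.eq_empty_of_forall_notMem fun y hy => ?_
    have h1 := hM y hy.1
    have h2 := hy.2
    linarith
  have hm0 : m a f t = 0 := by
    simp only [m, mu, hset, measure_empty, ENNReal.toReal_zero]
  have h3 := ht.2
  simp only [Set.mem_setOf_eq, hm0] at h3
  linarith

lemma vol_S_ne_top (M : ℝ) (hM : ∀ x ∈ Set.Icc (0:ℝ) a, f x ≤ M) (x : ℝ) (hx : 0 < x) :
    volume (S a f x) ≠ ∞ := by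
  refine ne_top_of_le_ne_top (ne_of_lt ?_) (measure_mono (S_subset a f M hM x hx))
  rw [Real.volume_Ioc]
  exact ENNReal.ofReal_lt_top

end Stmt9Aux

open Stmt9Aux

theorem stmt9 (a : ℝ) (ha : 0 < a) (f : ℝ → ℝ) (hmf : Measurable f)
    (hnn : ∀ x ∈ Set.Icc (0:ℝ) a, 0 ≤ f x)
    (hbd : ∃ M : ℝ, ∀ x ∈ Set.Icc (0:ℝ) a, f x ≤ M) (b : ℝ) (hb0 : 0 ≤ b) (hba : b < a)
    (hdec : StrictDecRightAt (rearr a f) b) :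
    ∫ x in {x ∈ Set.Icc (0:ℝ) a | rearr a f b ≤ f x}, f x
      = ∫ x in Set.Icc (0:ℝ) b, rearr a f x := by
  obtain ⟨M, hM⟩ := hbd
  obtain ⟨ε₀, hε₀, hkey⟩ := hdec
  set c := rearr a f b with hc_def
  -- c > 0
  have hc : 0 < c := by
    have h1 : rearr a f (b + ε₀/2) < c := hkey (ε₀/2) (by linarith) (by linarith)
    have h2 : 0 ≤ rearr a f (b + ε₀/2) := rearr_nonneg a f _
    linarith
  -- volume of S b
  have hSb_ne_top : volume (S a f b) ≠ ∞ := by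
    intro htop
    have : c = 0 := by rw [hc_def, rearr_eq a f b hb0, htop, ENNReal.toReal_top]
    linarith
  have hSb : volume (S a f b) = ENNReal.ofReal c := by
    rw [hc_def, rearr_eq a f b hb0, ENNReal.ofReal_toReal hSb_ne_top]
  -- F2 : for 0 < t < c, b ≤ m t
  have F2 : ∀ t : ℝ, 0 < t → t < c → b ≤ m a f t := by
    intro t ht htc
    by_contra h
    push_neg at h
    have hsub : S a f b ⊆ Set.Ioc 0 t := by
      intro s hs
      refine ⟨hs.1, ?_⟩
      by_contra hst
      push_neg at hst
      have : m a f s ≤ m a f t := m_anti a f hst.le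
      have := hs.2
      simp only [Set.mem_setOf_eq] at this
      linarith
    have : ENNReal.ofReal c ≤ ENNReal.ofReal t := by
      rw [← hSb, ← sub_zero t, ← Real.volume_Ioc]
      exact measure_mono hsub
    rw [ENNReal.ofReal_le_ofReal_iff ht.le] at this
    linarith
  -- F3 : for c < t, m t ≤ b
  have F3 : ∀ t : ℝ, c < t → m a f t ≤ b := by
    intro t htc
    by_contra h
    push_neg at h
    have hsub : Set.Ioc 0 t ⊆ S a f b := by
      intro s hs
      refine ⟨hs.1, ?_⟩
      have : m a f t ≤ m a f s := m_anti a f hs.2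
      simp only [Set.mem_setOf_eq]
      linarith
    have : ENNReal.ofReal t ≤ ENNReal.ofReal c := by
      rw [← hSb, ← sub_zero t, ← Real.volume_Ioc]
      exact measure_mono hsub
    rw [ENNReal.ofReal_le_ofReal_iff hc.le] at this
    linarith
  -- the superlevel set
  set E : Set ℝ := {x ∈ Set.Icc (0:ℝ) a | c ≤ f x} with hE_def
  have hE_meas : MeasurableSet E :=
    measurableSet_Icc.inter (hmf measurableSet_Ici)
  have hE_ne_top : volume E ≠ ∞ := by
    refine ne_top_of_le_ne_top (ne_of_lt ?_) (measure_mono (fun x hx => hx.1 : E ⊆ Set.Icc 0 a))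
    rw [Real.volume_Icc]
    exact ENNReal.ofReal_lt_top
  -- F1 : volume E = ofReal b
  have F1 : volume E = ENNReal.ofReal b := by
    refine le_antisymm ?_ ?_
    · -- ≤ : uses strict decrease
      by_contra hlt
      push_neg at hlt
      set e := (volume E).toReal with he_def
      have hvolE : volume E = ENNReal.ofReal e := (ENNReal.ofReal_toReal hE_ne_top).symm
      have hbe : b < e := by
        rw [hvolE] at hlt
        exact (ENNReal.ofReal_lt_ofReal_iff_of_nonneg hb0).1 hlt
      set ε := min (ε₀/2) ((e - b)/2) with hε_def
      have hε_pos : 0 < ε := lt_min (by linarith) (by linarith)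
      have hεe : b + ε < e := by
        have h1 : ε ≤ (e - b)/2 := min_le_right _ _
        linarith
      set x := b + ε with hx_def
      have hx_pos : 0 < x := by
        rw [hx_def]; linarith
      have hsub : Set.Ioo 0 c ⊆ S a f x := by
        intro t ht
        refine ⟨ht.1, ?_⟩
        have hEsub : E ⊆ {y ∈ Set.Icc (0:ℝ) a | t < f y} :=
          fun y hy => ⟨hy.1, lt_of_lt_of_le ht.2 hy.2⟩
        have hle : ENNReal.ofReal e ≤ mu a f t := by
          rw [← hvolE]; exact measure_mono hEsub
        rw [mu_eq_ofReal] at hle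
        have hem : e ≤ m a f t := (ENNReal.ofReal_le_ofReal_iff (m_nonneg a f t)).1 hle
        show x ≤ m a f t
        linarith
      have hge : c ≤ rearr a f x := by
        rw [rearr_eq a f x hx_pos.le]
        have h1 : ENNReal.ofReal c ≤ volume (S a f x) := by
          calc ENNReal.ofReal c = volume (Set.Ioo 0 c) := by rw [Real.volume_Ioo, sub_zero]
            _ ≤ _ := measure_mono hsub
        have h2 := vol_S_ne_top a f M hM x hx_pos
        calc c = (ENNReal.ofReal c).toReal := (ENNReal.toReal_ofReal hc.le).symm
          _ ≤ _ := ENNReal.toReal_mono h2 h1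
      have hlt2 : rearr a f x < c :=
        hkey ε hε_pos (lt_of_le_of_lt (min_le_left _ _) (by linarith))
      linarith
    · -- ≥ : continuity from above
      set t : ℕ → ℝ := fun n => c - c/(n+2) with ht_def
      have htmem : ∀ n : ℕ, 0 < t n ∧ t n < c := by
        intro n
        have hn2 : (1:ℝ) < (n:ℝ) + 2 := by
          have : (0:ℝ) ≤ n := Nat.cast_nonneg n
          linarith
        constructor
        · have h1 : c/((n:ℝ)+2) < c := div_lt_self hc hn2
          simp only [ht_def]
          linarith
        · have h2 : 0 < c/((n:ℝ)+2) := div_pos hc (by linarith)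
          simp only [ht_def]
          linarith
      set A : ℕ → Set ℝ := fun n => {x ∈ Set.Icc (0:ℝ) a | t n < f x} with hA_def
      have hA_anti : Antitone A := by
        intro i j hij
        have hti : t i ≤ t j := by
          simp only [ht_def]
          have h2 : c/((j:ℝ)+2) ≤ c/((i:ℝ)+2) := by
            apply div_le_div_of_nonneg_left hc.le
            · have : (0:ℝ) ≤ i := Nat.cast_nonneg i
              linarith
            · exact_mod_cast by exact_mod_cast add_le_add_left (Nat.cast_le.2 hij) 2
          linarith
        exact fun x hx => ⟨hx.1, lt_of_le_of_lt hti hx.2⟩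
      have hEinter : E = ⋂ n, A n := by
        ext x
        simp only [Set.mem_iInter, hA_def, Set.mem_setOf_eq, hE_def]
        constructor
        · rintro ⟨h1, h2⟩ n
          exact ⟨h1, lt_of_lt_of_le (htmem n).2 h2⟩
        · intro h
          refine ⟨(h 0).1, ?_⟩
          by_contra hfx
          push_neg at hfx
          set d := c - f x with hd_def
          have hd : 0 < d := by rw [hd_def]; linarith
          obtain ⟨n, hn⟩ := exists_nat_gt (c/d)
          have hlt : c/((n:ℝ)+2) < d := by
            rw [div_lt_iff₀ (by positivity)]
            have h3 : c/d < (n:ℝ) + 2 := by linarith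
            rw [div_lt_iff₀ hd] at h3
            linarith [mul_comm d ((n:ℝ)+2)]
          have := (h n).2
          simp only [ht_def] at this
          rw [hd_def] at hlt
          linarith
      rw [hEinter, Directed.measure_iInter
        (fun n => (show MeasurableSet (A n) from
          measurableSet_Icc.inter (hmf measurableSet_Ioi)).nullMeasurableSet)
        (fun i j => ⟨max i j, hA_anti (le_max_left i j), hA_anti (le_max_right i j)⟩)
        ⟨0, by
          refine ne_top_of_le_ne_top (ne_of_lt ?_)
            (measure_mono (fun x (hx : x ∈ A 0) => hx.1))
          rw [Real.volume_Icc]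
          exact ENNReal.ofReal_lt_top⟩]
      refine le_iInf fun n => ?_
      have h1 : volume (A n) = ENNReal.ofReal (m a f (t n)) := mu_eq_ofReal a f (t n)
      rw [h1]
      exact ENNReal.ofReal_le_ofReal (F2 (t n) (htmem n).1 (htmem n).2)
  -- Layer cake for LHS
  have hL : (∫⁻ x in E, ENNReal.ofReal (f x)) =
      ∫⁻ t in Set.Ioi (0:ℝ), volume ({x | t < f x} ∩ E) := by
    rw [lintegral_eq_lintegral_meas_lt (volume.restrict E)
      ((ae_restrict_iff' hE_meas).2 (Filter.Eventually.of_forall (fun x hx => hnn x hx.1)))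
      (hmf.aemeasurable)]
    exact lintegral_congr fun t =>
      Measure.restrict_apply (measurableSet_lt measurable_const hmf)
  -- Tonelli for RHS
  have hR : (∫⁻ x in Set.Ioc (0:ℝ) b, volume (S a f x)) =
      ∫⁻ t in Set.Ioi (0:ℝ), ENNReal.ofReal (min b (m a f t)) := by
    set A : Set (ℝ × ℝ) := {p : ℝ × ℝ | 0 < p.2 ∧ p.1 ≤ m a f p.2} with hA_def
    have hAset : MeasurableSet A := by
      refine MeasurableSet.inter ?_ ?_
      · exact measurable_snd measurableSet_Ioi
      · exact measurableSet_le measurable_fst ((m_meas a f).comp measurable_snd)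
    have h1 : ∀ x : ℝ, volume (S a f x)
        = ∫⁻ t, Set.indicator A (1 : ℝ × ℝ → ℝ≥0∞) (x, t) := by
      intro x
      rw [← lintegral_indicator_one (S_meas a f x)]
      refine lintegral_congr fun u => ?_
      simp only [Set.indicator_apply, S, Set.mem_inter_iff, Set.mem_Ioi, Set.mem_setOf_eq,
        hA_def, Pi.one_apply]
    simp_rw [h1]
    rw [lintegral_lintegral_swap
      (show AEMeasurable
          (Function.uncurry fun x t => Set.indicator A (1 : ℝ × ℝ → ℝ≥0∞) (x, t))
          ((volume.restrict (Set.Ioc (0:ℝ) b)).prod volume) from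
        (measurable_one.indicator hAset).aemeasurable)]
    rw [← lintegral_indicator measurableSet_Ioi]
    refine lintegral_congr fun u => ?_
    by_cases hu : 0 < u
    · rw [Set.indicator_of_mem (Set.mem_Ioi.mpr hu)]
      have h2 : ∀ x : ℝ, Set.indicator A (1 : ℝ × ℝ → ℝ≥0∞) (x, u)
          = Set.indicator (Set.Iic (m a f u)) (1 : ℝ → ℝ≥0∞) x := by
        intro x
        simp only [Set.indicator_apply, hA_def, Set.mem_setOf_eq, Set.mem_Iic, hu, true_and,
          Pi.one_apply]
      simp_rw [h2]
      rw [lintegral_indicator_one measurableSet_Iic,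
        Measure.restrict_apply measurableSet_Iic, Set.inter_comm, Set.Ioc_inter_Iic,
        Real.volume_Ioc, sub_zero]
    · rw [Set.indicator_of_notMem (fun h => hu (Set.mem_Ioi.mp h))]
      have h2 : ∀ x : ℝ, Set.indicator A (1 : ℝ × ℝ → ℝ≥0∞) (x, u) = 0 := by
        intro x
        simp only [Set.indicator_apply, hA_def, Set.mem_setOf_eq, hu, false_and, if_false]
      simp_rw [h2]
      exact lintegral_zero
  -- integrands agree a.e.
  have hAE : ∀ᵐ t ∂(volume.restrict (Set.Ioi (0:ℝ))),
      volume ({x | t < f x} ∩ E) = ENNReal.ofReal (min b (m a f t)) := by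
    have hne : ∀ᵐ t : ℝ ∂volume, t ≠ c := by
      refine ae_iff.mpr ?_
      have : {t : ℝ | ¬ t ≠ c} = {c} := by ext t; simp
      rw [this, Real.volume_singleton]
    filter_upwards [self_mem_ae_restrict measurableSet_Ioi, ae_restrict_of_ae hne]
      with t ht htc
    rcases lt_or_gt_of_ne htc with h | h
    · -- t < c
      have h1 : {x | t < f x} ∩ E = E := by
        apply Set.inter_eq_self_of_subset_right
        intro x hx
        exact lt_of_lt_of_le h hx.2
      have h2 : min b (m a f t) = b := min_eq_left (F2 t ht h)
      rw [h1, h2, F1]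
    · -- c < t
      have h1 : {x | t < f x} ∩ E = {x ∈ Set.Icc (0:ℝ) a | t < f x} := by
        ext x
        simp only [Set.mem_inter_iff, Set.mem_setOf_eq, hE_def]
        constructor
        · rintro ⟨h1, h2, _⟩; exact ⟨h2, h1⟩
        · rintro ⟨h1, h2⟩; exact ⟨h2, h1, le_of_lt (lt_trans h h2)⟩
      have h2 : min b (m a f t) = m a f t := min_eq_right (F3 t h)
      rw [h1, h2]
      exact (mu_eq_ofReal a f t)
  -- put it together
  have hmain : (∫⁻ x in E, ENNReal.ofReal (f x)) = ∫⁻ x in Set.Ioc (0:ℝ) b, volume (S a f x) := by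
    rw [hL, hR]
    exact lintegral_congr_ae hAE
  -- convert both sides
  have hLHS : ∫ x in E, f x = (∫⁻ x in E, ENNReal.ofReal (f x)).toReal := by
    apply integral_eq_lintegral_of_nonneg_ae
    · exact (ae_restrict_iff' hE_meas).2 (Filter.Eventually.of_forall (fun x hx => hnn x hx.1))
    · exact hmf.aestronglyMeasurable
  have hRHS : ∫ x in Set.Icc (0:ℝ) b, rearr a f x
      = (∫⁻ x in Set.Ioc (0:ℝ) b, volume (S a f x)).toReal := by
    rw [integral_Icc_eq_integral_Ioc]
    rw [setIntegral_congr_fun measurableSet_Ioc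
      (fun x hx => rearr_eq a f x hx.1.le)]
    apply integral_toReal
    · have hanti : Antitone (fun x => volume (S a f x)) := fun x y hxy =>
        measure_mono (Set.inter_subset_inter_right _ (fun t ht => le_trans hxy ht))
      exact hanti.measurable.aemeasurable
    · rw [ae_restrict_iff' measurableSet_Ioc]
      exact Filter.Eventually.of_forall fun x hx =>
        lt_of_le_of_ne (le_top) (vol_S_ne_top a f M hM x hx.1)
  rw [hLHS, hRHS, hmain]
end

section
/- If b < a and f* is strictly decreasing from the left at x = b, then ∫₀^a f(x)·𝟙_{{f(x) > f*(b)}}(x) dx = ∫₀^b f*(x) dx. -/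
open MeasureTheory Set

noncomputable def mm (a : ℝ) (f : ℝ → ℝ) (t : ℝ) : ENNReal :=
  volume {y ∈ Set.Icc (0:ℝ) a | t < f y}

lemma mm_anti (a : ℝ) (f : ℝ → ℝ) : Antitone (mm a f) := fun s t h =>
  measure_mono (fun y hy => ⟨hy.1, lt_of_le_of_lt h hy.2⟩)

lemma mm_le (a : ℝ) (f : ℝ → ℝ) (t : ℝ) : mm a f t ≤ ENNReal.ofReal a := by
  calc mm a f t ≤ volume (Set.Icc (0:ℝ) a) := measure_mono (fun y hy => hy.1)
  _ = ENNReal.ofReal a := by rw [Real.volume_Icc, sub_zero]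

lemma mm_ne_top (a : ℝ) (f : ℝ → ℝ) (t : ℝ) : mm a f t ≠ ⊤ :=
  ((mm_le a f t).trans_lt ENNReal.ofReal_lt_top).ne

lemma mmr_anti (a : ℝ) (f : ℝ → ℝ) : Antitone (fun t => (mm a f t).toReal) :=
  fun s t h => ENNReal.toReal_mono (mm_ne_top a f s) (mm_anti a f h)

lemma rearr_eq (a : ℝ) (f : ℝ → ℝ) (x : ℝ) (hx : 0 < x) :
    rearr a f x = (volume {t ∈ Set.Ioi (0:ℝ) | x ≤ (mm a f t).toReal}).toReal := by
  have hT : MeasurableSet {t : ℝ | x ≤ (mm a f t).toReal} := by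
    have : {t : ℝ | x ≤ (mm a f t).toReal} = (fun t => (mm a f t).toReal) ⁻¹' Set.Ici x := rfl
    rw [this]
    exact (mmr_anti a f).measurable measurableSet_Ici
  unfold rearr
  have heq : ∀ t : ℝ, Set.indicator (Set.Icc (0:ℝ) ((volume {y ∈ Set.Icc (0:ℝ) a | t < f y}).toReal))
      (fun _ => (1:ℝ)) x = Set.indicator {t : ℝ | x ≤ (mm a f t).toReal} (fun _ => (1:ℝ)) t := by
    intro t
    have hrw : volume {y | y ∈ Set.Icc (0:ℝ) a ∧ t < f y} = mm a f t := rfl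
    rw [hrw]
    by_cases h : x ≤ (mm a f t).toReal
    · rw [Set.indicator_of_mem (Set.mem_Icc.mpr ⟨hx.le, h⟩),
        Set.indicator_of_mem (show t ∈ {t : ℝ | x ≤ (mm a f t).toReal} from h)]
    · rw [Set.indicator_of_notMem (fun hc => h (Set.mem_Icc.mp hc).2),
        Set.indicator_of_notMem (show t ∉ {t : ℝ | x ≤ (mm a f t).toReal} from h)]
  simp_rw [heq]
  rw [setIntegral_indicator hT, setIntegral_const, smul_eq_mul, mul_one]
  congr 1

theorem stmt10 (a : ℝ) (ha : 0 < a) (f : ℝ → ℝ) (hmf : Measurable f)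
    (hnn : ∀ x ∈ Set.Icc (0:ℝ) a, 0 ≤ f x)
    (hbd : ∃ M : ℝ, ∀ x ∈ Set.Icc (0:ℝ) a, f x ≤ M) (b : ℝ) (hb0 : 0 ≤ b) (hba : b < a)
    (hdec : StrictDecLeftAt (rearr a f) b) :
    ∫ x in {x ∈ Set.Icc (0:ℝ) a | rearr a f b < f x}, f x
      = ∫ x in Set.Icc (0:ℝ) b, rearr a f x := by
  obtain ⟨M₀, hM₀⟩ := hbd
  set M := max M₀ 0 with hM
  have hMbd : ∀ x ∈ Set.Icc (0:ℝ) a, f x ≤ M := fun x hx => (hM₀ x hx).trans (le_max_left _ _)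
  have hM0 : (0:ℝ) ≤ M := le_max_right _ _
  have hmanti : Antitone (mm a f) := mm_anti a f
  have hmfin : ∀ t, mm a f t ≠ ⊤ := mm_ne_top a f
  have hmzero : ∀ t, M ≤ t → mm a f t = 0 := by
    intro t ht
    have h1 : {y | y ∈ Set.Icc (0:ℝ) a ∧ t < f y} = ∅ := by
      ext y
      simp only [Set.mem_setOf_eq, Set.mem_empty_iff_false, iff_false, not_and, not_lt]
      intro hy
      exact (hMbd y hy).trans ht
    show volume {y | y ∈ Set.Icc (0:ℝ) a ∧ t < f y} = 0
    rw [h1, measure_empty]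
  obtain ⟨ε₀, hε₀, hdec⟩ := hdec
  -- b > 0
  have hb : 0 < b := by
    rcases lt_or_eq_of_le hb0 with h | h
    · exact h
    exfalso
    have h1 : 0 ≤ rearr a f b := by
      apply setIntegral_nonneg measurableSet_Ioi
      intro t _
      exact Set.indicator_nonneg (fun _ _ => zero_le_one) _
    have h2 : rearr a f (b - ε₀ / 2) = 0 := by
      unfold rearr
      have : ∀ t : ℝ, Set.indicator
          (Set.Icc (0:ℝ) ((volume {y ∈ Set.Icc (0:ℝ) a | t < f y}).toReal))
          (fun _ => (1:ℝ)) (b - ε₀ / 2) = 0 := by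
        intro t
        apply Set.indicator_of_notMem
        intro hc
        have := hc.1
        linarith
      simp_rw [this]
      simp
    have := hdec (ε₀ / 2) (by linarith) (by linarith)
    rw [h2] at this
    linarith
  set c := rearr a f b with hcdef
  set S : ℝ → Set ℝ := fun x => {t ∈ Set.Ioi (0:ℝ) | x ≤ (mm a f t).toReal} with hSdef
  have hceq : c = (volume (S b)).toReal := rearr_eq a f b hb
  have hc0 : 0 ≤ c := hceq ▸ ENNReal.toReal_nonneg
  have hSsub : ∀ x, 0 < x → S x ⊆ Set.Ioc 0 M := by
    rintro x hx t ⟨ht0, htx⟩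
    refine ⟨ht0, ?_⟩
    by_contra h
    push_neg at h
    rw [hmzero t h.le] at htx
    simp only [ENNReal.toReal_zero] at htx
    linarith
  have hSfin : ∀ x, 0 < x → volume (S x) ≠ ⊤ := by
    intro x hx
    refine ((measure_mono (hSsub x hx)).trans_lt ?_).ne
    rw [Real.volume_Ioc]
    exact ENNReal.ofReal_lt_top
  -- m t ≤ b for t > c
  have h2 : ∀ t, c < t → mm a f t ≤ ENNReal.ofReal b := by
    intro t ht
    by_contra h
    push_neg at h
    have hbt : b < (mm a f t).toReal := by
      have := (ENNReal.toReal_lt_toReal ENNReal.ofReal_ne_top (hmfin t)).mpr h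
      rwa [ENNReal.toReal_ofReal hb.le] at this
    have hsub : Set.Ioc 0 t ⊆ S b := by
      rintro s ⟨hs0, hst⟩
      exact ⟨hs0, le_trans hbt.le (mmr_anti a f hst)⟩
    have h1 : ENNReal.ofReal t ≤ volume (S b) := by
      rw [← sub_zero t, ← Real.volume_Ioc]
      exact measure_mono hsub
    have h2 : t ≤ c := by
      rw [hceq]
      exact (ENNReal.ofReal_le_iff_le_toReal (hSfin b hb)).mp h1
    linarith
  -- m t ≥ b for 0 < t < c
  have h3 : ∀ t, 0 < t → t < c → ENNReal.ofReal b ≤ mm a f t := by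
    intro t ht0 htc
    by_contra h
    push_neg at h
    have hbt : (mm a f t).toReal < b := by
      have := (ENNReal.toReal_lt_toReal (hmfin t) ENNReal.ofReal_ne_top).mpr h
      rwa [ENNReal.toReal_ofReal hb.le] at this
    have hsub : S b ⊆ Set.Ioc 0 t := by
      rintro s ⟨hs0, hsb⟩
      refine ⟨hs0, ?_⟩
      by_contra h'
      push_neg at h'
      exact absurd (hsb.trans (mmr_anti a f h'.le)) (not_le.mpr hbt)
    have h1 : volume (S b) ≤ ENNReal.ofReal t := by
      rw [← sub_zero t, ← Real.volume_Ioc]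
      exact measure_mono hsub
    have h2 : c ≤ t := by
      rw [hceq, ← ENNReal.toReal_ofReal ht0.le]
      exact ENNReal.toReal_mono ENNReal.ofReal_ne_top h1
    linarith
  -- m c ≤ b (right continuity)
  have h4a : mm a f c ≤ ENNReal.ofReal b := by
    have hUnion : {y | y ∈ Set.Icc (0:ℝ) a ∧ c < f y}
        = ⋃ n : ℕ, {y | y ∈ Set.Icc (0:ℝ) a ∧ c + ((n:ℝ)+1)⁻¹ < f y} := by
      ext y
      simp only [Set.mem_setOf_eq, Set.mem_iUnion]
      constructor
      · rintro ⟨hy, hlt⟩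
        obtain ⟨n, hn⟩ := exists_nat_one_div_lt (show (0:ℝ) < f y - c by linarith)
        rw [one_div] at hn
        exact ⟨n, hy, by linarith⟩
      · rintro ⟨n, hy, hlt⟩
        have : (0:ℝ) < ((n:ℝ)+1)⁻¹ := by positivity
        exact ⟨hy, by linarith⟩
    have hdir : Directed (fun x1 x2 : Set ℝ => x1 ⊆ x2)
        (fun n : ℕ => {y | y ∈ Set.Icc (0:ℝ) a ∧ c + ((n:ℝ)+1)⁻¹ < f y}) := by
      have hmono : Monotone (fun n : ℕ => {y | y ∈ Set.Icc (0:ℝ) a ∧ c + ((n:ℝ)+1)⁻¹ < f y}) := by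
        intro i j hij y hy
        refine ⟨hy.1, lt_of_le_of_lt ?_ hy.2⟩
        have hij' : (i:ℝ) ≤ (j:ℝ) := Nat.cast_le.mpr hij
        have : ((j:ℝ)+1)⁻¹ ≤ ((i:ℝ)+1)⁻¹ := by
          apply inv_anti₀ (by positivity)
          linarith
        linarith
      exact hmono.directed_le
    have heq : mm a f c = ⨆ n : ℕ, mm a f (c + ((n:ℝ)+1)⁻¹) := by
      show volume {y | y ∈ Set.Icc (0:ℝ) a ∧ c < f y} = _
      rw [hUnion]
      exact hdir.measure_iUnion
    rw [heq]
    refine iSup_le fun n => h2 _ ?_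
    have : (0:ℝ) < ((n:ℝ)+1)⁻¹ := by positivity
    linarith
  -- m c ≥ b (uses strict decrease)
  have h4b : ENNReal.ofReal b ≤ mm a f c := by
    have key : ∀ ε, 0 < ε → ε < min ε₀ b → ENNReal.ofReal (b - ε) ≤ mm a f c := by
      intro ε hε hεlt
      have hx : 0 < b - ε := by
        have := hεlt.trans_le (min_le_right ε₀ b)
        linarith
      have hlt : c < rearr a f (b - ε) := hdec ε hε (hεlt.trans_le (min_le_left ε₀ b))
      rw [rearr_eq a f (b - ε) hx] at hlt
      have hnotsub : ¬ S (b - ε) ⊆ Set.Ioc 0 c := by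
        intro hsub
        have h1 : volume (S (b - ε)) ≤ ENNReal.ofReal c := by
          rw [← sub_zero c, ← Real.volume_Ioc]
          exact measure_mono hsub
        have h2 : (volume (S (b - ε))).toReal ≤ c := by
          rw [← ENNReal.toReal_ofReal hc0]
          exact ENNReal.toReal_mono ENNReal.ofReal_ne_top h1
        linarith
      obtain ⟨t, htS, htc⟩ := Set.not_subset.mp hnotsub
      have ht0 : 0 < t := htS.1
      have hct : c < t := by
        by_contra h'
        push_neg at h'
        exact htc ⟨ht0, h'⟩
      calc ENNReal.ofReal (b - ε) ≤ mm a f t :=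
            (ENNReal.ofReal_le_iff_le_toReal (hmfin t)).mpr htS.2
        _ ≤ mm a f c := hmanti hct.le
    have hb' : b ≤ (mm a f c).toReal := by
      by_contra h
      push_neg at h
      set d := b - (mm a f c).toReal with hddef
      have hd : 0 < d := by rw [hddef]; linarith
      have hm1 : 0 < min ε₀ b := lt_min hε₀ hb
      have hle1 : min (min ε₀ b) d ≤ min ε₀ b := min_le_left _ _
      have hle2 : min (min ε₀ b) d ≤ d := min_le_right _ _
      have hlem : 0 < min (min ε₀ b) d := lt_min hm1 hd
      set ε := min (min ε₀ b) d / 2 with hεdef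
      have := key ε (by rw [hεdef]; linarith) (by rw [hεdef]; linarith)
      have h2 : b - ε ≤ (mm a f c).toReal := (ENNReal.ofReal_le_iff_le_toReal (hmfin c)).mp this
      have h3 : ε ≤ d / 2 := by rw [hεdef]; linarith
      rw [hddef] at h3
      linarith
    exact (ENNReal.ofReal_le_iff_le_toReal (hmfin c)).mpr hb'
  have hmc : mm a f c = ENNReal.ofReal b := le_antisymm h4a h4b
  -- pointwise identity
  have hpt : ∀ t ∈ Set.Ioi (0:ℝ), mm a f (max c t) = min (ENNReal.ofReal b) (mm a f t) := by
    intro t ht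
    rcases lt_trichotomy t c with h | h | h
    · rw [max_eq_left h.le, hmc, min_eq_left (h3 t ht h)]
    · rw [h, max_self, hmc, min_eq_left le_rfl]
    · rw [max_eq_right h.le, min_eq_right (h2 t h)]
  -- LHS via layercake
  have hEm : MeasurableSet {x | x ∈ Set.Icc (0:ℝ) a ∧ c < f x} :=
    measurableSet_Icc.inter (measurableSet_lt measurable_const hmf)
  have hEfin : volume {x | x ∈ Set.Icc (0:ℝ) a ∧ c < f x} ≠ ⊤ := hmfin c
  have hint : IntegrableOn f {x | x ∈ Set.Icc (0:ℝ) a ∧ c < f x} volume := by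
    refine Integrable.mono' (g := fun _ => M) ?_ hmf.aestronglyMeasurable ?_
    · exact (integrableOn_const_iff).mpr (Or.inr (lt_top_iff_ne_top.mpr hEfin))
    · filter_upwards [ae_restrict_mem hEm] with x hx
      rw [Real.norm_eq_abs, abs_of_nonneg (hnn x hx.1)]
      exact hMbd x hx.1
  have hnn' : 0 ≤ᵐ[volume.restrict {x | x ∈ Set.Icc (0:ℝ) a ∧ c < f x}] f := by
    filter_upwards [ae_restrict_mem hEm] with x hx using hnn x hx.1
  have hLHS1 : ∫ x in {x | x ∈ Set.Icc (0:ℝ) a ∧ c < f x}, f x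
      = ∫ t in Set.Ioi (0:ℝ),
          ((volume.restrict {x | x ∈ Set.Icc (0:ℝ) a ∧ c < f x}) {y | t < f y}).toReal :=
    hint.integral_eq_integral_meas_lt hnn'
  have hsetE : Set.EqOn
      (fun t => ((volume.restrict {x | x ∈ Set.Icc (0:ℝ) a ∧ c < f x}) {y | t < f y}).toReal)
      (fun t => (mm a f (max c t)).toReal) (Set.Ioi (0:ℝ)) := by
    intro t _
    simp only
    rw [Measure.restrict_apply (measurableSet_lt measurable_const hmf)]
    congr 1
    show volume _ = volume {y | y ∈ Set.Icc (0:ℝ) a ∧ max c t < f y}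
    congr 1
    ext y
    simp only [Set.mem_inter_iff, Set.mem_setOf_eq, max_lt_iff]
    tauto
  have hmaxmeas : Measurable fun t => mm a f (max c t) :=
    (hmanti.comp_monotone (monotone_const.max monotone_id)).measurable
  have hLHS : ∫ x in {x | x ∈ Set.Icc (0:ℝ) a ∧ c < f x}, f x
      = (∫⁻ t in Set.Ioi (0:ℝ), mm a f (max c t)).toReal := by
    rw [hLHS1, setIntegral_congr_fun measurableSet_Ioi hsetE,
      integral_eq_lintegral_of_nonneg_ae (ae_of_all _ fun t => ENNReal.toReal_nonneg)
        hmaxmeas.ennreal_toReal.aestronglyMeasurable]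
    congr 1
    refine setLIntegral_congr_fun_ae measurableSet_Ioi (ae_of_all _ fun t _ => ?_)
    exact ENNReal.ofReal_toReal (hmfin _)
  -- RHS via Tonelli
  have hTmeas : ∀ x : ℝ, MeasurableSet {t : ℝ | x ≤ (mm a f t).toReal} := fun x =>
    (mmr_anti a f).measurable measurableSet_Ici
  have hRHS1 : ∫ x in Set.Icc (0:ℝ) b, rearr a f x
      = ∫ x in Set.Ioc (0:ℝ) b, (volume (S x)).toReal := by
    rw [integral_Icc_eq_integral_Ioc]
    exact setIntegral_congr_fun measurableSet_Ioc (fun x hx => rearr_eq a f x hx.1)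
  have hvolanti : Antitone fun x => volume (S x) := by
    intro x1 x2 h
    apply measure_mono
    rintro t ⟨ht0, htx⟩
    exact ⟨ht0, le_trans h htx⟩
  have hvolmeas : Measurable fun x => volume (S x) := hvolanti.measurable
  have hRHS2 : ∫ x in Set.Ioc (0:ℝ) b, (volume (S x)).toReal
      = (∫⁻ x in Set.Ioc (0:ℝ) b, volume (S x)).toReal := by
    rw [integral_eq_lintegral_of_nonneg_ae (ae_of_all _ fun x => ENNReal.toReal_nonneg)
      hvolmeas.ennreal_toReal.aestronglyMeasurable]
    congr 1
    refine setLIntegral_congr_fun_ae measurableSet_Ioc (ae_of_all _ fun x hx => ?_)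
    exact ENNReal.ofReal_toReal (hSfin x hx.1)
  have hPmeas : MeasurableSet {p : ℝ × ℝ | p.1 ≤ (mm a f p.2).toReal} :=
    measurableSet_le measurable_fst ((mmr_anti a f).measurable.comp measurable_snd)
  have hswap : ∫⁻ x in Set.Ioc (0:ℝ) b, volume (S x)
      = ∫⁻ t in Set.Ioi (0:ℝ), min (ENNReal.ofReal b) (mm a f t) := by
    have h1 : ∀ x ∈ Set.Ioc (0:ℝ) b, volume (S x)
        = ∫⁻ t in Set.Ioi (0:ℝ),
            Set.indicator {p : ℝ × ℝ | p.1 ≤ (mm a f p.2).toReal} 1 (x, t) := by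
      intro x _
      have heq : ∀ t : ℝ, Set.indicator {p : ℝ × ℝ | p.1 ≤ (mm a f p.2).toReal}
          (1 : ℝ × ℝ → ENNReal) (x, t)
          = Set.indicator {t : ℝ | x ≤ (mm a f t).toReal} (1 : ℝ → ENNReal) t := by
        intro t
        by_cases h : x ≤ (mm a f t).toReal
        · rw [Set.indicator_of_mem
              (show (x, t) ∈ {p : ℝ × ℝ | p.1 ≤ (mm a f p.2).toReal} from h),
            Set.indicator_of_mem (show t ∈ {t : ℝ | x ≤ (mm a f t).toReal} from h)]
          rfl
        · rw [Set.indicator_of_notMem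
              (show (x, t) ∉ {p : ℝ × ℝ | p.1 ≤ (mm a f p.2).toReal} from h),
            Set.indicator_of_notMem (show t ∉ {t : ℝ | x ≤ (mm a f t).toReal} from h)]
      calc volume (S x)
          = (volume.restrict (Set.Ioi (0:ℝ))) {t : ℝ | x ≤ (mm a f t).toReal} := by
            rw [Measure.restrict_apply (hTmeas x), Set.inter_comm]
            rfl
        _ = ∫⁻ t in Set.Ioi (0:ℝ), Set.indicator {t : ℝ | x ≤ (mm a f t).toReal} 1 t :=
            (lintegral_indicator_one (hTmeas x)).symm
        _ = ∫⁻ t in Set.Ioi (0:ℝ),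
              Set.indicator {p : ℝ × ℝ | p.1 ≤ (mm a f p.2).toReal} 1 (x, t) :=
            lintegral_congr fun t => (heq t).symm
    have hinner : ∀ t ∈ Set.Ioi (0:ℝ),
        (∫⁻ x in Set.Ioc (0:ℝ) b,
          Set.indicator {p : ℝ × ℝ | p.1 ≤ (mm a f p.2).toReal} 1 (x, t))
        = min (ENNReal.ofReal b) (mm a f t) := by
      intro t _
      have heq : ∀ x : ℝ, Set.indicator {p : ℝ × ℝ | p.1 ≤ (mm a f p.2).toReal}
          (1 : ℝ × ℝ → ENNReal) (x, t)
          = Set.indicator (Set.Iic ((mm a f t).toReal)) (1 : ℝ → ENNReal) x := by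
        intro x
        by_cases h : x ≤ (mm a f t).toReal
        · rw [Set.indicator_of_mem
              (show (x, t) ∈ {p : ℝ × ℝ | p.1 ≤ (mm a f p.2).toReal} from h),
            Set.indicator_of_mem (show x ∈ Set.Iic ((mm a f t).toReal) from h)]
          rfl
        · rw [Set.indicator_of_notMem
              (show (x, t) ∉ {p : ℝ × ℝ | p.1 ≤ (mm a f p.2).toReal} from h),
            Set.indicator_of_notMem (show x ∉ Set.Iic ((mm a f t).toReal) from h)]
      calc (∫⁻ x in Set.Ioc (0:ℝ) b,
              Set.indicator {p : ℝ × ℝ | p.1 ≤ (mm a f p.2).toReal} 1 (x, t))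
          = ∫⁻ x in Set.Ioc (0:ℝ) b,
              Set.indicator (Set.Iic ((mm a f t).toReal)) 1 x :=
            lintegral_congr fun x => heq x
        _ = volume (Set.Iic ((mm a f t).toReal) ∩ Set.Ioc (0:ℝ) b) := by
            rw [lintegral_indicator_one measurableSet_Iic,
              Measure.restrict_apply measurableSet_Iic]
        _ = volume (Set.Ioc (0:ℝ) (min b ((mm a f t).toReal))) := by
            congr 1
            ext x
            simp only [Set.mem_inter_iff, Set.mem_Iic, Set.mem_Ioc, le_min_iff]
            tauto
        _ = ENNReal.ofReal (min b ((mm a f t).toReal)) := by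
            rw [Real.volume_Ioc, sub_zero]
        _ = min (ENNReal.ofReal b) (ENNReal.ofReal ((mm a f t).toReal)) :=
            Monotone.map_min (fun _ _ h => ENNReal.ofReal_le_ofReal h)
        _ = min (ENNReal.ofReal b) (mm a f t) := by rw [ENNReal.ofReal_toReal (hmfin t)]
    have hunc : AEMeasurable (Function.uncurry fun (x t : ℝ) =>
        Set.indicator {p : ℝ × ℝ | p.1 ≤ (mm a f p.2).toReal} (1 : ℝ × ℝ → ENNReal) (x, t))
        ((volume.restrict (Set.Ioc (0:ℝ) b)).prod (volume.restrict (Set.Ioi (0:ℝ)))) := by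
      have huneq : (Function.uncurry fun (x t : ℝ) =>
          Set.indicator {p : ℝ × ℝ | p.1 ≤ (mm a f p.2).toReal} (1 : ℝ × ℝ → ENNReal) (x, t))
          = Set.indicator {p : ℝ × ℝ | p.1 ≤ (mm a f p.2).toReal} 1 := by
        funext p
        rfl
      rw [huneq]
      exact (measurable_const.indicator hPmeas).aemeasurable
    rw [setLIntegral_congr_fun_ae measurableSet_Ioc (ae_of_all _ h1),
      lintegral_lintegral_swap hunc,
      setLIntegral_congr_fun_ae measurableSet_Ioi (ae_of_all _ hinner)]
  calc ∫ x in {x | x ∈ Set.Icc (0:ℝ) a ∧ c < f x}, f x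
      = (∫⁻ t in Set.Ioi (0:ℝ), mm a f (max c t)).toReal := hLHS
    _ = (∫⁻ t in Set.Ioi (0:ℝ), min (ENNReal.ofReal b) (mm a f t)).toReal := by
        congr 1
        exact setLIntegral_congr_fun_ae measurableSet_Ioi (ae_of_all _ hpt)
    _ = ∫ x in Set.Icc (0:ℝ) b, rearr a f x := by rw [hRHS1, hRHS2, hswap]
end

section
/- Let (b_l, b_u) be the largest open interval containing b on which f* is constant, and let S ⊆ {x : f(x) = f*(b)}. Then for any δ ∈ ℝ, ∫₀^a f(x)·(𝟙_{{f(x) > f*(b)}}(x) + δ·𝟙_S(x)) dx = δ·f*(b)·μ(S) + ∫₀^{b_l} f*(x) dx. -/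
open MeasureTheory Set ENNReal

namespace Stmt12

noncomputable def nu (a : ℝ) (f : ℝ → ℝ) (t : ℝ) : ℝ≥0∞ :=
  volume {y ∈ Set.Icc (0:ℝ) a | t < f y}

lemma nu_fin (a : ℝ) (f : ℝ → ℝ) (t : ℝ) : nu a f t ≠ ⊤ := by
  have h : nu a f t ≤ volume (Set.Icc (0:ℝ) a) := measure_mono (sep_subset _ _)
  refine ne_top_of_le_ne_top ?_ h
  simp [Real.volume_Icc]

lemma nu_anti (a : ℝ) (f : ℝ → ℝ) : Antitone (nu a f) := fun s t hst =>
  measure_mono fun y hy => ⟨hy.1, lt_of_le_of_lt hst hy.2⟩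

/-- `g t = (nu a f t).toReal` -/
noncomputable def g (a : ℝ) (f : ℝ → ℝ) (t : ℝ) : ℝ := (nu a f t).toReal

lemma g_anti (a : ℝ) (f : ℝ → ℝ) : Antitone (g a f) := fun s t hst =>
  (ENNReal.toReal_le_toReal (nu_fin a f t) (nu_fin a f s)).mpr (nu_anti a f hst)

lemma g_nonneg (a : ℝ) (f : ℝ → ℝ) (t : ℝ) : 0 ≤ g a f t := ENNReal.toReal_nonneg

lemma g_measurable (a : ℝ) (f : ℝ → ℝ) : Measurable (g a f) := (g_anti a f).measurable

/-- the set `T_x` -/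
def T (a : ℝ) (f : ℝ → ℝ) (x : ℝ) : Set ℝ := {t | 0 < t ∧ x ≤ g a f t}

lemma T_eq (a : ℝ) (f : ℝ → ℝ) (x : ℝ) : T a f x = {t | x ≤ g a f t} ∩ Set.Ioi 0 := by
  ext t; simp only [T, mem_setOf_eq, mem_inter_iff, mem_Ioi]; tauto

lemma T_meas (a : ℝ) (f : ℝ → ℝ) (x : ℝ) : MeasurableSet (T a f x) := by
  rw [T_eq]
  exact (measurableSet_le measurable_const (g_measurable a f)).inter measurableSet_Ioi

lemma T_anti (a : ℝ) (f : ℝ → ℝ) : Antitone (fun x => T a f x) := by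
  intro x y hxy t ht
  exact ⟨ht.1, hxy.trans ht.2⟩

lemma nu_eq_zero (a M : ℝ) (f : ℝ → ℝ) (hM : ∀ y ∈ Set.Icc (0:ℝ) a, f y ≤ M) {t : ℝ}
    (ht : M ≤ t) : nu a f t = 0 := by
  have h : {y ∈ Set.Icc (0:ℝ) a | t < f y} = ∅ := by
    ext y
    simp only [mem_sep_iff, mem_empty_iff_false, iff_false, not_and]
    intro hy hlt
    exact absurd hlt (not_lt.mpr ((hM y hy).trans ht))
  rw [nu, h, measure_empty]

lemma T_subset (a M : ℝ) (f : ℝ → ℝ) (hM : ∀ y ∈ Set.Icc (0:ℝ) a, f y ≤ M) {x : ℝ}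
    (hx : 0 < x) : T a f x ⊆ Set.Ioc 0 M := by
  rintro t ⟨ht0, htx⟩
  refine ⟨ht0, ?_⟩
  by_contra h
  push_neg at h
  rw [show g a f t = 0 by simp [g, nu_eq_zero a M f hM h.le]] at htx
  exact absurd htx (not_le.mpr hx)

lemma T_vol_fin (a M : ℝ) (f : ℝ → ℝ) (hM : ∀ y ∈ Set.Icc (0:ℝ) a, f y ≤ M) {x : ℝ}
    (hx : 0 < x) : volume (T a f x) ≠ ⊤ := by
  refine ne_top_of_le_ne_top ?_ (measure_mono (T_subset a M f hM hx))
  simp [Real.volume_Ioc]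

lemma rearr_eq (a M : ℝ) (f : ℝ → ℝ) (hM : ∀ y ∈ Set.Icc (0:ℝ) a, f y ≤ M) {x : ℝ}
    (hx : 0 < x) : rearr a f x = (volume (T a f x)).toReal := by
  have h1 : EqOn (fun t => Set.indicator (Set.Icc (0:ℝ) (g a f t)) (fun _ => (1:ℝ)) x)
      (Set.indicator {s | x ≤ g a f s} (fun _ => (1:ℝ))) (Set.Ioi 0) := by
    intro t _
    by_cases h : x ≤ g a f t
    · have h2 : t ∈ {s | x ≤ g a f s} := h
      rw [Set.indicator_of_mem h2]
      have h3 : x ∈ Set.Icc 0 (g a f t) := ⟨hx.le, h⟩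
      exact Set.indicator_of_mem h3 _
    · have h2 : t ∉ {s | x ≤ g a f s} := h
      rw [Set.indicator_of_notMem h2]
      have h3 : x ∉ Set.Icc 0 (g a f t) := fun hm => h hm.2
      exact Set.indicator_of_notMem h3 _
  calc rearr a f x = ∫ t in Set.Ioi (0:ℝ),
        Set.indicator {s | x ≤ g a f s} (fun _ => (1:ℝ)) t :=
        setIntegral_congr_fun measurableSet_Ioi h1
    _ = (volume (T a f x)).toReal := by
        rw [MeasureTheory.integral_indicator (measurableSet_le measurable_const
          (g_measurable a f)), Measure.restrict_restrict (measurableSet_le measurable_const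
          (g_measurable a f)), ← T_eq, MeasureTheory.setIntegral_const, smul_eq_mul, mul_one, measureReal_def]

lemma rearr_nonneg (a : ℝ) (f : ℝ → ℝ) (x : ℝ) : 0 ≤ rearr a f x := by
  refine integral_nonneg fun t => ?_
  exact Set.indicator_apply_nonneg fun _ => zero_le_one

lemma rearr_nonpos (a : ℝ) (f : ℝ → ℝ) {x : ℝ} (hx : x ≤ 0) : rearr a f x = 0 := by
  rcases lt_or_eq_of_le hx with h | h
  · have h0 : ∀ t : ℝ, Set.indicator (Set.Icc (0:ℝ)
        ((volume {y ∈ Set.Icc (0:ℝ) a | t < f y}).toReal)) (fun _ => (1:ℝ)) x = 0 := by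
      intro t
      exact Set.indicator_of_notMem (fun hm => absurd hm.1 (not_le.mpr h)) _
    simp only [rearr, h0, integral_zero]
  · subst h
    have h1 : ∀ t : ℝ, Set.indicator (Set.Icc (0:ℝ)
        ((volume {y ∈ Set.Icc (0:ℝ) a | t < f y}).toReal)) (fun _ => (1:ℝ)) (0:ℝ)
        = (1:ℝ) := by
      intro t
      have hm : (0:ℝ) ∈ Set.Icc (0:ℝ) ((volume {y ∈ Set.Icc (0:ℝ) a | t < f y}).toReal) :=
        ⟨le_refl 0, ENNReal.toReal_nonneg⟩
      exact Set.indicator_of_mem hm _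
    rw [rearr]
    simp only [h1]
    rw [integral_undef]
    intro hint
    rw [integrable_const_iff] at hint
    rcases hint with h' | h'
    · exact one_ne_zero h'
    · have h' := h'.measure_univ_lt_top
      rw [Measure.restrict_apply_univ, Real.volume_Ioi] at h'
      exact (lt_irrefl _ h').elim

lemma rearr_ge (a M : ℝ) (f : ℝ → ℝ) (hM : ∀ y ∈ Set.Icc (0:ℝ) a, f y ≤ M) {x s : ℝ}
    (hx : 0 < x) (hs : 0 < s) (hxs : x ≤ g a f s) : s ≤ rearr a f x := by
  rw [rearr_eq a M f hM hx]
  have hsub : Set.Ioc 0 s ⊆ T a f x := by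
    rintro t ⟨ht0, hts⟩
    exact ⟨ht0, hxs.trans (g_anti a f hts)⟩
  have h1 : ENNReal.ofReal s ≤ volume (T a f x) := by
    calc ENNReal.ofReal s = volume (Set.Ioc (0:ℝ) s) := by simp [Real.volume_Ioc]
      _ ≤ volume (T a f x) := measure_mono hsub
  calc s = (ENNReal.ofReal s).toReal := by rw [ENNReal.toReal_ofReal hs.le]
    _ ≤ (volume (T a f x)).toReal :=
      (ENNReal.toReal_le_toReal (by simp) (T_vol_fin a M f hM hx)).mpr h1

lemma rearr_le (a M : ℝ) (f : ℝ → ℝ) (hM : ∀ y ∈ Set.Icc (0:ℝ) a, f y ≤ M) {x s : ℝ}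
    (hx : 0 < x) (hs : 0 ≤ s) (h : ∀ t, s < t → g a f t < x) : rearr a f x ≤ s := by
  rw [rearr_eq a M f hM hx]
  have hsub : T a f x ⊆ Set.Ioc 0 s := by
    rintro t ⟨ht0, htx⟩
    refine ⟨ht0, ?_⟩
    by_contra hc
    push_neg at hc
    exact absurd htx (not_le.mpr (h t hc))
  calc (volume (T a f x)).toReal ≤ (volume (Set.Ioc (0:ℝ) s)).toReal :=
      (ENNReal.toReal_le_toReal (T_vol_fin a M f hM hx) (by simp [Real.volume_Ioc])).mpr
        (measure_mono hsub)
    _ = s := by simp [Real.volume_Ioc, hs]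

lemma rearr_anti (a M : ℝ) (f : ℝ → ℝ) (hM : ∀ y ∈ Set.Icc (0:ℝ) a, f y ≤ M) {x y : ℝ}
    (hx : 0 < x) (hxy : x ≤ y) : rearr a f y ≤ rearr a f x := by
  have hy : 0 < y := lt_of_lt_of_le hx hxy
  rw [rearr_eq a M f hM hx, rearr_eq a M f hM hy]
  exact (ENNReal.toReal_le_toReal (T_vol_fin a M f hM hy) (T_vol_fin a M f hM hx)).mpr
    (measure_mono (T_anti a f hxy))

lemma exists_gt (a : ℝ) (f : ℝ → ℝ) (hmf : Measurable f) {c x : ℝ} (hx : 0 ≤ x)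
    (hxd : x < g a f c) : ∃ t, c < t ∧ x ≤ g a f t := by
  have hU : {y ∈ Set.Icc (0:ℝ) a | c < f y}
      = ⋃ n : ℕ, {y ∈ Set.Icc (0:ℝ) a | c + 1/(n+1) < f y} := by
    ext y
    simp only [mem_sep_iff, mem_iUnion]
    constructor
    · rintro ⟨hy, hlt⟩
      obtain ⟨n, hn⟩ := exists_nat_one_div_lt (sub_pos.mpr hlt)
      exact ⟨n, hy, by linarith [hn]⟩
    · rintro ⟨n, hy, hlt⟩
      have : (0:ℝ) < 1/(n+1) := by positivity
      exact ⟨hy, by linarith⟩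
  have hmono : Monotone fun n : ℕ => {y ∈ Set.Icc (0:ℝ) a | c + 1/(n+1) < f y} := by
    intro m n hmn y hy
    refine ⟨hy.1, lt_of_le_of_lt ?_ hy.2⟩
    have hm : (0:ℝ) < (m:ℝ)+1 := by positivity
    have hn : (m:ℝ)+1 ≤ (n:ℝ)+1 := by exact_mod_cast by omega
    gcongr
  have hkey : nu a f c = ⨆ n : ℕ, nu a f (c + 1/(n+1)) := by
    rw [nu, hU, hmono.directed_le.measure_iUnion]
    rfl
  have hlt : ENNReal.ofReal x < nu a f c :=
    (ENNReal.ofReal_lt_iff_lt_toReal hx (nu_fin a f c)).mpr hxd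
  rw [hkey, lt_iSup_iff] at hlt
  obtain ⟨n, hn⟩ := hlt
  have hpos : (0:ℝ) < 1/((n:ℝ)+1) := by positivity
  refine ⟨c + 1/(n+1), by linarith, ?_⟩
  have := (ENNReal.ofReal_lt_iff_lt_toReal hx (nu_fin a f (c + 1/(n+1)))).mp hn
  exact this.le

end Stmt12

open Stmt12 in
theorem stmt12 (a : ℝ) (ha : 0 < a) (f : ℝ → ℝ) (hmf : Measurable f)
    (hnn : ∀ x ∈ Set.Icc (0:ℝ) a, 0 ≤ f x)
    (hbd : ∃ M : ℝ, ∀ x ∈ Set.Icc (0:ℝ) a, f x ≤ M) (b bl bu δ : ℝ) (hbl : bl < b) (hbu : b < bu)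
    (hconst : ∀ x ∈ Set.Ioo bl bu, rearr a f x = rearr a f b)
    (hmax : ∀ l r : ℝ, l < b → b < r → (∀ x ∈ Set.Ioo l r, rearr a f x = rearr a f b) →
      bl ≤ l ∧ r ≤ bu)
    (S : Set ℝ) (hS : MeasurableSet S)
    (hSsub : S ⊆ {x ∈ Set.Icc (0:ℝ) a | f x = rearr a f b}) :
    ∫ x in Set.Icc (0:ℝ) a,
        f x * (Set.indicator {y | rearr a f b < f y} (fun _ => (1:ℝ)) x
                + δ * Set.indicator S (fun _ => (1:ℝ)) x)
      = δ * rearr a f b * (volume S).toReal + ∫ x in Set.Icc (0:ℝ) bl, rearr a f x := by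
  obtain ⟨M, hM⟩ := hbd
  set c := rearr a f b with hc_def
  have hc0 : 0 ≤ c := rearr_nonneg a f b
  have hbu0' : bl < bu := hbl.trans hbu
  -- b > 0
  have hb0 : 0 < b := by
    by_contra hb
    push_neg at hb
    have hcz : c = 0 := rearr_nonpos a f hb
    have hkey : ∀ x ∈ Set.Ioo (bl-1) bu, rearr a f x = c := by
      intro x hx
      rcases le_or_gt x 0 with h | h
      · rw [rearr_nonpos a f h, hcz]
      · exact hconst x ⟨by linarith, hx.2⟩
    have := (hmax (bl-1) bu (by linarith) hbu hkey).1
    linarith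
  have hbu0 : 0 < bu := hb0.trans hbu
  set d := g a f c with hd_def
  have hd0 : 0 ≤ d := g_nonneg a f c
  -- d ≤ b
  have hdb : d ≤ b := by
    by_contra hcon
    push_neg at hcon
    obtain ⟨t, htc, htg⟩ := exists_gt a f hmf hb0.le hcon
    have := rearr_ge a M f hM hb0 (hc0.trans_lt htc) htg
    rw [← hc_def] at this
    linarith
  -- d ≤ bl
  have hdbl : d ≤ bl := by
    by_contra hcon
    push_neg at hcon
    rcases lt_or_ge 0 d with hd | hd
    · set x := (max bl 0 + min d bu)/2 with hx_def
      have h1 : max bl 0 < min d bu := max_lt (lt_min hcon hbu0') (lt_min hd hbu0)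
      have hxl : max bl 0 < x := by rw [hx_def]; linarith
      have hxr : x < min d bu := by rw [hx_def]; linarith
      have hx0 : 0 < x := lt_of_le_of_lt (le_max_right bl 0) hxl
      have hxd : x < d := lt_of_lt_of_le hxr (min_le_left d bu)
      have hxc : rearr a f x = c :=
        hconst x ⟨lt_of_le_of_lt (le_max_left bl 0) hxl, lt_of_lt_of_le hxr (min_le_right d bu)⟩
      obtain ⟨t, htc, htg⟩ := exists_gt a f hmf hx0.le hxd
      have := rearr_ge a M f hM hx0 (hc0.trans_lt htc) htg
      rw [hxc] at this
      linarith
    · have hdz : d = 0 := le_antisymm hd hd0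
      have hblneg : bl < 0 := by linarith
      have hcz : c = 0 := by
        have h2 : rearr a f (bl/2) = c := hconst (bl/2) ⟨by linarith, by linarith⟩
        rw [rearr_nonpos a f (by linarith : bl/2 ≤ 0)] at h2
        exact h2.symm
      have hkey : ∀ x ∈ Set.Ioo (bl-1) bu, rearr a f x = c := by
        intro x hx
        rcases le_or_gt x 0 with h | h
        · rw [rearr_nonpos a f h, hcz]
        · have hle : rearr a f x ≤ 0 := by
            refine rearr_le a M f hM h le_rfl fun t ht => ?_
            have : g a f t ≤ g a f c := g_anti a f (by linarith)
            rw [← hd_def, hdz] at this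
            linarith
          rw [hcz]
          exact le_antisymm hle (rearr_nonneg a f x)
      have := (hmax (bl-1) bu (by linarith) hbu hkey).1
      linarith
  have hbl0 : 0 ≤ bl := hd0.trans hdbl
  have hdb' : d < b := lt_of_le_of_lt hdbl hbl
  -- bl ≤ d
  have hbld : bl ≤ d := by
    refine (hmax d bu hdb' hbu fun x hx => ?_).1
    have hx0 : 0 < x := lt_of_le_of_lt hd0 hx.1
    have hle : rearr a f x ≤ c := by
      refine rearr_le a M f hM hx0 hc0 fun t ht => ?_
      exact lt_of_le_of_lt (g_anti a f ht.le) hx.1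
    have hge : c ≤ rearr a f x := by
      rcases lt_or_ge bl x with h | h
      · exact (hconst x ⟨h, hx.2⟩).ge
      · exact rearr_anti a M f hM hx0 (h.trans hbl.le)
    exact le_antisymm hle hge
  have hbl_eq : bl = d := le_antisymm hbld hdbl
  clear hconst hmax hdb hdbl hbld hdb' hbl hbu hbu0' hbu0
  subst hbl_eq
  -- the set A
  set A : Set ℝ := {y | c < f y} with hA_def
  have hAmeas : MeasurableSet A := measurableSet_lt measurable_const hmf
  have hIccfin : volume (Set.Icc (0:ℝ) a) ≠ ⊤ := by simp [Real.volume_Icc]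
  have hSfin : volume S ≠ ⊤ :=
    ne_top_of_le_ne_top hIccfin (measure_mono fun x hx => (hSsub hx).1)
  -- pointwise rewriting of the integrand
  have hpt : ∀ x : ℝ, f x * (Set.indicator A (fun _ => (1:ℝ)) x
      + δ * Set.indicator S (fun _ => (1:ℝ)) x)
      = Set.indicator A f x + δ * Set.indicator S f x := by
    intro x
    simp only [Set.indicator]
    split_ifs <;> ring
  -- integrability
  have hbound : ∀ U : Set ℝ, MeasurableSet U →
      IntegrableOn (Set.indicator U f) (Set.Icc (0:ℝ) a) volume := by
    intro U hU
    refine Integrable.mono' (g := fun _ => max M 0)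
      ((integrableOn_const_iff (C := max M 0)).mpr (Or.inr (lt_top_iff_ne_top.mpr hIccfin)))
      ((hmf.indicator hU).aestronglyMeasurable) ?_
    refine (ae_restrict_iff' measurableSet_Icc).mpr (Filter.Eventually.of_forall fun x hx => ?_)
    by_cases hxu : x ∈ U
    · rw [Set.indicator_of_mem hxu, Real.norm_eq_abs, abs_of_nonneg (hnn x hx)]
      exact le_max_of_le_left (hM x hx)
    · rw [Set.indicator_of_notMem hxu, norm_zero]
      exact le_max_right M 0
  have hi1 : IntegrableOn (Set.indicator A f) (Set.Icc (0:ℝ) a) volume := hbound A hAmeas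
  have hi2 : IntegrableOn (Set.indicator S f) (Set.Icc (0:ℝ) a) volume := hbound S hS
  -- the S part
  have hSpart : ∫ x in Set.Icc (0:ℝ) a, Set.indicator S f x = c * (volume S).toReal := by
    rw [MeasureTheory.integral_indicator hS, Measure.restrict_restrict hS,
      Set.inter_eq_self_of_subset_left (fun x hx => (hSsub hx).1)]
    calc ∫ x in S, f x = ∫ _x in S, c := setIntegral_congr_fun hS fun x hx => (hSsub hx).2
      _ = c * (volume S).toReal := by rw [setIntegral_const, smul_eq_mul, mul_comm, measureReal_def]
  -- the key lintegral
  set K : ℝ≥0∞ := ∫⁻ t in Set.Ioi (0:ℝ), nu a f (max c t) with hK_def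
  -- LHS layer cake
  have hlhs : ∫ x in Set.Icc (0:ℝ) a, Set.indicator A f x = K.toReal := by
    have hnnA : 0 ≤ᵐ[volume.restrict (Set.Icc (0:ℝ) a)] Set.indicator A f :=
      Filter.Eventually.of_forall fun x =>
        Set.indicator_apply_nonneg fun hx => le_of_lt (lt_of_le_of_lt hc0 hx)
    rw [integral_eq_lintegral_of_nonneg_ae hnnA (hmf.indicator hAmeas).aestronglyMeasurable,
      lintegral_eq_lintegral_meas_lt _ hnnA (hmf.indicator hAmeas).aemeasurable]
    congr 1
    refine setLIntegral_congr_fun measurableSet_Ioi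
      (fun t ht => ?_)
    rw [Measure.restrict_apply (measurableSet_lt measurable_const (hmf.indicator hAmeas))]
    congr 1
    ext x
    simp only [mem_inter_iff, mem_setOf_eq, mem_sep_iff]
    constructor
    · rintro ⟨hlt, hxI⟩
      by_cases hxA : x ∈ A
      · rw [Set.indicator_of_mem hxA] at hlt
        exact ⟨hxI, max_lt hxA hlt⟩
      · rw [Set.indicator_of_notMem hxA] at hlt
        exact absurd hlt (not_lt.mpr (le_of_lt ht))
    · rintro ⟨hxI, hmx⟩
      have h1 : c < f x := lt_of_le_of_lt (le_max_left c t) hmx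
      have h2 : t < f x := lt_of_le_of_lt (le_max_right c t) hmx
      have hxA : x ∈ A := h1
      refine ⟨?_, hxI⟩
      rw [Set.indicator_of_mem hxA]
      exact h2
  -- RHS layer cake
  have hrhs : ∫ x in Set.Icc (0:ℝ) d, rearr a f x = K.toReal := by
    have hvolT_anti : Antitone fun x => volume (T a f x) :=
      fun x y hxy => measure_mono (T_anti a f hxy)
    have hφmeas : Measurable fun x => volume (T a f x) := hvolT_anti.measurable
    have h0 : ∀ᵐ x : ℝ ∂volume, x ≠ 0 := by
      rw [ae_iff]
      have hset : {x : ℝ | ¬x ≠ 0} = {0} := by ext x; simp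
      rw [hset]
      exact Real.volume_singleton
    have haeeq : ∀ᵐ x ∂(volume.restrict (Set.Icc (0:ℝ) d)),
        rearr a f x = (volume (T a f x)).toReal := by
      filter_upwards [ae_restrict_mem measurableSet_Icc, ae_restrict_of_ae h0] with x hx hx0
      exact rearr_eq a M f hM (lt_of_le_of_ne hx.1 (Ne.symm hx0))
    have hmeasR : AEStronglyMeasurable (rearr a f) (volume.restrict (Set.Icc (0:ℝ) d)) :=
      (hφmeas.ennreal_toReal.aestronglyMeasurable).congr (haeeq.mono fun x hx => hx.symm)
    rw [integral_eq_lintegral_of_nonneg_ae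
      (Filter.Eventually.of_forall fun x => rearr_nonneg a f x) hmeasR]
    congr 1
    have haeeq2 : ∀ᵐ x ∂(volume.restrict (Set.Icc (0:ℝ) d)),
        ENNReal.ofReal (rearr a f x) = volume (T a f x) := by
      filter_upwards [ae_restrict_mem measurableSet_Icc, ae_restrict_of_ae h0] with x hx hx0
      have hx0' : 0 < x := lt_of_le_of_ne hx.1 (Ne.symm hx0)
      rw [rearr_eq a M f hM hx0', ENNReal.ofReal_toReal (T_vol_fin a M f hM hx0')]
    rw [lintegral_congr_ae haeeq2]
    -- express as double integral and swap
    have hgset : MeasurableSet {p : ℝ × ℝ | p.1 ≤ g a f p.2} :=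
      measurableSet_le measurable_fst ((g_measurable a f).comp measurable_snd)
    have hTvol : ∀ x : ℝ, volume (T a f x)
        = ∫⁻ t in Set.Ioi (0:ℝ),
            Set.indicator {p : ℝ × ℝ | p.1 ≤ g a f p.2} (fun _ => (1:ℝ≥0∞)) (x, t) := by
      intro x
      have hxt : ∀ t : ℝ, Set.indicator {p : ℝ × ℝ | p.1 ≤ g a f p.2} (fun _ => (1:ℝ≥0∞)) (x, t)
          = Set.indicator {s : ℝ | x ≤ g a f s} (fun _ => (1:ℝ≥0∞)) t := by
        intro t
        by_cases h : x ≤ g a f t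
        · have hm1 : (x, t) ∈ {p : ℝ × ℝ | p.1 ≤ g a f p.2} := h
          have hm2 : t ∈ {s : ℝ | x ≤ g a f s} := h
          rw [Set.indicator_of_mem hm1, Set.indicator_of_mem hm2]
        · have hm1 : (x, t) ∉ {p : ℝ × ℝ | p.1 ≤ g a f p.2} := h
          have hm2 : t ∉ {s : ℝ | x ≤ g a f s} := h
          rw [Set.indicator_of_notMem hm1, Set.indicator_of_notMem hm2]
      simp only [hxt]
      rw [lintegral_indicator (measurableSet_le measurable_const (g_measurable a f)),
        setLIntegral_one, Measure.restrict_apply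
          (measurableSet_le measurable_const (g_measurable a f)), ← T_eq]
    simp only [hTvol]
    rw [lintegral_lintegral_swap]
    swap
    · exact (measurable_const.indicator hgset).comp
        (measurable_fst.prodMk measurable_snd) |>.aemeasurable
    -- compute the inner integral
    have hinner : ∀ t : ℝ,
        (∫⁻ x in Set.Icc (0:ℝ) d,
          Set.indicator {p : ℝ × ℝ | p.1 ≤ g a f p.2} (fun _ => (1:ℝ≥0∞)) (x, t))
        = ENNReal.ofReal (min d (g a f t)) := by
      intro t
      have hxt : ∀ x : ℝ, Set.indicator {p : ℝ × ℝ | p.1 ≤ g a f p.2} (fun _ => (1:ℝ≥0∞)) (x, t)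
          = Set.indicator (Set.Iic (g a f t)) (fun _ => (1:ℝ≥0∞)) x := by
        intro x
        by_cases h : x ≤ g a f t
        · have hm1 : (x, t) ∈ {p : ℝ × ℝ | p.1 ≤ g a f p.2} := h
          have hm2 : x ∈ Set.Iic (g a f t) := h
          rw [Set.indicator_of_mem hm1, Set.indicator_of_mem hm2]
        · have hm1 : (x, t) ∉ {p : ℝ × ℝ | p.1 ≤ g a f p.2} := h
          have hm2 : x ∉ Set.Iic (g a f t) := h
          rw [Set.indicator_of_notMem hm1, Set.indicator_of_notMem hm2]
      simp only [hxt]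
      rw [lintegral_indicator measurableSet_Iic, setLIntegral_one,
        Measure.restrict_apply measurableSet_Iic]
      have hseteq : Set.Iic (g a f t) ∩ Set.Icc (0:ℝ) d = Set.Icc 0 (min d (g a f t)) := by
        ext x
        simp only [mem_inter_iff, mem_Iic, mem_Icc, le_min_iff]
        tauto
      rw [hseteq, Real.volume_Icc, sub_zero]
    simp only [hinner]
    -- identify with K
    refine (setLIntegral_congr_fun measurableSet_Ioi
      (fun t ht => ?_)).symm
    rcases le_total t c with h | h
    · have h1 : max c t = c := max_eq_left h
      have h2 : d ≤ g a f t := g_anti a f h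
      rw [h1, min_eq_left h2, hd_def, g, ENNReal.ofReal_toReal (nu_fin a f c)]
    · have h1 : max c t = t := max_eq_right h
      have h2 : g a f t ≤ d := g_anti a f h
      rw [h1, min_eq_right h2, g, ENNReal.ofReal_toReal (nu_fin a f t)]
  -- putting it together
  calc ∫ x in Set.Icc (0:ℝ) a,
        f x * (Set.indicator A (fun _ => (1:ℝ)) x + δ * Set.indicator S (fun _ => (1:ℝ)) x)
      = ∫ x in Set.Icc (0:ℝ) a, (Set.indicator A f x + δ * Set.indicator S f x) :=
        setIntegral_congr_fun measurableSet_Icc fun x _ => hpt x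
    _ = (∫ x in Set.Icc (0:ℝ) a, Set.indicator A f x)
        + δ * ∫ x in Set.Icc (0:ℝ) a, Set.indicator S f x := by
        rw [integral_add hi1 (hi2.const_mul δ), integral_const_mul]
    _ = δ * c * (volume S).toReal + ∫ x in Set.Icc (0:ℝ) d, rearr a f x := by
        rw [hSpart, hlhs, hrhs]
        ring
end

section
/- Let g : [0,a] → ℝ be a non-increasing integrable function and b ∈ (0,a). Then for every measurable γ : [0,a] → [0,1] with ∫₀^a γ(t) dt = b, one has ∫₀^a γ(t) g(t) dt ≤ ∫₀^b g(t) dt. -/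
open MeasureTheory Set

theorem stmt13 (a b : ℝ) (hb : b ∈ Set.Ioo 0 a) (g : ℝ → ℝ)
    (hg : AntitoneOn g (Set.Icc 0 a)) (hgi : IntegrableOn g (Set.Icc 0 a))
    (γ : ℝ → ℝ) (hmγ : Measurable γ) (hγ : ∀ t ∈ Set.Icc (0:ℝ) a, γ t ∈ Set.Icc (0:ℝ) 1)
    (hint : ∫ t in Set.Icc (0:ℝ) a, γ t = b) :
    ∫ t in Set.Icc (0:ℝ) a, γ t * g t ≤ ∫ t in Set.Icc (0:ℝ) b, g t := by
  obtain ⟨hb0, hba⟩ := hb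
  set c := g b with hc
  have hsub : Icc (0:ℝ) b ⊆ Icc 0 a := Icc_subset_Icc le_rfl hba.le
  have hbm : b ∈ Icc (0:ℝ) a := ⟨hb0.le, hba.le⟩
  have hγm : AEStronglyMeasurable γ (volume.restrict (Icc (0:ℝ) a)) :=
    hmγ.aestronglyMeasurable
  have hγae : ∀ᵐ t ∂(volume.restrict (Icc (0:ℝ) a)), γ t ∈ Icc (0:ℝ) 1 :=
    (ae_restrict_iff' measurableSet_Icc).2 (ae_of_all _ hγ)
  have hγi : IntegrableOn γ (Icc 0 a) := by
    apply Integrable.mono' (integrable_const 1) hγm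
    filter_upwards [hγae] with t ht
    rw [Real.norm_eq_abs, abs_of_nonneg ht.1]; exact ht.2
  have hγgi : IntegrableOn (fun t => γ t * g t) (Icc 0 a) := by
    apply Integrable.mono' hgi.norm (hγm.mul hgi.aestronglyMeasurable)
    filter_upwards [hγae] with t ht
    simp only [Pi.mul_apply, Real.norm_eq_abs, abs_mul]
    calc |γ t| * |g t| ≤ 1 * |g t| := by
          apply mul_le_mul_of_nonneg_right _ (abs_nonneg _)
          rw [abs_of_nonneg ht.1]; exact ht.2
      _ = ‖g t‖ := by simp [Real.norm_eq_abs]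
  have hχgi : IntegrableOn (fun t => (Icc (0:ℝ) b).indicator g t) (Icc 0 a) := by
    rw [IntegrableOn, integrable_indicator_iff measurableSet_Icc, IntegrableOn,
      Measure.restrict_restrict measurableSet_Icc, inter_eq_left.2 hsub]
    exact hgi.mono_set hsub
  have hχi : IntegrableOn (fun t => (Icc (0:ℝ) b).indicator (fun _ => (1:ℝ)) t) (Icc 0 a) := by
    rw [IntegrableOn, integrable_indicator_iff measurableSet_Icc, IntegrableOn,
      Measure.restrict_restrict measurableSet_Icc, inter_eq_left.2 hsub]
    exact integrableOn_const (by simp [Real.volume_Icc])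
  -- key pointwise inequality
  have key : ∫ t in Icc (0:ℝ) a,
      (γ t - (Icc (0:ℝ) b).indicator (fun _ => (1:ℝ)) t) * (g t - c) ≤ 0 := by
    apply setIntegral_nonpos measurableSet_Icc
    intro t ht
    by_cases htb : t ∈ Icc (0:ℝ) b
    · have h1 : γ t - 1 ≤ 0 := sub_nonpos.2 (hγ t ht).2
      have h2 : 0 ≤ g t - c := sub_nonneg.2 (hg ⟨ht.1, le_trans htb.2 hba.le⟩ hbm htb.2)
      rw [indicator_of_mem htb]
      exact mul_nonpos_of_nonpos_of_nonneg h1 h2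
    · have hbt : b ≤ t := le_of_not_ge fun h => htb ⟨ht.1, h⟩
      have h1 : 0 ≤ γ t := (hγ t ht).1
      have h2 : g t - c ≤ 0 := sub_nonpos.2 (hg hbm ht hbt)
      rw [indicator_of_notMem htb]
      simpa using mul_nonpos_of_nonneg_of_nonpos h1 h2
  -- expand the integral
  have hχg : ∫ t in Icc (0:ℝ) a, (Icc (0:ℝ) b).indicator g t = ∫ t in Icc (0:ℝ) b, g t := by
    rw [setIntegral_indicator measurableSet_Icc, inter_eq_right.2 hsub]
  have hχ1 : ∫ t in Icc (0:ℝ) a, (Icc (0:ℝ) b).indicator (fun _ => (1:ℝ)) t = b := by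
    rw [setIntegral_indicator measurableSet_Icc, inter_eq_right.2 hsub]
    simp [Real.volume_Icc, hb0.le]
  have expand : ∫ t in Icc (0:ℝ) a,
      (γ t - (Icc (0:ℝ) b).indicator (fun _ => (1:ℝ)) t) * (g t - c)
      = (∫ t in Icc (0:ℝ) a, γ t * g t) - (∫ t in Icc (0:ℝ) b, g t)
        - c * b + c * b := by
    have : ∀ t, (γ t - (Icc (0:ℝ) b).indicator (fun _ => (1:ℝ)) t) * (g t - c)
        = γ t * g t - (Icc (0:ℝ) b).indicator g t - c * γ t
          + c * (Icc (0:ℝ) b).indicator (fun _ => (1:ℝ)) t := by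
      intro t
      by_cases htb : t ∈ Icc (0:ℝ) b <;>
        simp [indicator, htb] <;> ring
    have iA : Integrable (fun t => γ t * g t) (volume.restrict (Icc (0:ℝ) a)) := hγgi
    have iB : Integrable (fun t => (Icc (0:ℝ) b).indicator g t)
        (volume.restrict (Icc (0:ℝ) a)) := hχgi
    have iC : Integrable (fun t => c * γ t) (volume.restrict (Icc (0:ℝ) a)) :=
      hγi.const_mul c
    have iD : Integrable (fun t => c * (Icc (0:ℝ) b).indicator (fun _ => (1:ℝ)) t)
        (volume.restrict (Icc (0:ℝ) a)) := hχi.const_mul c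
    have iAB : Integrable (fun t => γ t * g t - (Icc (0:ℝ) b).indicator g t)
        (volume.restrict (Icc (0:ℝ) a)) := iA.sub iB
    have iABC : Integrable (fun t => γ t * g t - (Icc (0:ℝ) b).indicator g t - c * γ t)
        (volume.restrict (Icc (0:ℝ) a)) := iAB.sub iC
    rw [show (fun t => (γ t - (Icc (0:ℝ) b).indicator (fun _ => (1:ℝ)) t) * (g t - c))
        = fun t => γ t * g t - (Icc (0:ℝ) b).indicator g t - c * γ t
          + c * (Icc (0:ℝ) b).indicator (fun _ => (1:ℝ)) t from funext this]
    rw [integral_add iABC iD, integral_sub iAB iC, integral_sub iA iB,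
      integral_const_mul, integral_const_mul, hint, hχg, hχ1]
  rw [expand] at key
  linarith
end

section
/- Let g : [0,a] → ℝ be non-increasing and integrable, b ∈ (0,a), and suppose g is strictly decreasing either to the right or from the left at x = b. Then the unique (up to almost-everywhere equality) maximizer of ∫₀^a γ(t) g(t) dt over measurable γ : [0,a] → [0,1] with ∫₀^a γ = b is γ = 𝟙_{[0,b]}. -/
open MeasureTheory Set

/-- From strict right decrease plus antitonicity: `g t < g b` for all `t ∈ (b, a]`. -/
lemma strictRight_lt (a b : ℝ) (hb : b ∈ Set.Ioo 0 a) {g : ℝ → ℝ}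
    (hg : AntitoneOn g (Set.Icc 0 a)) (h : StrictDecRightAt g b) :
    ∀ t ∈ Set.Ioc b a, g t < g b := by
  obtain ⟨ε₀, hε₀, hd⟩ := h
  intro t ht
  obtain ⟨hbt, hta⟩ := ht
  by_cases hc : t - b < ε₀
  · have := hd (t - b) (by linarith) hc
    simpa using this
  · set ε := min (ε₀ / 2) ((a - b) / 2) with hε
    have hεpos : 0 < ε := lt_min (by linarith) (by have := hb.2; linarith)
    have hεlt : ε < ε₀ := lt_of_le_of_lt (min_le_left _ _) (by linarith)
    have h1 : g (b + ε) < g b := hd ε hεpos hεlt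
    have h2 : g t ≤ g (b + ε) := by
      apply hg
      · constructor
        · have := hb.1; linarith
        · have : ε ≤ (a - b) / 2 := min_le_right _ _
          linarith
      · exact ⟨by have := hb.1; linarith, hta⟩
      · push_neg at hc
        have : ε ≤ ε₀ / 2 := min_le_left _ _
        linarith
    linarith

/-- From strict left decrease plus antitonicity: `g b < g t` for all `t ∈ [0, b)`. -/
lemma strictLeft_gt (a b : ℝ) (hb : b ∈ Set.Ioo 0 a) {g : ℝ → ℝ}
    (hg : AntitoneOn g (Set.Icc 0 a)) (h : StrictDecLeftAt g b) :
    ∀ t ∈ Set.Ico 0 b, g b < g t := by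
  obtain ⟨ε₀, hε₀, hd⟩ := h
  intro t ht
  obtain ⟨h0t, htb⟩ := ht
  by_cases hc : b - t < ε₀
  · have := hd (b - t) (by linarith) hc
    simpa using this
  · set ε := min (ε₀ / 2) (b / 2) with hε
    have hεpos : 0 < ε := lt_min (by linarith) (by have := hb.1; linarith)
    have hεlt : ε < ε₀ := lt_of_le_of_lt (min_le_left _ _) (by linarith)
    have h1 : g b < g (b - ε) := hd ε hεpos hεlt
    have h2 : g (b - ε) ≤ g t := by
      apply hg
      · exact ⟨h0t, by have := hb.2; linarith⟩
      · constructor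
        · have : ε ≤ b / 2 := min_le_right _ _
          have := hb.1; linarith
        · have := hb.2; linarith
      · push_neg at hc
        have : ε ≤ ε₀ / 2 := min_le_left _ _
        linarith
    linarith

/-- If a nonnegative integrable function on a measurable set has zero integral, it is
a.e. zero on the set. -/
lemma aux_zero {f : ℝ → ℝ} {s : Set ℝ} (hs : MeasurableSet s) (hf : IntegrableOn f s)
    (hnn : ∀ t ∈ s, 0 ≤ f t) (hz : ∫ t in s, f t = 0) :
    ∀ᵐ t, t ∈ s → f t = 0 := by
  have h1 : 0 ≤ᶠ[ae (volume.restrict s)] f :=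
    (ae_restrict_iff' hs).2 (Filter.Eventually.of_forall hnn)
  have h2 := (integral_eq_zero_iff_of_nonneg_ae h1 hf).1 hz
  rw [← ae_restrict_iff' hs]
  filter_upwards [h2] with t ht using ht

theorem stmt14 (a b : ℝ) (hb : b ∈ Set.Ioo 0 a) (g : ℝ → ℝ)
    (hg : AntitoneOn g (Set.Icc 0 a)) (hgi : IntegrableOn g (Set.Icc 0 a))
    (hdec : StrictDecRightAt g b ∨ StrictDecLeftAt g b) :
    (∀ γ : ℝ → ℝ, Measurable γ → (∀ t ∈ Set.Icc (0:ℝ) a, γ t ∈ Set.Icc (0:ℝ) 1) →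
        (∫ t in Set.Icc (0:ℝ) a, γ t = b) →
        ∫ t in Set.Icc (0:ℝ) a, γ t * g t ≤ ∫ t in Set.Icc (0:ℝ) b, g t) ∧
    (∀ γ : ℝ → ℝ, Measurable γ → (∀ t ∈ Set.Icc (0:ℝ) a, γ t ∈ Set.Icc (0:ℝ) 1) →
        (∫ t in Set.Icc (0:ℝ) a, γ t = b) →
        (∫ t in Set.Icc (0:ℝ) a, γ t * g t = ∫ t in Set.Icc (0:ℝ) b, g t) →
        ∀ᵐ t ∂(volume.restrict (Set.Icc (0:ℝ) a)),
          γ t = Set.indicator (Set.Icc (0:ℝ) b) (fun _ => (1:ℝ)) t) := by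
  obtain ⟨hb0, hba⟩ := hb
  set ind : ℝ → ℝ := Set.indicator (Set.Icc (0:ℝ) b) (fun _ => (1:ℝ)) with hind_def
  have hsub : Set.Icc (0:ℝ) b ⊆ Set.Icc (0:ℝ) a := Set.Icc_subset_Icc le_rfl hba.le
  -- Key facts, uniform in γ.
  have key : ∀ γ : ℝ → ℝ, Measurable γ → (∀ t ∈ Set.Icc (0:ℝ) a, γ t ∈ Set.Icc (0:ℝ) 1) →
      (∫ t in Set.Icc (0:ℝ) a, γ t = b) →
      IntegrableOn (fun t => (γ t - ind t) * (g t - g b)) (Set.Icc 0 a) ∧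
      (∫ t in Set.Icc (0:ℝ) a, (γ t - ind t) * (g t - g b))
        = (∫ t in Set.Icc (0:ℝ) a, γ t * g t) - ∫ t in Set.Icc (0:ℝ) b, g t ∧
      ∀ t ∈ Set.Icc (0:ℝ) a, (γ t - ind t) * (g t - g b) ≤ 0 := by
    intro γ hγm hγ01 hγb
    have hindm : Measurable ind := by
      exact (measurable_const.indicator measurableSet_Icc)
    have hγae : AEStronglyMeasurable γ (volume.restrict (Set.Icc (0:ℝ) a)) :=
      hγm.aestronglyMeasurable
    have hbd : ∀ᵐ t ∂(volume.restrict (Set.Icc (0:ℝ) a)), ‖γ t - ind t‖ ≤ 1 := by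
      rw [ae_restrict_iff' measurableSet_Icc]
      refine Filter.Eventually.of_forall fun t ht => ?_
      obtain ⟨h0, h1⟩ := hγ01 t ht
      rw [Real.norm_eq_abs, abs_le]
      by_cases hmem : t ∈ Set.Icc (0:ℝ) b
      · simp only [hind_def, Set.indicator_of_mem hmem]
        constructor <;> linarith
      · simp only [hind_def, Set.indicator_of_notMem hmem]
        constructor <;> linarith
    have hgb_int : IntegrableOn (fun t => g t - g b) (Set.Icc (0:ℝ) a) := by
      exact hgi.sub (integrableOn_const isCompact_Icc.measure_lt_top.ne)
    have hφint : IntegrableOn (fun t => (γ t - ind t) * (g t - g b)) (Set.Icc 0 a) :=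
      hgb_int.bdd_mul (c := 1) ((hγm.sub hindm).aestronglyMeasurable) hbd
    refine ⟨hφint, ?_, ?_⟩
    · -- the identity
      have hind_int : IntegrableOn ind (Set.Icc (0:ℝ) a) := by
        have : IntegrableOn (fun _ => (1:ℝ)) (Set.Icc (0:ℝ) b) :=
          integrableOn_const isCompact_Icc.measure_lt_top.ne
        exact (this.integrable_indicator measurableSet_Icc).integrableOn
      have hγ_int : IntegrableOn γ (Set.Icc (0:ℝ) a) := by
        refine Measure.integrableOn_of_bounded (M := 1) isCompact_Icc.measure_lt_top.ne
          hγm.aestronglyMeasurable ?_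
        rw [ae_restrict_iff' measurableSet_Icc]
        refine Filter.Eventually.of_forall fun t ht => ?_
        obtain ⟨h0, h1⟩ := hγ01 t ht
        rw [Real.norm_eq_abs, abs_le]; constructor <;> linarith
      have hdiff_int : IntegrableOn (fun t => γ t - ind t) (Set.Icc (0:ℝ) a) :=
        hγ_int.sub hind_int
      have hγg_int : IntegrableOn (fun t => γ t * g t) (Set.Icc (0:ℝ) a) := by
        refine hgi.bdd_mul (c := 1) hγae ?_
        rw [ae_restrict_iff' measurableSet_Icc]
        refine Filter.Eventually.of_forall fun t ht => ?_
        obtain ⟨h0, h1⟩ := hγ01 t ht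
        rw [Real.norm_eq_abs, abs_le]; constructor <;> linarith
      have hindg_int : IntegrableOn (fun t => ind t * g t) (Set.Icc (0:ℝ) a) := by
        have heq : (fun t => ind t * g t) = (Set.Icc (0:ℝ) b).indicator g := by
          funext t
          by_cases hmem : t ∈ Set.Icc (0:ℝ) b
          · simp [hind_def, Set.indicator_of_mem hmem]
          · simp [hind_def, Set.indicator_of_notMem hmem]
        rw [heq]
        exact ((hgi.mono_set hsub).integrable_indicator measurableSet_Icc).integrableOn
      have hexp : ∀ t, (γ t - ind t) * (g t - g b)
          = (γ t * g t - ind t * g t) - g b * (γ t - ind t) := by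
        intro t; ring
      have hind_int_val : ∫ t in Set.Icc (0:ℝ) a, ind t = b := by
        rw [hind_def, integral_indicator_const (1:ℝ) measurableSet_Icc]
        rw [measureReal_restrict_apply measurableSet_Icc,
          Set.inter_eq_left.2 hsub, Real.volume_real_Icc]
        simp [ENNReal.toReal_ofReal hb0.le, hb0.le]
      have hindg_val : ∫ t in Set.Icc (0:ℝ) a, ind t * g t = ∫ t in Set.Icc (0:ℝ) b, g t := by
        have heq : (fun t => ind t * g t) = (Set.Icc (0:ℝ) b).indicator g := by
          funext t
          by_cases hmem : t ∈ Set.Icc (0:ℝ) b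
          · simp [hind_def, Set.indicator_of_mem hmem]
          · simp [hind_def, Set.indicator_of_notMem hmem]
        rw [heq, integral_indicator measurableSet_Icc,
          Measure.restrict_restrict measurableSet_Icc, Set.inter_eq_left.2 hsub]
      calc ∫ t in Set.Icc (0:ℝ) a, (γ t - ind t) * (g t - g b)
          = ∫ t in Set.Icc (0:ℝ) a,
              ((γ t * g t - ind t * g t) - g b * (γ t - ind t)) := by
            exact setIntegral_congr_ae measurableSet_Icc
              (Filter.Eventually.of_forall fun t _ => hexp t)
        _ = (∫ t in Set.Icc (0:ℝ) a, (γ t * g t - ind t * g t))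
              - ∫ t in Set.Icc (0:ℝ) a, g b * (γ t - ind t) := by
            exact integral_sub (hγg_int.sub hindg_int) (hdiff_int.const_mul _)
        _ = ((∫ t in Set.Icc (0:ℝ) a, γ t * g t) - ∫ t in Set.Icc (0:ℝ) a, ind t * g t)
              - g b * ∫ t in Set.Icc (0:ℝ) a, (γ t - ind t) := by
            rw [integral_sub hγg_int hindg_int, integral_const_mul]
        _ = (∫ t in Set.Icc (0:ℝ) a, γ t * g t) - ∫ t in Set.Icc (0:ℝ) b, g t := by
            rw [hindg_val, integral_sub hγ_int hind_int, hγb, hind_int_val]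
            ring
    · -- pointwise nonpositivity
      intro t ht
      obtain ⟨h0, h1⟩ := hγ01 t ht
      by_cases hmem : t ∈ Set.Icc (0:ℝ) b
      · have hgb : g b ≤ g t := hg ht (hsub ⟨hb0.le, le_rfl⟩) hmem.2
        simp only [hind_def, Set.indicator_of_mem hmem]
        exact mul_nonpos_of_nonpos_of_nonneg (by linarith) (by linarith)
      · have hbt : b < t := by
          simp only [Set.mem_Icc, not_and, not_le] at hmem
          exact hmem ht.1
        have hgb : g t ≤ g b := hg (hsub ⟨hb0.le, le_rfl⟩) ht hbt.le
        simp only [hind_def, Set.indicator_of_notMem hmem]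
        rw [sub_zero]
        exact mul_nonpos_of_nonneg_of_nonpos h0 (by linarith)
  constructor
  · -- Part 1
    intro γ hγm hγ01 hγb
    obtain ⟨hφint, hid, hnp⟩ := key γ hγm hγ01 hγb
    have := setIntegral_nonpos (μ := volume) measurableSet_Icc hnp
    rw [hid] at this
    linarith
  · -- Part 2
    intro γ hγm hγ01 hγb heq
    obtain ⟨hφint, hid, hnp⟩ := key γ hγm hγ01 hγb
    have hz : ∫ t in Set.Icc (0:ℝ) a, (γ t - ind t) * (g t - g b) = 0 := by
      rw [hid, heq]; ring
    have hφ0 : ∀ᵐ t, t ∈ Set.Icc (0:ℝ) a → (γ t - ind t) * (g t - g b) = 0 := by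
      have := aux_zero (f := fun t => -((γ t - ind t) * (g t - g b)))
        measurableSet_Icc hφint.neg
        (fun t ht => by linarith [hnp t ht])
        (by rw [integral_neg, hz, neg_zero])
      filter_upwards [this] with t ht hmem
      have := ht hmem; linarith
    have hγ_int : IntegrableOn γ (Set.Icc (0:ℝ) a) := by
      refine Measure.integrableOn_of_bounded (M := 1) isCompact_Icc.measure_lt_top.ne
        hγm.aestronglyMeasurable ?_
      rw [ae_restrict_iff' measurableSet_Icc]
      refine Filter.Eventually.of_forall fun t ht => ?_
      obtain ⟨h0, h1⟩ := hγ01 t ht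
      rw [Real.norm_eq_abs, abs_le]; constructor <;> linarith
    have hγ_int_b : IntegrableOn γ (Set.Icc (0:ℝ) b) := hγ_int.mono_set hsub
    have hγ_int_Ioc : IntegrableOn γ (Set.Ioc b a) :=
      hγ_int.mono_set (Set.Ioc_subset_Icc_self.trans (Set.Icc_subset_Icc hb0.le le_rfl))
    have hsplit : ∫ t in Set.Icc (0:ℝ) a, γ t
        = (∫ t in Set.Icc (0:ℝ) b, γ t) + ∫ t in Set.Ioc b a, γ t := by
      rw [← setIntegral_union ((Set.Iic_disjoint_Ioc le_rfl).mono Set.Icc_subset_Iic_self le_rfl)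
        measurableSet_Ioc hγ_int_b hγ_int_Ioc,
        Set.Icc_union_Ioc_eq_Icc hb0.le hba.le]
    obtain ⟨F1, F2⟩ : (∀ᵐ t, t ∈ Set.Ico 0 b → γ t = 1) ∧
        (∀ᵐ t, t ∈ Set.Ioc b a → γ t = 0) := by
      rcases hdec with hR | hL
      · -- strictly decreasing to the right: first γ = 0 on (b,a]
        have hglt := strictRight_lt a b ⟨hb0, hba⟩ hg hR
        have F2 : ∀ᵐ t, t ∈ Set.Ioc b a → γ t = 0 := by
          filter_upwards [hφ0] with t ht hmem
          have htIcc : t ∈ Set.Icc (0:ℝ) a := ⟨by linarith [hmem.1], hmem.2⟩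
          have hnmem : t ∉ Set.Icc (0:ℝ) b := fun h => absurd h.2 (not_le.2 hmem.1)
          have h0 := ht htIcc
          simp only [hind_def, Set.indicator_of_notMem hnmem, sub_zero] at h0
          rcases mul_eq_zero.1 h0 with h | h
          · exact h
          · exact absurd h (sub_ne_zero.2 (ne_of_lt (hglt t hmem)))
        have hI2 : ∫ t in Set.Ioc b a, γ t = 0 := by
          rw [setIntegral_congr_ae measurableSet_Ioc (F2.mono fun t ht hm => ht hm)]
          exact integral_zero _ _
        have hIb : ∫ t in Set.Icc (0:ℝ) b, γ t = b := by
          rw [hγb, hI2] at hsplit; linarith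
        -- now 1 - γ ≥ 0 on [0,b] with zero integral
        have hone : ∫ t in Set.Icc (0:ℝ) b, (1 - γ t) = 0 := by
          rw [integral_sub (integrableOn_const (C := (1:ℝ)) isCompact_Icc.measure_lt_top.ne)
            hγ_int_b, hIb]
          simp [Real.volume_Icc, ENNReal.toReal_ofReal hb0.le, hb0.le]
        have F1' := aux_zero (f := fun t => 1 - γ t) measurableSet_Icc
          ((integrableOn_const (C := (1:ℝ)) isCompact_Icc.measure_lt_top.ne).sub hγ_int_b)
          (fun t ht => by linarith [(hγ01 t (hsub ht)).2]) hone
        refine ⟨?_, F2⟩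
        filter_upwards [F1'] with t ht hmem
        have := ht ⟨hmem.1, hmem.2.le⟩; linarith
      · -- strictly decreasing from the left: first γ = 1 on [0,b)
        have hggt := strictLeft_gt a b ⟨hb0, hba⟩ hg hL
        have F1 : ∀ᵐ t, t ∈ Set.Ico 0 b → γ t = 1 := by
          filter_upwards [hφ0] with t ht hmem
          have htIcc : t ∈ Set.Icc (0:ℝ) a := ⟨hmem.1, by linarith [hmem.2]⟩
          have hmem' : t ∈ Set.Icc (0:ℝ) b := ⟨hmem.1, hmem.2.le⟩
          have h0 := ht htIcc
          simp only [hind_def, Set.indicator_of_mem hmem'] at h0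
          rcases mul_eq_zero.1 h0 with h | h
          · linarith [sub_eq_zero.1 h]
          · exact absurd h (sub_ne_zero.2 (ne_of_gt (hggt t hmem)))
        have hIb : ∫ t in Set.Icc (0:ℝ) b, γ t = b := by
          rw [integral_Icc_eq_integral_Ico,
            setIntegral_congr_ae measurableSet_Ico (F1.mono fun t ht hm => ht hm)]
          simp [Real.volume_Ico, ENNReal.toReal_ofReal hb0.le, hb0.le]
        have hI2 : ∫ t in Set.Ioc b a, γ t = 0 := by
          rw [hγb, hIb] at hsplit; linarith
        have F2 := aux_zero measurableSet_Ioc hγ_int_Ioc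
          (fun t ht => (hγ01 t ⟨by linarith [ht.1], ht.2⟩).1) hI2
        exact ⟨F1, F2⟩
    -- combine
    rw [ae_restrict_iff' measurableSet_Icc]
    have hne : ∀ᵐ t : ℝ, t ≠ b := by
      have : volume ({b} : Set ℝ) = 0 := Real.volume_singleton
      rw [← compl_mem_ae_iff] at this
      filter_upwards [this] with t ht
      simpa using ht
    filter_upwards [F1, F2, hne] with t h1 h2 hne' hmem
    by_cases hle : t ≤ b
    · have htb : t < b := lt_of_le_of_ne hle hne'
      have : t ∈ Set.Icc (0:ℝ) b := ⟨hmem.1, hle⟩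
      rw [hind_def] at *
      rw [Set.indicator_of_mem this]
      exact h1 ⟨hmem.1, htb⟩
    · push_neg at hle
      have hnmem : t ∉ Set.Icc (0:ℝ) b := fun h => absurd h.2 (not_le.2 hle)
      rw [hind_def] at *
      rw [Set.indicator_of_notMem hnmem]
      exact h2 ⟨hle, hmem.2⟩
end

section
/- Let f : [0,a] → ℝ be measurable, nonnegative, with bounded range, and b ≤ a. For every measurable β : [0,a] → [0,1] with ∫₀^a β(t) dt ≤ b, one has ∫₀^a β(t) f(t) dt ≤ ∫₀^b f*(t) dt, where f* is the asymmetric decreasing rearrangement of f. -/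
open MeasureTheory Set
open scoped ENNReal

theorem stmt15 (a : ℝ) (ha : 0 < a) (f : ℝ → ℝ) (hmf : Measurable f)
    (hnn : ∀ x ∈ Set.Icc (0:ℝ) a, 0 ≤ f x)
    (hbd : ∃ M : ℝ, ∀ x ∈ Set.Icc (0:ℝ) a, f x ≤ M) (b : ℝ) (hb0 : 0 ≤ b) (hba : b ≤ a)
    (β : ℝ → ℝ) (hmβ : Measurable β) (hβ : ∀ t ∈ Set.Icc (0:ℝ) a, β t ∈ Set.Icc (0:ℝ) 1)
    (hint : ∫ t in Set.Icc (0:ℝ) a, β t ≤ b) :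
    ∫ t in Set.Icc (0:ℝ) a, β t * f t ≤ ∫ t in Set.Icc (0:ℝ) b, rearr a f t := by
  classical
  obtain ⟨M, hM⟩ := hbd
  set ν : ℝ → ENNReal := fun t => volume {y ∈ Set.Icc (0:ℝ) a | t < f y} with hνdef
  -- measurability of ν
  have hνmeas : Measurable ν := by
    have hs : MeasurableSet {p : ℝ × ℝ | p.2 ∈ Set.Icc (0:ℝ) a ∧ p.1 < f p.2} := by
      exact (measurable_snd measurableSet_Icc).inter
        (measurableSet_lt measurable_fst (hmf.comp measurable_snd))
    exact measurable_measure_prodMk_left hs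
  have hνle : ∀ t, ν t ≤ ENNReal.ofReal a := by
    intro t
    calc ν t ≤ volume (Set.Icc (0:ℝ) a) := measure_mono (fun y hy => hy.1)
      _ = ENNReal.ofReal a := by simp [Real.volume_Icc]
  have hνfin : ∀ t, ν t ≠ ∞ := fun t => ne_top_of_le_ne_top ENNReal.ofReal_ne_top (hνle t)
  have hνzero : ∀ t, M ≤ t → ν t = 0 := by
    intro t ht
    have hempty : {y ∈ Set.Icc (0:ℝ) a | t < f y} = ∅ := by
      ext y
      simp only [Set.mem_setOf_eq, Set.mem_empty_iff_false, iff_false, not_and, not_lt]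
      intro hy; exact (hM y hy).trans ht
    show volume {y ∈ Set.Icc (0:ℝ) a | t < f y} = 0
    rw [hempty]; exact measure_empty
  -- β integrable on [0,a]
  have hβint : IntegrableOn β (Set.Icc (0:ℝ) a) := by
    apply Measure.integrableOn_of_bounded (M := 1)
      (by simp [Real.volume_Icc] : volume (Set.Icc (0:ℝ) a) ≠ ∞) hmβ.aestronglyMeasurable
    filter_upwards [ae_restrict_mem measurableSet_Icc] with x hx
    rw [Real.norm_eq_abs, abs_of_nonneg (hβ x hx).1]; exact (hβ x hx).2
  have hβof : ∫⁻ y in Set.Icc (0:ℝ) a, ENNReal.ofReal (β y) ≤ ENNReal.ofReal b := by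
    rw [← ofReal_integral_eq_lintegral_ofReal hβint ?_]
    · exact ENNReal.ofReal_le_ofReal hint
    · filter_upwards [ae_restrict_mem measurableSet_Icc] with x hx using (hβ x hx).1
  -- the key quantity
  set K : ENNReal := ∫⁻ t in Set.Ioi (0:ℝ), min (ENNReal.ofReal b) (ν t) with hKdef
  -- the weighted layer function
  set G : ℝ → ℝ → ENNReal := fun y t => if t < f y then ENNReal.ofReal (β y) else 0 with hGdef
  have hGmeas : Measurable (Function.uncurry G) := by
    apply Measurable.ite (measurableSet_lt measurable_snd (hmf.comp measurable_fst))
    · exact (hmβ.comp measurable_fst).ennreal_ofReal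
    · exact measurable_const
  have hL1 : ∫⁻ y in Set.Icc (0:ℝ) a, ENNReal.ofReal (β y * f y)
      = ∫⁻ y in Set.Icc (0:ℝ) a, ∫⁻ t in Set.Ioi (0:ℝ), G y t := by
    refine setLIntegral_congr_fun measurableSet_Icc (fun y hy => ?_)
    have h1 : ∫⁻ t in Set.Ioi (0:ℝ), G y t
        = ENNReal.ofReal (β y) * volume (Set.Iio (f y) ∩ Set.Ioi 0) := by
      have hpt : ∀ t, G y t
          = Set.indicator (Set.Iio (f y)) (fun _ => ENNReal.ofReal (β y)) t := by
        intro t; simp [hGdef, Set.indicator, Set.mem_Iio]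
      simp_rw [hpt]
      rw [lintegral_indicator measurableSet_Iio, Measure.restrict_restrict measurableSet_Iio,
        setLIntegral_const]
    rw [h1, Set.Iio_inter_Ioi, Real.volume_Ioo, sub_zero, ← ENNReal.ofReal_mul (hβ y hy).1]
  have hswap1 : ∫⁻ y in Set.Icc (0:ℝ) a, ∫⁻ t in Set.Ioi (0:ℝ), G y t
      = ∫⁻ t in Set.Ioi (0:ℝ), ∫⁻ y in Set.Icc (0:ℝ) a, G y t :=
    lintegral_lintegral_swap hGmeas.aemeasurable
  have hI : ∀ t : ℝ, (∫⁻ y in Set.Icc (0:ℝ) a, G y t) ≤ min (ENNReal.ofReal b) (ν t) := by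
    intro t
    refine le_min ?_ ?_
    · refine le_trans (lintegral_mono fun y => ?_) hβof
      by_cases h : t < f y <;> simp [hGdef, h]
    · have h1 : (∫⁻ y in Set.Icc (0:ℝ) a, G y t)
          ≤ ∫⁻ y in Set.Icc (0:ℝ) a,
              Set.indicator {y : ℝ | t < f y} (fun _ => (1:ENNReal)) y := by
        refine lintegral_mono_ae ?_
        filter_upwards [ae_restrict_mem measurableSet_Icc] with y hy
        by_cases h : t < f y
        · simp only [hGdef, if_pos h, Set.indicator_of_mem (show y ∈ {y : ℝ | t < f y} from h)]
          exact ENNReal.ofReal_le_one.2 (hβ y hy).2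
        · simp [hGdef, h, Set.indicator_of_notMem (show y ∉ {y : ℝ | t < f y} from h)]
      refine h1.trans (le_of_eq ?_)
      have hsm : MeasurableSet {y : ℝ | t < f y} := measurableSet_lt measurable_const hmf
      rw [lintegral_indicator hsm, Measure.restrict_restrict hsm, setLIntegral_one]
      congr 1
      ext y
      simp only [Set.mem_inter_iff, Set.mem_setOf_eq]
      tauto
  have hLK : ∫⁻ y in Set.Icc (0:ℝ) a, ENNReal.ofReal (β y * f y) ≤ K := by
    rw [hL1, hswap1]
    exact lintegral_mono fun t => hI t
  -- K is finite
  have hKfin : K ≠ ∞ := by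
    have hle : K ≤ ∫⁻ t in Set.Ioi (0:ℝ),
        Set.indicator (Set.Ioc (0:ℝ) (max M 0)) (fun _ => ENNReal.ofReal b) t := by
      refine setLIntegral_mono' measurableSet_Ioi fun t ht => ?_
      by_cases htM : t ≤ max M 0
      · rw [Set.indicator_of_mem (Set.mem_Ioc.2 ⟨ht, htM⟩)]
        exact min_le_left _ _
      · push_neg at htM
        have hz : ν t = 0 := hνzero t ((le_max_left M 0).trans htM.le)
        rw [hz, min_eq_right zero_le,
          Set.indicator_of_notMem (fun hc => absurd hc.2 (not_le.2 htM))]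
    have hfin : (∫⁻ t in Set.Ioi (0:ℝ),
        Set.indicator (Set.Ioc (0:ℝ) (max M 0)) (fun _ => ENNReal.ofReal b) t) ≠ ∞ := by
      rw [lintegral_indicator measurableSet_Ioc, Measure.restrict_restrict measurableSet_Ioc,
        setLIntegral_const]
      refine ENNReal.mul_ne_top ENNReal.ofReal_ne_top (ne_top_of_le_ne_top ?_
        (measure_mono Set.inter_subset_left))
      simp [Real.volume_Ioc]
    exact ne_top_of_le_ne_top hfin hle
  -- LHS as a lintegral
  have hLHS : ∫ t in Set.Icc (0:ℝ) a, β t * f t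
      = (∫⁻ y in Set.Icc (0:ℝ) a, ENNReal.ofReal (β y * f y)).toReal := by
    rw [integral_eq_lintegral_of_nonneg_ae (f := fun t => β t * f t) ?_ (hmβ.mul hmf).aestronglyMeasurable]
    filter_upwards [ae_restrict_mem measurableSet_Icc] with y hy
    exact mul_nonneg (hβ y hy).1 (hnn y hy)
  -- Now the RHS
  have hνRmeas : Measurable fun t => (ν t).toReal := hνmeas.ennreal_toReal
  have hAmeas : ∀ x : ℝ, MeasurableSet {t : ℝ | x ≤ (ν t).toReal} := fun x =>
    measurableSet_le measurable_const hνRmeas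
  set W : ℝ → ENNReal := fun x => volume ({t : ℝ | x ≤ (ν t).toReal} ∩ Set.Ioi 0) with hWdef
  have hWmeas : Measurable W := by
    have hs : MeasurableSet {p : ℝ × ℝ | p.1 ≤ (ν p.2).toReal ∧ p.2 ∈ Set.Ioi (0:ℝ)} :=
      (measurableSet_le measurable_fst (hνRmeas.comp measurable_snd)).inter
        (measurable_snd measurableSet_Ioi)
    exact measurable_measure_prodMk_left hs
  have hWfin : ∀ x : ℝ, 0 < x → W x ≤ ENNReal.ofReal (max M 0) := by
    intro x hx
    have hsub : {t : ℝ | x ≤ (ν t).toReal} ∩ Set.Ioi 0 ⊆ Set.Ioc 0 (max M 0) := by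
      rintro t ⟨ht1, ht2⟩
      refine ⟨ht2, ?_⟩
      by_contra h
      push_neg at h
      have hz : ν t = 0 := hνzero t ((le_max_left M 0).trans h.le)
      rw [Set.mem_setOf_eq, hz] at ht1
      simp at ht1
      linarith
    calc W x ≤ volume (Set.Ioc (0:ℝ) (max M 0)) := measure_mono hsub
      _ = ENNReal.ofReal (max M 0) := by simp [Real.volume_Ioc]
  have hrearr : ∀ x : ℝ, 0 < x → rearr a f x = (W x).toReal := by
    intro x hx
    have hpt : ∀ t : ℝ, Set.indicator (Set.Icc (0:ℝ) ((ν t).toReal)) (fun _ => (1:ℝ)) x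
        = Set.indicator {t' : ℝ | x ≤ (ν t').toReal} (fun _ => (1:ℝ)) t := by
      intro t
      by_cases h : x ≤ (ν t).toReal
      · rw [Set.indicator_of_mem (Set.mem_Icc.2 ⟨hx.le, h⟩),
          Set.indicator_of_mem (show t ∈ {t' : ℝ | x ≤ (ν t').toReal} from h)]
      · rw [Set.indicator_of_notMem (fun hc => h (Set.mem_Icc.1 hc).2),
          Set.indicator_of_notMem (show t ∉ {t' : ℝ | x ≤ (ν t').toReal} from h)]
    unfold rearr
    simp only [show ∀ t : ℝ, volume {y ∈ Set.Icc (0:ℝ) a | t < f y} = ν t from fun t => rfl]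
    simp_rw [hpt]
    rw [integral_indicator (hAmeas x), setIntegral_const, measureReal_restrict_apply (hAmeas x)]
    simp [hWdef, measureReal_def]
  have h0' : ∀ᵐ x ∂(volume.restrict (Set.Icc (0:ℝ) b)), x ≠ 0 := by
    refine ae_restrict_of_ae ?_
    have := measure_eq_zero_iff_ae_notMem.mp (measure_singleton (0:ℝ) (μ := volume))
    filter_upwards [this] with x hx
    simpa using hx
  have hRHS1 : ∫ x in Set.Icc (0:ℝ) b, rearr a f x = ∫ x in Set.Icc (0:ℝ) b, (W x).toReal := by
    refine integral_congr_ae ?_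
    filter_upwards [h0', ae_restrict_mem measurableSet_Icc] with x hx0 hx
    exact hrearr x (lt_of_le_of_ne hx.1 (Ne.symm hx0))
  have hRHS2 : ∫ x in Set.Icc (0:ℝ) b, (W x).toReal = (∫⁻ x in Set.Icc (0:ℝ) b, W x).toReal := by
    refine integral_toReal hWmeas.aemeasurable ?_
    filter_upwards [h0', ae_restrict_mem measurableSet_Icc] with x hx0 hx
    exact lt_of_le_of_lt (hWfin x (lt_of_le_of_ne hx.1 (Ne.symm hx0))) ENNReal.ofReal_lt_top
  set H : ℝ → ℝ → ENNReal := fun x t => if x ≤ (ν t).toReal then 1 else 0 with hHdef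
  have hW2 : ∀ x : ℝ, W x = ∫⁻ t in Set.Ioi (0:ℝ), H x t := by
    intro x
    have hpt : ∀ t, H x t = Set.indicator {t' : ℝ | x ≤ (ν t').toReal} (fun _ => (1:ENNReal)) t := by
      intro t; simp [hHdef, Set.indicator]
    simp_rw [hpt]
    rw [lintegral_indicator (hAmeas x), Measure.restrict_restrict (hAmeas x), setLIntegral_one]
  have hHmeas : Measurable (Function.uncurry H) :=
    Measurable.ite (measurableSet_le measurable_fst (hνRmeas.comp measurable_snd))
      measurable_const measurable_const
  have hswap2 : ∫⁻ x in Set.Icc (0:ℝ) b, W x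
      = ∫⁻ t in Set.Ioi (0:ℝ), ∫⁻ x in Set.Icc (0:ℝ) b, H x t := by
    simp_rw [hW2]
    exact lintegral_lintegral_swap hHmeas.aemeasurable
  have hinner : ∀ t : ℝ, (∫⁻ x in Set.Icc (0:ℝ) b, H x t) = min (ENNReal.ofReal b) (ν t) := by
    intro t
    have hpt : ∀ x, H x t = Set.indicator (Set.Iic ((ν t).toReal)) (fun _ => (1:ENNReal)) x := by
      intro x; simp [hHdef, Set.indicator]
    simp_rw [hpt]
    rw [lintegral_indicator measurableSet_Iic, Measure.restrict_restrict measurableSet_Iic,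
      setLIntegral_one]
    have hseteq : Set.Iic ((ν t).toReal) ∩ Set.Icc 0 b = Set.Icc 0 (min ((ν t).toReal) b) := by
      ext x
      simp only [Set.mem_inter_iff, Set.mem_Iic, Set.mem_Icc, le_min_iff]
      tauto
    rw [hseteq, Real.volume_Icc, sub_zero]
    rcases le_total ((ν t).toReal) b with h | h
    · rw [min_eq_left h, ENNReal.ofReal_toReal (hνfin t),
        min_eq_right ((ENNReal.le_ofReal_iff_toReal_le (hνfin t) hb0).2 h)]
    · rw [min_eq_right h, min_eq_left (ENNReal.ofReal_le_of_le_toReal h)]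
  have hRHS : ∫ x in Set.Icc (0:ℝ) b, rearr a f x = K.toReal := by
    rw [hRHS1, hRHS2, hswap2]
    congr 1
    exact lintegral_congr fun t => hinner t
  rw [hLHS, hRHS]
  exact ENNReal.toReal_mono hKfin hLK
end
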